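/- arXiv:2403.19917 — 8 statements merged into one kernel-verified Lean document; each statement's English description precedes it below -/
import Mathlib

section
/- For any two cumulative distribution functions F and G on the real line, the square of the Lévy distance between F and G is bounded above by the Wasserstein-1 distance between them, i.e., L(F,G)^2 ≤ ∫_ℝ |F(x) − G(x)| dx. -/
open MeasureTheory Filter Set

/-- The square of the Lévy distance between two CDFs `F` and `G` is bounded above by
their Wasserstein-1 distance `∫ |F - G|`. -/
theorem levy_sq_le_wasserstein
    (F G : ℝ → ℝ)
    (hFmono : Monotone F) (hGmono : Monotone G)
    (hFrc : ∀ x, ContinuousWithinAt F (Set.Ici x) x)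
    (hGrc : ∀ x, ContinuousWithinAt G (Set.Ici x) x)
    (hF01 : ∀ x, F x ∈ Set.Icc (0:ℝ) 1)
    (hG01 : ∀ x, G x ∈ Set.Icc (0:ℝ) 1)
    (hFbot : Tendsto F atBot (nhds 0)) (hFtop : Tendsto F atTop (nhds 1))
    (hGbot : Tendsto G atBot (nhds 0)) (hGtop : Tendsto G atTop (nhds 1)) :
    ENNReal.ofReal
        ((sInf {ε : ℝ | 0 < ε ∧ ∀ x, F (x - ε) - ε ≤ G x ∧ G x ≤ F (x + ε) + ε}) ^ 2)
      ≤ ∫⁻ x, ENNReal.ofReal |F x - G x| := by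
  set S : Set ℝ := {ε : ℝ | 0 < ε ∧ ∀ x, F (x - ε) - ε ≤ G x ∧ G x ≤ F (x + ε) + ε} with hSdef
  have hS1 : (1:ℝ) ∈ S := by
    refine ⟨one_pos, fun x => ⟨?_, ?_⟩⟩
    · nlinarith [(hF01 (x-1)).2, (hG01 x).1]
    · nlinarith [(hG01 x).2, (hF01 (x+1)).1]
  have hbdd : BddBelow S := ⟨0, fun ε hε => hε.1.le⟩
  set L := sInf S with hLdef
  have hL0 : 0 ≤ L := le_csInf ⟨1, hS1⟩ fun ε hε => hε.1.le
  by_contra hcon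
  push_neg at hcon
  set I := ∫⁻ x, ENNReal.ofReal |F x - G x| with hIdef
  have hIne : I ≠ ⊤ := (hcon.trans ENNReal.ofReal_lt_top).ne
  have hr : I.toReal < L^2 := (ENNReal.lt_ofReal_iff_toReal_lt hIne).mp hcon
  have hrnn : 0 ≤ I.toReal := ENNReal.toReal_nonneg
  set ε := Real.sqrt ((I.toReal + L^2)/2) with hεdef
  have hε2 : ε^2 = (I.toReal + L^2)/2 := Real.sq_sqrt (by nlinarith)
  have hε0 : 0 < ε := Real.sqrt_pos.mpr (by nlinarith)
  have hIε : I < ENNReal.ofReal (ε^2) :=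
    (ENNReal.lt_ofReal_iff_toReal_lt hIne).mpr (by rw [hε2]; linarith)
  have key : ∀ a : ℝ, (∀ y ∈ Icc a (a+ε), ε ≤ |F y - G y|) → ENNReal.ofReal (ε^2) ≤ I := by
    intro a h
    calc ENNReal.ofReal (ε^2)
        = ENNReal.ofReal ε * volume (Icc a (a+ε)) := by
          rw [Real.volume_Icc, show a + ε - a = ε by ring, ← ENNReal.ofReal_mul hε0.le, sq]
      _ = ∫⁻ y, (Icc a (a+ε)).indicator (fun _ => ENNReal.ofReal ε) y := by
          rw [lintegral_indicator measurableSet_Icc, setLIntegral_const]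
      _ ≤ ∫⁻ y, ENNReal.ofReal |F y - G y| := by
          refine lintegral_mono fun y => ?_
          by_cases hy : y ∈ Icc a (a+ε)
          · simpa [hy] using ENNReal.ofReal_le_ofReal (h y hy)
          · simp [hy]
  have hεS : ε ∈ S := by
    refine ⟨hε0, fun x => ⟨?_, ?_⟩⟩
    · by_contra hx
      push_neg at hx
      have hk : ENNReal.ofReal (ε^2) ≤ I := by
        refine key (x - ε) (fun y hy => ?_)
        have h1 : F (x - ε) ≤ F y := hFmono hy.1
        have h2 : G y ≤ G x := hGmono (by linarith [hy.2])
        calc ε ≤ F y - G y := by linarith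
          _ ≤ |F y - G y| := le_abs_self _
      exact absurd hk (not_le.mpr hIε)
    · by_contra hx
      push_neg at hx
      have hk : ENNReal.ofReal (ε^2) ≤ I := by
        refine key x (fun y hy => ?_)
        have h1 : F y ≤ F (x + ε) := hFmono hy.2
        have h2 : G x ≤ G y := hGmono hy.1
        calc ε ≤ G y - F y := by linarith
          _ ≤ |F y - G y| := by rw [abs_sub_comm]; exact le_abs_self _
      exact absurd hk (not_le.mpr hIε)
  have hLε : L ≤ ε := csInf_le hbdd hεS
  have : L^2 ≤ ε^2 := pow_le_pow_left₀ hL0 hLε 2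
  linarith
end

section
/- Let F : ℝ → [0,1] be a uniformly continuous CDF. Let (F̂_n) be a sequence of functions with sup_{x∈ℝ} |F̂_n(x) − F(x)| → 0. For each n, let s_1 < s_2 < ⋯ < s_{m_n} be an equally spaced grid with spacing δ_n → 0, with F(s_1) → 0 and F(s_{m_n}) → 1, and define F̂_n^c on the grid points as the isotonic (nondecreasing least-squares) projection of the values (F̂_n(s_2),…,F̂_n(s_{m_n−1})) truncated to [0,1], extended by piecewise constant right-continuous interpolation, with F̂_n^c = 0 left of s_2 and = 1 at and beyond s_{m_n}. Then F̂_n^c(x) → F(x) for every x ∈ ℝ. -/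
open MeasureTheory Filter Set

/-- Clamping to `[0,1]` does not increase distance to a point of `[0,1]`. -/
lemma clamp_dist_le (a b : ℝ) (h0 : 0 ≤ b) (h1 : b ≤ 1) :
    |min 1 (max 0 a) - b| ≤ |a - b| := by
  rcases le_total a 0 with ha | ha
  · rw [max_eq_left ha, min_eq_right zero_le_one, abs_of_nonpos (by linarith),
      abs_of_nonpos (by linarith)]
    linarith
  · rw [max_eq_right ha]
    rcases le_total 1 a with ha1 | ha1
    · rw [min_eq_left ha1, abs_of_nonneg (by linarith), abs_of_nonneg (by linarith)]
      linarith
    · rw [min_eq_right ha1]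

/-- The isotonic projection is a sup-norm contraction toward a monotone vector. -/
lemma iso_band (M : ℕ) (y g isov : ℕ → ℝ)
    (hg : ∀ k l, 2 ≤ k → k ≤ l → l ≤ M - 1 → g k ≤ g l)
    (hmono : ∀ k l, 2 ≤ k → k ≤ l → l ≤ M - 1 → isov k ≤ isov l)
    (hmin : ∀ c : ℕ → ℝ, (∀ k l, 2 ≤ k → k ≤ l → l ≤ M - 1 → c k ≤ c l) →
      (∑ k ∈ Finset.Icc 2 (M - 1), (isov k - y k) ^ 2) ≤
        ∑ k ∈ Finset.Icc 2 (M - 1), (c k - y k) ^ 2)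
    {ε : ℝ} (hy : ∀ k ∈ Finset.Icc 2 (M - 1), |y k - g k| ≤ ε) :
    ∀ k ∈ Finset.Icc 2 (M - 1), |isov k - g k| ≤ ε := by
  set c : ℕ → ℝ := fun k => min (g k + ε) (max (g k - ε) (isov k)) with hc
  have hcmono : ∀ k l, 2 ≤ k → k ≤ l → l ≤ M - 1 → c k ≤ c l := by
    intro k l hk hkl hl
    have hg' := hg k l hk hkl hl
    have hi := hmono k l hk hkl hl
    exact min_le_min (by linarith) (max_le_max (by linarith) hi)
  have hpt : ∀ k ∈ Finset.Icc 2 (M - 1), (c k - y k) ^ 2 ≤ (isov k - y k) ^ 2 := by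
    intro k hk
    have hyk := hy k hk
    rw [abs_le] at hyk
    obtain ⟨hy1, hy2⟩ := hyk
    rcases le_total (isov k) (g k - ε) with h | h
    · have h1 : max (g k - ε) (isov k) = g k - ε := max_eq_left h
      have hε : (0:ℝ) ≤ ε := by
        have := (abs_nonneg (y k - g k)).trans (hy k hk); exact this
      have h2 : c k = g k - ε := by
        rw [hc]; simp only; rw [h1]; exact min_eq_right (by linarith)
      rw [h2]; nlinarith
    · rcases le_total (g k + ε) (isov k) with h' | h'
      · have h1 : max (g k - ε) (isov k) = isov k := max_eq_right h
        have h2 : c k = g k + ε := by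
          rw [hc]; simp only; rw [h1]; exact min_eq_left h'
        rw [h2]; nlinarith
      · have h1 : max (g k - ε) (isov k) = isov k := max_eq_right h
        have h2 : c k = isov k := by
          rw [hc]; simp only; rw [h1]; exact min_eq_right h'
        rw [h2]
  have hsum := hmin c hcmono
  have heq : ∀ k ∈ Finset.Icc 2 (M - 1), (c k - y k) ^ 2 = (isov k - y k) ^ 2 := by
    intro k hk
    by_contra hne
    have hlt : (c k - y k) ^ 2 < (isov k - y k) ^ 2 := lt_of_le_of_ne (hpt k hk) hne
    have := Finset.sum_lt_sum hpt ⟨k, hk, hlt⟩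
    linarith
  intro k hk
  have hyk := hy k hk
  have hε : (0:ℝ) ≤ ε := (abs_nonneg (y k - g k)).trans hyk
  rw [abs_le] at hyk ⊢
  obtain ⟨hy1, hy2⟩ := hyk
  have hq := heq k hk
  constructor
  · by_contra h
    push_neg at h
    have hlt : isov k < g k - ε := by linarith
    have h2 : c k = g k - ε := by
      rw [hc]; simp only; rw [max_eq_left hlt.le]; exact min_eq_right (by linarith)
    rw [h2] at hq
    nlinarith
  · by_contra h
    push_neg at h
    have hlt : g k + ε < isov k := by linarith
    have h2 : c k = g k + ε := by
      rw [hc]; simp only; rw [max_eq_right (by linarith : g k - ε ≤ isov k)]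
      exact min_eq_left hlt.le
    rw [h2] at hq
    nlinarith

/-- Deterministic content of Lemma 1: if `F` is a uniformly continuous CDF, `F̂ₙ → F`
uniformly, and `F̂ₙᶜ` is the isotonic projection (on an equally spaced grid with spacing
`δₙ → 0`, endpoints `F (s n 1) → 0`, `F (s n (m n)) → 1`) of the truncation of `F̂ₙ` to
`[0,1]`, extended by piecewise-constant right-continuous interpolation (with value `0`
left of `s n 2` and `1` at and beyond `s n (m n)`), then `F̂ₙᶜ x → F x` for every `x`. -/
theorem isotonized_estimator_pointwise_consistency
    (F : ℝ → ℝ) (hFuc : UniformContinuous F) (hFmono : Monotone F)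
    (hF01 : ∀ x, F x ∈ Set.Icc (0:ℝ) 1)
    (hFbot : Tendsto F atBot (nhds 0)) (hFtop : Tendsto F atTop (nhds 1))
    (Fhat : ℕ → ℝ → ℝ)
    (hunif : ∀ ε > (0:ℝ), ∀ᶠ n in atTop, ∀ x, |Fhat n x - F x| < ε)
    (m : ℕ → ℕ) (hm : ∀ n, 3 ≤ m n)
    (s : ℕ → ℕ → ℝ) (δ : ℕ → ℝ) (hδpos : ∀ n, 0 < δ n)
    (hgrid : ∀ n k, 1 ≤ k → k < m n → s n (k + 1) = s n k + δ n)
    (hδ0 : Tendsto δ atTop (nhds 0))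
    (hL : Tendsto (fun n => F (s n 1)) atTop (nhds 0))
    (hU : Tendsto (fun n => F (s n (m n))) atTop (nhds 1))
    (iso : ℕ → ℕ → ℝ)
    (hisomono : ∀ n k l, 2 ≤ k → k ≤ l → l ≤ m n - 1 → iso n k ≤ iso n l)
    (hisomin : ∀ n (c : ℕ → ℝ), (∀ k l, 2 ≤ k → k ≤ l → l ≤ m n - 1 → c k ≤ c l) →
      (∑ k ∈ Finset.Icc 2 (m n - 1), (iso n k - min 1 (max 0 (Fhat n (s n k)))) ^ 2) ≤
        ∑ k ∈ Finset.Icc 2 (m n - 1), (c k - min 1 (max 0 (Fhat n (s n k)))) ^ 2)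
    (Fc : ℕ → ℝ → ℝ)
    (hFcleft : ∀ n x, x < s n 2 → Fc n x = 0)
    (hFcright : ∀ n x, s n (m n) ≤ x → Fc n x = 1)
    (hFcmid : ∀ n x k, 2 ≤ k → k < m n → s n k ≤ x → x < s n (k + 1) → Fc n x = iso n k) :
    ∀ x : ℝ, Tendsto (fun n => Fc n x) atTop (nhds (F x)) := by
  intro x
  rw [Metric.tendsto_atTop]
  intro ε hε
  set ε' : ℝ := ε / 4 with hε'def
  have hε' : 0 < ε' := by positivity
  obtain ⟨δ₀, hδ₀pos, hcont⟩ := Metric.uniformContinuous_iff.mp hFuc ε' hε'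
  have h1 : ∀ᶠ n in atTop, δ n < δ₀ := hδ0.eventually_lt_const hδ₀pos
  have h2 : ∀ᶠ n in atTop, F (s n 1) < ε' := hL.eventually_lt_const hε'
  have h3 : ∀ᶠ n in atTop, 1 - ε' < F (s n (m n)) :=
    hU.eventually_const_lt (by linarith)
  have h4 := hunif ε' hε'
  have hall := (h1.and (h2.and (h3.and h4))).exists_forall_of_atTop
  obtain ⟨N, hN⟩ := hall
  refine ⟨N, fun n hn => ?_⟩
  obtain ⟨hδn, hFs1, hFsm, hFhat⟩ := hN n hn
  rw [Real.dist_eq]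
  -- monotonicity of the grid
  have hsmono : ∀ k l, 1 ≤ k → k ≤ l → l ≤ m n → s n k ≤ s n l := by
    intro k l hk hkl hl
    induction l with
    | zero => omega
    | succ l ih =>
      rcases Nat.eq_or_lt_of_le hkl with h | h
      · rw [h]
      · have hkl' : k ≤ l := Nat.lt_succ_iff.mp h
        have h1l : 1 ≤ l := le_trans hk hkl'
        calc s n k ≤ s n l := ih hkl' (by omega)
          _ ≤ s n (l + 1) := by
              rw [hgrid n l h1l (by omega)]; linarith [hδpos n]
  -- the band for the isotonic projection
  have hband : ∀ k ∈ Finset.Icc 2 (m n - 1), |iso n k - F (s n k)| ≤ ε' := by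
    refine iso_band (m n) (fun k => min 1 (max 0 (Fhat n (s n k))))
      (fun k => F (s n k)) (iso n) ?_ (hisomono n) (hisomin n) ?_
    · intro k l hk hkl hl
      exact hFmono (hsmono k l (by omega) hkl (by omega))
    · intro k hk
      have := clamp_dist_le (Fhat n (s n k)) (F (s n k)) (hF01 _).1 (hF01 _).2
      exact this.trans (le_of_lt (hFhat _))
  have hm3 := hm n
  rcases lt_or_ge x (s n 2) with hxA | hxA
  · -- left of the grid
    rw [hFcleft n x hxA]
    have hFx0 : 0 ≤ F x := (hF01 x).1
    have h2le : F x ≤ F (s n 2) := hFmono hxA.le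
    have hs12 : s n 2 = s n 1 + δ n := hgrid n 1 le_rfl (by omega)
    have hd : dist (F (s n 2)) (F (s n 1)) < ε' := by
      apply hcont
      rw [Real.dist_eq, hs12, abs_of_pos] <;> [skip; linarith [hδpos n]]
      linarith [hδpos n]
    rw [Real.dist_eq, abs_lt] at hd
    rw [abs_of_nonpos (by linarith)]
    linarith
  rcases le_or_gt (s n (m n)) x with hxB | hxB
  · -- right of the grid
    rw [hFcright n x hxB]
    have hFx1 : F x ≤ 1 := (hF01 x).2
    have h2le : F (s n (m n)) ≤ F x := hFmono hxB
    rw [abs_of_nonneg (by linarith)]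
    linarith
  · -- interior: find the grid cell containing x
    have hKne : ((Finset.Icc 2 (m n)).filter (fun k => s n k ≤ x)).Nonempty :=
      ⟨2, Finset.mem_filter.mpr ⟨Finset.mem_Icc.mpr ⟨le_rfl, by omega⟩, hxA⟩⟩
    obtain ⟨k, hkmem, hkmax⟩ :
        ∃ k ∈ (Finset.Icc 2 (m n)).filter (fun k => s n k ≤ x),
          ∀ j ∈ (Finset.Icc 2 (m n)).filter (fun k => s n k ≤ x), j ≤ k :=
      ⟨_, Finset.max'_mem _ hKne, fun j hj => Finset.le_max' _ j hj⟩
    obtain ⟨hk', hskx⟩ := Finset.mem_filter.mp hkmem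
    obtain ⟨hk2, hkm⟩ := Finset.mem_Icc.mp hk'
    have hkne : k ≠ m n := by
      intro h
      rw [h] at hskx
      exact absurd hskx (not_le.mpr hxB)
    have hklt : k < m n := lt_of_le_of_ne hkm hkne
    have hxk1 : x < s n (k + 1) := by
      by_contra h
      push_neg at h
      have hmem : k + 1 ∈ (Finset.Icc 2 (m n)).filter (fun k => s n k ≤ x) :=
        Finset.mem_filter.mpr ⟨Finset.mem_Icc.mpr ⟨by omega, by omega⟩, h⟩
      have := hkmax (k + 1) hmem
      omega
    rw [hFcmid n x k hk2 hklt hskx hxk1]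
    have hkIcc : k ∈ Finset.Icc 2 (m n - 1) := by
      rw [Finset.mem_Icc]; omega
    have hb := hband k hkIcc
    have hstep : s n (k + 1) = s n k + δ n := hgrid n k (by omega) hklt
    have hd : dist (F (s n k)) (F x) < ε' := by
      apply hcont
      rw [Real.dist_eq, abs_of_nonpos (by linarith)]
      linarith
    rw [Real.dist_eq] at hd
    calc |iso n k - F x| ≤ |iso n k - F (s n k)| + |F (s n k) - F x| :=
          abs_sub_le _ _ _
      _ < ε := by linarith
end

section
/- Isotonic regression is a sup-norm contraction: if v ∈ ℝ^k and w ∈ ℝ^k with w nondecreasing, and v* denotes the Euclidean projection of v onto the cone of nondecreasing vectors C^k = {c : c_1 ≤ ⋯ ≤ c_k}, then max_{1≤i≤k} |v*_i − w_i| ≤ max_{1≤i≤k} |v_i − w_i|. -/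
open Finset

/-- Isotonic regression is a sup-norm contraction: if `v*` is the Euclidean projection of
`v ∈ ℝ^{k+1}` onto the cone of nondecreasing vectors and `w` is any nondecreasing vector,
then `max_i |v*_i - w_i| ≤ max_i |v_i - w_i|`. -/
theorem isotonic_sup_norm_contraction
    (k : ℕ) (v w vstar : Fin (k + 1) → ℝ)
    (hw : Monotone w) (hvstar : Monotone vstar)
    (hmin : ∀ c : Fin (k + 1) → ℝ, Monotone c →
      (∑ i, (vstar i - v i) ^ 2) ≤ ∑ i, (c i - v i) ^ 2) :
    ∀ i, |vstar i - w i| ≤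
      Finset.univ.sup' Finset.univ_nonempty (fun j => |v j - w j|) := by
  intro i
  set M := Finset.univ.sup' Finset.univ_nonempty (fun j => |v j - w j|) with hM
  have hMle : ∀ j, |v j - w j| ≤ M := fun j => Finset.le_sup' (fun j => |v j - w j|) (Finset.mem_univ j)
  by_contra h
  push_neg at h
  rcases lt_abs.mp h with h1 | h2
  · -- vstar i is too big: clip above at w + M
    set c : Fin (k + 1) → ℝ := fun j => min (vstar j) (w j + M) with hc
    have hcmono : Monotone c := hvstar.min (hw.add_const M)
    have hle : ∀ j ∈ Finset.univ, (c j - v j) ^ 2 ≤ (vstar j - v j) ^ 2 := by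
      intro j _
      rcases le_or_gt (vstar j) (w j + M) with hj | hj
      · simp [hc, min_eq_left hj]
      · have hcj : c j = w j + M := by simp [hc, min_eq_right hj.le]
        have hv : v j - w j ≤ M := (abs_le.mp (hMle j)).2
        have h0 : 0 ≤ c j - v j := by rw [hcj]; linarith
        have h1 : c j - v j ≤ vstar j - v j := by rw [hcj]; linarith
        exact pow_le_pow_left₀ h0 h1 2
    have hstrict : (c i - v i) ^ 2 < (vstar i - v i) ^ 2 := by
      have hi : w i + M < vstar i := by linarith
      have hcj : c i = w i + M := by simp [hc, min_eq_right hi.le]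
      have hv : v i - w i ≤ M := (abs_le.mp (hMle i)).2
      have h0 : 0 ≤ c i - v i := by rw [hcj]; linarith
      have h1 : c i - v i < vstar i - v i := by rw [hcj]; linarith
      exact pow_lt_pow_left₀ h1 h0 two_ne_zero
    have hsum : (∑ j, (c j - v j) ^ 2) < ∑ j, (vstar j - v j) ^ 2 :=
      Finset.sum_lt_sum hle ⟨i, Finset.mem_univ i, hstrict⟩
    exact absurd (hmin c hcmono) (not_le.mpr hsum)
  · -- vstar i is too small: clip below at w - M
    set c : Fin (k + 1) → ℝ := fun j => max (vstar j) (w j - M) with hc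
    have hcmono : Monotone c := hvstar.max (fun a b hab => by simpa using sub_le_sub_right (hw hab) M)
    have hle : ∀ j ∈ Finset.univ, (c j - v j) ^ 2 ≤ (vstar j - v j) ^ 2 := by
      intro j _
      rcases le_or_gt (w j - M) (vstar j) with hj | hj
      · simp [hc, max_eq_left hj]
      · have hcj : c j = w j - M := by simp [hc, max_eq_right hj.le]
        have hv : -M ≤ v j - w j := (abs_le.mp (hMle j)).1
        have h0 : 0 ≤ v j - c j := by rw [hcj]; linarith
        have h1 : v j - c j ≤ v j - vstar j := by rw [hcj]; linarith
        have := pow_le_pow_left₀ h0 h1 2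
        calc (c j - v j) ^ 2 = (v j - c j) ^ 2 := by ring
          _ ≤ (v j - vstar j) ^ 2 := this
          _ = (vstar j - v j) ^ 2 := by ring
    have hstrict : (c i - v i) ^ 2 < (vstar i - v i) ^ 2 := by
      have hi : vstar i < w i - M := by linarith
      have hcj : c i = w i - M := by simp [hc, max_eq_right hi.le]
      have hv : -M ≤ v i - w i := (abs_le.mp (hMle i)).1
      have h0 : 0 ≤ v i - c i := by rw [hcj]; linarith
      have h1 : v i - c i < v i - vstar i := by rw [hcj]; linarith
      have := pow_lt_pow_left₀ h1 h0 two_ne_zero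
      calc (c i - v i) ^ 2 = (v i - c i) ^ 2 := by ring
        _ < (v i - vstar i) ^ 2 := this
        _ = (vstar i - v i) ^ 2 := by ring
    have hsum : (∑ j, (c j - v j) ^ 2) < ∑ j, (vstar j - v j) ^ 2 :=
      Finset.sum_lt_sum hle ⟨i, Finset.mem_univ i, hstrict⟩
    exact absurd (hmin c hcmono) (not_le.mpr hsum)
end

section
/- Marshall-type inequality for discrete isotonic regression of partial sums: let v ∈ ℝ^m, let v* be the isotonic (nondecreasing least-squares) projection of v, and let w ∈ ℝ^m be nondecreasing. Then max_{1≤k≤m} |∑_{j=1}^k v*_j − ∑_{j=1}^k w_j| ≤ max_{1≤k≤m} |∑_{j=1}^k v_j − ∑_{j=1}^k w_j|. -/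
open Finset

lemma key_perturb (m : ℕ) (v vstar : ℕ → ℝ)
    (hmin : ∀ c : ℕ → ℝ, (∀ i j, 1 ≤ i → i ≤ j → j ≤ m → c i ≤ c j) →
      (∑ j ∈ Finset.Icc 1 m, (vstar j - v j) ^ 2) ≤
        ∑ j ∈ Finset.Icc 1 m, (c j - v j) ^ 2)
    (e : ℕ → ℝ) (δ : ℝ) (hδ : 0 < δ)
    (hmono : ∀ t : ℝ, 0 < t → t ≤ δ → ∀ i j, 1 ≤ i → i ≤ j → j ≤ m →
      vstar i + t * e i ≤ vstar j + t * e j) :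
    0 ≤ ∑ j ∈ Finset.Icc 1 m, e j * (vstar j - v j) := by
  by_contra h
  push_neg at h
  set S := ∑ j ∈ Finset.Icc 1 m, e j * (vstar j - v j) with hS
  set E := ∑ j ∈ Finset.Icc 1 m, (e j)^2 with hE
  have hE0 : 0 ≤ E := Finset.sum_nonneg fun j _ => sq_nonneg _
  set t := min δ (-S/(E+1)) with ht
  have ht0 : 0 < t := lt_min hδ (div_pos (by linarith) (by linarith))
  have htδ : t ≤ δ := min_le_left _ _
  have htS : t * (E+1) ≤ -S := (le_div_iff₀ (by linarith)).mp (min_le_right _ _)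
  have hq := hmin (fun j => vstar j + t * e j) (hmono t ht0 htδ)
  have hexp : ∑ j ∈ Finset.Icc 1 m, ((vstar j + t * e j) - v j)^2
      = (∑ j ∈ Finset.Icc 1 m, (vstar j - v j)^2) + (2*t*S + t^2*E) := by
    rw [hS, hE, Finset.mul_sum, Finset.mul_sum, ← Finset.sum_add_distrib,
      ← Finset.sum_add_distrib]
    exact Finset.sum_congr rfl fun j _ => by ring
  simp only [hexp] at hq
  have h1 : 0 ≤ 2*t*S + t^2*E := by linarith
  nlinarith [mul_pos ht0 ht0, mul_pos ht0 (neg_pos.mpr h)]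
lemma ind_sum (m k : ℕ) (hk1 : 1 ≤ k) (x : ℕ → ℝ) :
    ∑ j ∈ Finset.Icc 1 m, (if k ≤ j then (1:ℝ) else 0) * x j
      = ∑ j ∈ Finset.Icc k m, x j := by
  classical
  have h1 : Finset.filter (fun j => k ≤ j) (Finset.Icc 1 m) = Finset.Icc k m := by
    ext j; simp [Finset.mem_Icc, Finset.mem_filter]; omega
  rw [← h1, Finset.sum_filter]
  exact Finset.sum_congr rfl fun j _ => by split <;> simp

section
variable (m : ℕ) (v vstar : ℕ → ℝ)
    (hvstar : ∀ i j, 1 ≤ i → i ≤ j → j ≤ m → vstar i ≤ vstar j)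
    (hmin : ∀ c : ℕ → ℝ, (∀ i j, 1 ≤ i → i ≤ j → j ≤ m → c i ≤ c j) →
      (∑ j ∈ Finset.Icc 1 m, (vstar j - v j) ^ 2) ≤
        ∑ j ∈ Finset.Icc 1 m, (c j - v j) ^ 2)

include hvstar hmin in
lemma S_nonneg : ∀ k, 1 ≤ k → 0 ≤ ∑ j ∈ Finset.Icc k m, (vstar j - v j) := by
  intro k hk1
  rw [← ind_sum m k hk1]
  apply key_perturb m v vstar hmin _ 1 one_pos
  intro t ht0 _ i j hi hij hjm
  have he : (if k ≤ i then (1:ℝ) else 0) ≤ (if k ≤ j then (1:ℝ) else 0) := by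
    split <;> split <;> (try norm_num) <;> omega
  have := hvstar i j hi hij hjm
  nlinarith

include hvstar hmin in
lemma S_total : ∑ j ∈ Finset.Icc 1 m, (vstar j - v j) = 0 := by
  have h1 := S_nonneg m v vstar hvstar hmin 1 le_rfl
  have h2 : 0 ≤ ∑ j ∈ Finset.Icc 1 m, (-1 : ℝ) * (vstar j - v j) := by
    apply key_perturb m v vstar hmin _ 1 one_pos
    intro t ht0 _ i j hi hij hjm
    have := hvstar i j hi hij hjm
    linarith
  simp only [neg_one_mul, Finset.sum_neg_distrib] at h2
  linarith

include hvstar hmin in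
lemma S_jump : ∀ k, 1 ≤ k → k < m → vstar k < vstar (k+1) →
    ∑ j ∈ Finset.Icc (k+1) m, (vstar j - v j) = 0 := by
  intro k hk1 hkm hlt
  have h1 := S_nonneg m v vstar hvstar hmin (k+1) (by omega)
  have h2 : 0 ≤ ∑ j ∈ Finset.Icc 1 m, ((if k+1 ≤ j then (-1:ℝ) else 0)) * (vstar j - v j) := by
    apply key_perturb m v vstar hmin _ (vstar (k+1) - vstar k) (by linarith)
    intro t ht0 htδ i j hi hij hjm
    by_cases hik : k+1 ≤ i
    · have hjk : k+1 ≤ j := by omega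
      simp only [if_pos hik, if_pos hjk]
      have := hvstar i j hi hij hjm
      linarith
    · by_cases hjk : k+1 ≤ j
      · simp only [if_neg hik, if_pos hjk]
        have h3 : vstar i ≤ vstar k := hvstar i k hi (by omega) (by omega)
        have h4 : vstar (k+1) ≤ vstar j := hvstar (k+1) j (by omega) hjk hjm
        linarith
      · simp only [if_neg hik, if_neg hjk]
        have := hvstar i j hi hij hjm
        linarith
  have h3 : ∑ j ∈ Finset.Icc 1 m, ((if k+1 ≤ j then (-1:ℝ) else 0)) * (vstar j - v j)
      = -∑ j ∈ Finset.Icc (k+1) m, (vstar j - v j) := by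
    rw [← ind_sum m (k+1) (by omega)]
    rw [← Finset.sum_neg_distrib]
    exact Finset.sum_congr rfl fun j _ => by split <;> ring
  rw [h3] at h2
  linarith
end

lemma split_sum (x : ℕ → ℝ) (a m : ℕ) (h : a ≤ m) :
    ∑ j ∈ Finset.Icc 1 a, x j + ∑ j ∈ Finset.Icc (a+1) m, x j
      = ∑ j ∈ Finset.Icc 1 m, x j := by
  rw [show (1:ℕ) = 0+1 from rfl, Finset.Icc_add_one_left_eq_Ioc, zero_add, Finset.Icc_add_one_left_eq_Ioc]
  exact Finset.sum_Ioc_consecutive x (Nat.zero_le a) h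

lemma const_of_step (f : ℕ → ℝ) (a k : ℕ)
    (hstep : ∀ j, a < j → j < k → f j = f (j+1)) :
    ∀ j, a < j → j ≤ k → f j = f k := by
  have key : ∀ n, ∀ j, a < j → j ≤ n → n ≤ k → f j = f n := by
    intro n
    induction n with
    | zero => intro j hj hjn _; interval_cases j; rfl
    | succ n ih =>
      intro j hj hjn hnk
      by_cases hjn' : j ≤ n
      · rw [ih j hj hjn' (by omega)]
        exact hstep n (by omega) (by omega)
      · have : j = n+1 := by omega
        rw [this]
  intro j hj hjk
  exact key k j hj hjk le_rfl

lemma sum_const_Icc (f : ℕ → ℝ) (a k : ℕ) (c : ℝ) (h : ∀ j, a+1 ≤ j → j ≤ k → f j = c) :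
    ∑ j ∈ Finset.Icc (a+1) k, f j = ((k - a : ℕ) : ℝ) * c := by
  rw [Finset.sum_congr rfl (fun j hj => h j (Finset.mem_Icc.mp hj).1 (Finset.mem_Icc.mp hj).2),
    Finset.sum_const, Nat.card_Icc, nsmul_eq_mul]
  have : k + 1 - (a+1) = k - a := by omega
  rw [this]

/-- Discrete Marshall inequality for partial sums of isotonic regression: if `v*` is the
isotonic (nondecreasing least-squares) projection of `v` over indices `1,…,m` and `w` is
nondecreasing there, then partial-sum deviations of `v*` from `w` are bounded by the
maximal partial-sum deviation of `v` from `w`. -/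
theorem marshall_partial_sums
    (m : ℕ) (hm : 1 ≤ m) (v w vstar : ℕ → ℝ)
    (hw : ∀ i j, 1 ≤ i → i ≤ j → j ≤ m → w i ≤ w j)
    (hvstar : ∀ i j, 1 ≤ i → i ≤ j → j ≤ m → vstar i ≤ vstar j)
    (hmin : ∀ c : ℕ → ℝ, (∀ i j, 1 ≤ i → i ≤ j → j ≤ m → c i ≤ c j) →
      (∑ j ∈ Finset.Icc 1 m, (vstar j - v j) ^ 2) ≤
        ∑ j ∈ Finset.Icc 1 m, (c j - v j) ^ 2) :
    ∀ k, 1 ≤ k → k ≤ m →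
      |(∑ j ∈ Finset.Icc 1 k, vstar j) - ∑ j ∈ Finset.Icc 1 k, w j| ≤
        (Finset.Icc 1 m).sup' (Finset.nonempty_Icc.mpr hm)
          (fun i => |(∑ j ∈ Finset.Icc 1 i, v j) - ∑ j ∈ Finset.Icc 1 i, w j|) := by
  intro k hk1 hkm
  classical
  set M := (Finset.Icc 1 m).sup' (Finset.nonempty_Icc.mpr hm)
      (fun i => |(∑ j ∈ Finset.Icc 1 i, v j) - ∑ j ∈ Finset.Icc 1 i, w j|) with hM
  have hMi : ∀ i, 1 ≤ i → i ≤ m →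
      |(∑ j ∈ Finset.Icc 1 i, v j) - ∑ j ∈ Finset.Icc 1 i, w j| ≤ M := by
    intro i hi him
    rw [hM]
    exact Finset.le_sup' (fun i => |(∑ j ∈ Finset.Icc 1 i, v j) - ∑ j ∈ Finset.Icc 1 i, w j|)
      (Finset.mem_Icc.mpr ⟨hi, him⟩)
  have hM0 : 0 ≤ M := by
    have h1 := hMi 1 le_rfl hm
    exact le_trans (abs_nonneg _) h1
  have hT : ∀ c, c ≤ m → (∑ j ∈ Finset.Icc (c+1) m, (vstar j - v j) = 0) →
      ∑ j ∈ Finset.Icc 1 c, vstar j = ∑ j ∈ Finset.Icc 1 c, v j := by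
    intro c hc h0
    have hs := split_sum (fun j => vstar j - v j) c m hc
    rw [h0, S_total m v vstar hvstar hmin, add_zero] at hs
    have h2 := Finset.sum_sub_distrib (s := Finset.Icc 1 c) (f := vstar) (g := v)
    rw [hs] at h2
    linarith [h2]
  -- left endpoint a
  have hA : ∃ a, a < k ∧ (a = 0 ∨ vstar a < vstar (a+1)) ∧
      ∀ j, a < j → j < k → ¬(j = 0 ∨ vstar j < vstar (j+1)) := by
    refine ⟨Nat.findGreatest (fun n => n = 0 ∨ vstar n < vstar (n+1)) (k-1), ?_, ?_, ?_⟩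
    · have := Nat.findGreatest_le (P := fun n => n = 0 ∨ vstar n < vstar (n+1)) (k-1)
      omega
    · exact Nat.findGreatest_spec (P := fun n => n = 0 ∨ vstar n < vstar (n+1)) (Nat.zero_le _) (Or.inl rfl)
    · intro j hj hjk
      exact Nat.findGreatest_is_greatest hj (by omega)
  obtain ⟨a, hak', haP, hamax⟩ := hA
  -- right endpoint b
  have hB : ∃ b, k ≤ b ∧ b ≤ m ∧ (b = m ∨ vstar b < vstar (b+1)) ∧
      ∀ j, k ≤ j → j < b → ¬(j = m ∨ vstar j < vstar (j+1)) := by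
    have hexb : ∃ n, k ≤ n ∧ (n = m ∨ vstar n < vstar (n+1)) := ⟨m, hkm, Or.inl rfl⟩
    refine ⟨Nat.find hexb, (Nat.find_spec hexb).1, Nat.find_min' hexb ⟨hkm, Or.inl rfl⟩,
      (Nat.find_spec hexb).2, ?_⟩
    intro j hkj hjb hQ
    exact (Nat.find_min hexb hjb) ⟨hkj, hQ⟩
  obtain ⟨b, hkb, hbm, hbQ, hbmin⟩ := hB
  -- vstar is constant on (a, b]
  have hconst : ∀ j, a < j → j ≤ b → vstar j = vstar b := by
    apply const_of_step
    intro j hj hjb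
    by_cases hjk : j < k
    · have hnP := hamax j hj hjk
      have hnP2 : ¬ vstar j < vstar (j+1) := fun hc => hnP (Or.inr hc)
      exact le_antisymm (hvstar j (j+1) (by omega) (by omega) (by omega))
        (le_of_not_gt hnP2)
    · have hkj : k ≤ j := by omega
      have hnQ := hbmin j hkj hjb
      have hnP2 : ¬ vstar j < vstar (j+1) := fun hc => hnQ (Or.inr hc)
      exact le_antisymm (hvstar j (j+1) (by omega) (by omega) (by omega))
        (le_of_not_gt hnP2)
  have hconstk : ∀ j, a < j → j ≤ b → vstar j = vstar k := by
    intro j hj hjb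
    rw [hconst j hj hjb, ← hconst k hak' hkb]
  -- partial sums of vstar agree with those of v at a and b
  have hTa : ∑ j ∈ Finset.Icc 1 a, vstar j = ∑ j ∈ Finset.Icc 1 a, v j := by
    by_cases h0 : a = 0
    · rw [h0]; simp
    · have hjump : vstar a < vstar (a+1) := haP.resolve_left h0
      exact hT a (by omega) (S_jump m v vstar hvstar hmin a (by omega) (by omega) hjump)
  have hTb : ∑ j ∈ Finset.Icc 1 b, vstar j = ∑ j ∈ Finset.Icc 1 b, v j := by
    by_cases hbm' : b = m
    · have hst := S_total m v vstar hvstar hmin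
      have h2 := Finset.sum_sub_distrib (s := Finset.Icc 1 m) (f := vstar) (g := v)
      rw [hst] at h2
      rw [hbm']
      linarith [h2]
    · rcases hbQ with h | hjump
      · exact absurd h hbm'
      · exact hT b hbm (S_jump m v vstar hvstar hmin b (by omega) (by omega) hjump)
  -- T k ≤ 0
  have hTk : ∑ j ∈ Finset.Icc 1 k, vstar j ≤ ∑ j ∈ Finset.Icc 1 k, v j := by
    have hs := split_sum (fun j => vstar j - v j) k m hkm
    rw [S_total m v vstar hvstar hmin] at hs
    have h1 := S_nonneg m v vstar hvstar hmin (k+1) (by omega)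
    have h2 := Finset.sum_sub_distrib (s := Finset.Icc 1 k) (f := vstar) (g := v)
    simp only [h2] at hs
    linarith
  -- sums of the constant value
  have hsum1 : ∑ j ∈ Finset.Icc (a+1) k, vstar j = ((k - a : ℕ) : ℝ) * vstar k :=
    sum_const_Icc _ _ _ _ (fun j h1 h2 => hconstk j (by omega) (by omega))
  have hsum2 : ∑ j ∈ Finset.Icc (a+1) b, vstar j = ((b - a : ℕ) : ℝ) * vstar k :=
    sum_const_Icc _ _ _ _ (fun j h1 h2 => hconstk j (by omega) h2)
  have hsplit1 := split_sum vstar a k (by omega)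
  have hsplit2 := split_sum vstar a b (by omega)
  -- bounds on increments of W
  have hwk1 : ∑ j ∈ Finset.Icc (a+1) k, w j ≤ ((k - a : ℕ) : ℝ) * w k := by
    calc ∑ j ∈ Finset.Icc (a+1) k, w j ≤ ∑ j ∈ Finset.Icc (a+1) k, w k :=
          Finset.sum_le_sum fun j hj => by
            have := Finset.mem_Icc.mp hj
            exact hw j k (by omega) (by omega) hkm
      _ = ((k - a : ℕ) : ℝ) * w k := sum_const_Icc _ _ _ _ (fun _ _ _ => rfl)
  have hwk2 : ∀ _ : k < b, ((b - k : ℕ) : ℝ) * w (k+1) ≤ ∑ j ∈ Finset.Icc (k+1) b, w j := by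
    intro hkb'
    calc ((b - k : ℕ) : ℝ) * w (k+1) = ∑ j ∈ Finset.Icc (k+1) b, w (k+1) :=
          (sum_const_Icc _ _ _ _ (fun _ _ _ => rfl)).symm
      _ ≤ ∑ j ∈ Finset.Icc (k+1) b, w j :=
          Finset.sum_le_sum fun j hj => by
            have := Finset.mem_Icc.mp hj
            exact hw (k+1) j (by omega) (by omega) (by omega)
  have hwsplit1 := split_sum w a k (by omega)
  have hwsplit3 := split_sum w k b (by omega)
  -- abbreviations
  set Va := ∑ j ∈ Finset.Icc 1 a, v j with hVa
  set Vb := ∑ j ∈ Finset.Icc 1 b, v j with hVb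
  set Vk := ∑ j ∈ Finset.Icc 1 k, v j with hVk
  set Wa := ∑ j ∈ Finset.Icc 1 a, w j with hWa
  set Wb := ∑ j ∈ Finset.Icc 1 b, w j with hWb
  set Wk := ∑ j ∈ Finset.Icc 1 k, w j with hWk
  set Sk := ∑ j ∈ Finset.Icc 1 k, vstar j with hSk
  clear_value Va Vb Vk Wa Wb Wk Sk
  -- cast facts
  have hcast1 : ((k - a : ℕ) : ℝ) = (k:ℝ) - (a:ℝ) := by
    rw [Nat.cast_sub (by omega)]
  have hcast2 : ((b - a : ℕ) : ℝ) = (b:ℝ) - (a:ℝ) := by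
    rw [Nat.cast_sub (by omega)]
  have hcast3 : ((b - k : ℕ) : ℝ) = (b:ℝ) - (k:ℝ) := by
    rw [Nat.cast_sub (by omega)]
  have hKA : (a:ℝ) < (k:ℝ) := by exact_mod_cast hak'
  have hKB : (k:ℝ) ≤ (b:ℝ) := by exact_mod_cast hkb
  -- deviations at endpoints
  have hWaVa : Wa - Va ≤ M := by
    rcases Nat.eq_zero_or_pos a with h0 | h0
    · have hwa : Wa = 0 := by rw [hWa, h0]; simp
      have hva : Va = 0 := by rw [hVa, h0]; simp
      rw [hwa, hva]; simpa using hM0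
    · have h1 := hMi a h0 (by omega)
      rw [← hVa, ← hWa] at h1
      have h2 := abs_le.mp h1
      linarith [h2.1]
  have hWbVb : Wb - Vb ≤ M := by
    have h1 := hMi b (by omega) hbm
    rw [← hVb, ← hWb] at h1
    have h2 := abs_le.mp h1
    linarith [h2.1]
  have hVkWk : Vk - Wk ≤ M := by
    have h1 := hMi k hk1 hkm
    rw [← hVk, ← hWk] at h1
    have h2 := abs_le.mp h1
    linarith [h2.2]
  -- express Sk and Vb via the constant value
  have hSkeq : Sk = Va + ((k:ℝ) - (a:ℝ)) * vstar k := by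
    rw [← hsplit1, hsum1, hcast1, hTa]
  have hVbeq : Vb = Va + ((b:ℝ) - (a:ℝ)) * vstar k := by
    rw [← hTb, ← hsplit2, hsum2, hcast2, hTa]
  -- convexity inequality for W
  have hconv : (Wk - Wa) * ((b:ℝ) - (k:ℝ)) ≤ (Wb - Wk) * ((k:ℝ) - (a:ℝ)) := by
    rcases Nat.lt_or_ge k b with hkb' | hkb'
    · have h1 := hwk1
      have h2 := hwk2 hkb'
      have hwkk1 : w k ≤ w (k+1) := hw k (k+1) hk1 (by omega) (by omega)
      have e1 : Wk - Wa = ∑ j ∈ Finset.Icc (a+1) k, w j := by linarith [hwsplit1]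
      have e2 : Wb - Wk = ∑ j ∈ Finset.Icc (k+1) b, w j := by linarith [hwsplit3]
      have h1' : Wk - Wa ≤ ((k:ℝ) - (a:ℝ)) * w k := by rw [e1, ← hcast1]; exact h1
      have h2' : ((b:ℝ) - (k:ℝ)) * w (k+1) ≤ Wb - Wk := by rw [e2, ← hcast3]; exact h2
      have hBK : (0:ℝ) ≤ (b:ℝ) - (k:ℝ) := by linarith
      have hKA' : (0:ℝ) ≤ (k:ℝ) - (a:ℝ) := by linarith
      linarith [mul_le_mul_of_nonneg_right h1' hBK,
        mul_le_mul_of_nonneg_right h2' hKA',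
        mul_le_mul_of_nonneg_left hwkk1 (mul_nonneg hKA' hBK)]
    · have hbk : b = k := by omega
      have hWbWk : Wb = Wk := by rw [hWb, hWk, hbk]
      have hz : ((b:ℝ) - (k:ℝ)) = 0 := by rw [hbk]; ring
      rw [hz, hWbWk]
      simp
  -- conclude
  rw [abs_sub_le_iff]
  refine ⟨by linarith [hTk], ?_⟩
  have hba : (0:ℝ) < (b:ℝ) - (a:ℝ) := by linarith
  have key : ((b:ℝ) - (a:ℝ)) * (Wk - Sk) ≤
      ((b:ℝ) - (k:ℝ)) * (Wa - Va) + ((k:ℝ) - (a:ℝ)) * (Wb - Vb) := by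
    rw [hSkeq, hVbeq]
    linarith [hconv]
  have bound : ((b:ℝ) - (k:ℝ)) * (Wa - Va) + ((k:ℝ) - (a:ℝ)) * (Wb - Vb) ≤
      ((b:ℝ) - (a:ℝ)) * M := by
    have h1 : ((b:ℝ) - (k:ℝ)) * (Wa - Va) ≤ ((b:ℝ) - (k:ℝ)) * M :=
      mul_le_mul_of_nonneg_left hWaVa (by linarith)
    have h2 : ((k:ℝ) - (a:ℝ)) * (Wb - Vb) ≤ ((k:ℝ) - (a:ℝ)) * M :=
      mul_le_mul_of_nonneg_left hWbVb (by linarith)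
    linarith
  exact le_of_mul_le_mul_left (key.trans bound) hba
end

section
/- Let F be a uniformly continuous CDF on ℝ with ∫_ℝ |s| dF(s) < ∞. Let grids and corrected estimators F̂_n^c be as in the isotonization construction, with F(L_n) → 0, F(U_n) → 1, grid spacing δ_n → 0, sup_x |F̂_n(x) − F(x)| → 0, and assume δ_n · max_{2≤k≤m_n−1} |∑_{j=2}^k F̂_n^{c₀}(s_j) − ∑_{j=2}^k F(s_j)| → 0, where F̂_n^{c₀} is F̂_n truncated to [0,1]. Then ∫_ℝ |s| dF̂_n^c(s) → ∫_ℝ |s| dF(s). -/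
open MeasureTheory Filter Set
open Finset

/-- Abel summation. -/
lemma abel_sum (f g : ℕ → ℝ) : ∀ N, 1 ≤ N →
    ∑ k ∈ Finset.Icc 2 (N+1), f k * (g k - g (k-1)) =
      f (N+1) * g (N+1) - f 2 * g 1 - ∑ k ∈ Finset.Icc 2 N, (f (k+1) - f k) * g k := by
  intro N
  induction N with
  | zero => omega
  | succ n ih =>
    intro _
    rcases Nat.lt_or_ge n 1 with h | h
    · interval_cases n
      norm_num [Finset.sum_Icc_succ_top (show 2 ≤ 2 by norm_num)]
      ring
    · rw [Finset.sum_Icc_succ_top (show 2 ≤ n+1+1 by omega), ih h,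
        Finset.sum_Icc_succ_top (show 2 ≤ n+1 by omega)]
      simp only [Nat.add_sub_cancel]
      ring

lemma nonneg_of_perturb (A C gap : ℝ) (hC : 0 ≤ C) (hgap : 0 < gap)
    (h : ∀ t : ℝ, 0 ≤ t → t ≤ gap → 0 ≤ 2*t*A + t^2*C) : 0 ≤ A := by
  by_contra h'
  push_neg at h'
  have hC1 : 0 < C + 1 := by linarith
  set t := min gap (-A/(C+1)) with ht
  have ht0 : 0 < t := lt_min hgap (div_pos (by linarith) hC1)
  have ht1 : t ≤ -A/(C+1) := min_le_right _ _
  have h2 : t * (C+1) ≤ -A := by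
    rw [div_eq_inv_mul] at ht1
    calc t * (C+1) ≤ ((C+1)⁻¹ * -A) * (C+1) := by nlinarith
    _ = -A := by field_simp
  have h3 := h t ht0.le (min_le_left _ _)
  nlinarith [mul_pos ht0 ht0]

/-- discrete convexity of partial sums of a monotone sequence -/
lemma discrete_convex (φ : ℕ → ℝ) (K : ℕ) (hφ : ∀ k l, 2 ≤ k → k ≤ l → l ≤ K → φ k ≤ φ l)
    (a k b : ℕ) (ha : 1 ≤ a) (hak : a ≤ k) (hk2 : 2 ≤ k) (hkb : k ≤ b) (hbK : b ≤ K) :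
    ((b:ℝ) - a) * ∑ j ∈ Finset.Ioc 1 k, φ j ≤
      ((b:ℝ) - k) * ∑ j ∈ Finset.Ioc 1 a, φ j + ((k:ℝ) - a) * ∑ j ∈ Finset.Ioc 1 b, φ j := by
  have h1 : ∑ j ∈ Finset.Ioc 1 k, φ j - ∑ j ∈ Finset.Ioc 1 a, φ j = ∑ j ∈ Finset.Ioc a k, φ j := by
    rw [← Finset.sum_Ioc_consecutive _ (by omega : 1 ≤ a) hak]; ring
  have h2 : ∑ j ∈ Finset.Ioc 1 b, φ j - ∑ j ∈ Finset.Ioc 1 k, φ j = ∑ j ∈ Finset.Ioc k b, φ j := by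
    rw [← Finset.sum_Ioc_consecutive _ (by omega : 1 ≤ k) hkb]; ring
  have hup : ∑ j ∈ Finset.Ioc a k, φ j ≤ ((k:ℝ) - a) * φ k := by
    calc ∑ j ∈ Finset.Ioc a k, φ j ≤ ∑ j ∈ Finset.Ioc a k, φ k := by
          refine Finset.sum_le_sum fun j hj => ?_
          simp only [Finset.mem_Ioc] at hj
          exact hφ j k (by omega) hj.2 (by omega)
    _ = ((k:ℝ) - a) * φ k := by
          rw [Finset.sum_const, Nat.card_Ioc, nsmul_eq_mul, Nat.cast_sub hak]
  have hdn : ((b:ℝ) - k) * φ k ≤ ∑ j ∈ Finset.Ioc k b, φ j := by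
    calc ((b:ℝ) - k) * φ k = ∑ j ∈ Finset.Ioc k b, φ k := by
          rw [Finset.sum_const, Nat.card_Ioc, nsmul_eq_mul, Nat.cast_sub hkb]
    _ ≤ ∑ j ∈ Finset.Ioc k b, φ j := by
          refine Finset.sum_le_sum fun j hj => ?_
          simp only [Finset.mem_Ioc] at hj
          exact hφ k j hk2 (by omega) (by omega)
  have hka : (0:ℝ) ≤ (k:ℝ) - a := by
    have := hak; simp only [sub_nonneg]; exact_mod_cast this
  have hbk : (0:ℝ) ≤ (b:ℝ) - k := by
    have := hkb; simp only [sub_nonneg]; exact_mod_cast this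
  nlinarith [mul_le_mul_of_nonneg_left hup hbk, mul_le_mul_of_nonneg_left hdn hka]

lemma abs_shift_mono (d : ℝ) (hd : 0 ≤ d) : Monotone fun x : ℝ => |x + d| - |x| := by
  intro x y hxy
  simp only
  rcases abs_cases (x + d) with ⟨h1, h1'⟩ | ⟨h1, h1'⟩ <;>
    rcases abs_cases (y + d) with ⟨h2, h2'⟩ | ⟨h2, h2'⟩ <;>
    rcases abs_cases x with ⟨h3, h3'⟩ | ⟨h3, h3'⟩ <;>
    rcases abs_cases y with ⟨h4, h4'⟩ | ⟨h4, h4'⟩ <;> linarith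


section Iso
variable (K : ℕ) (g iso : ℕ → ℝ)

lemma iso_expand (k : ℕ) (t : ℝ) (hk2 : 2 ≤ k) (hkK : k ≤ K) :
    ∑ j ∈ Finset.Icc 2 K, ((iso j + t * (if j ≤ k then 1 else 0)) - g j)^2
      = ∑ j ∈ Finset.Icc 2 K, (iso j - g j)^2 +
        (2*t*((∑ j ∈ Finset.Ioc 1 k, iso j) - ∑ j ∈ Finset.Ioc 1 k, g j) + t^2*((k:ℝ)-1)) := by
  have h1 : ∀ j ∈ Finset.Icc 2 K, ((iso j + t * (if j ≤ k then 1 else 0)) - g j)^2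
      = (iso j - g j)^2 + (if j ≤ k then 2*t*(iso j - g j) + t^2 else 0) := by
    intro j _; split_ifs <;> ring
  rw [Finset.sum_congr rfl h1, Finset.sum_add_distrib]
  congr 1
  rw [Finset.sum_ite, Finset.sum_const_zero, add_zero]
  have h2 : Finset.filter (fun j => j ≤ k) (Finset.Icc 2 K) = Finset.Ioc 1 k := by
    ext j; simp only [Finset.mem_filter, Finset.mem_Icc, Finset.mem_Ioc]; omega
  rw [h2]
  have h3 : ∑ j ∈ Finset.Ioc 1 k, (2*t*(iso j - g j) + t^2)
      = 2*t*((∑ j ∈ Finset.Ioc 1 k, iso j) - ∑ j ∈ Finset.Ioc 1 k, g j)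
        + (Finset.Ioc 1 k).card * t^2 := by
    rw [Finset.sum_add_distrib, Finset.sum_const, nsmul_eq_mul, ← Finset.mul_sum,
      Finset.sum_sub_distrib]
  rw [h3, Nat.card_Ioc]
  have : ((k - 1 : ℕ) : ℝ) = (k:ℝ) - 1 := by
    rw [Nat.cast_sub (by omega)]; norm_num
  rw [this]; ring

lemma isotonic_partial_sum_bound (hK : 2 ≤ K)
    (hmono : ∀ k l, 2 ≤ k → k ≤ l → l ≤ K → iso k ≤ iso l)
    (hmin : ∀ c : ℕ → ℝ, (∀ k l, 2 ≤ k → k ≤ l → l ≤ K → c k ≤ c l) →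
      (∑ k ∈ Finset.Icc 2 K, (iso k - g k) ^ 2) ≤ ∑ k ∈ Finset.Icc 2 K, (c k - g k) ^ 2)
    (φ : ℕ → ℝ) (hφ : ∀ k l, 2 ≤ k → k ≤ l → l ≤ K → φ k ≤ φ l)
    (M : ℝ) (hM0 : 0 ≤ M)
    (hM : ∀ k, 2 ≤ k → k ≤ K →
      |(∑ j ∈ Finset.Ioc 1 k, g j) - ∑ j ∈ Finset.Ioc 1 k, φ j| ≤ M) :
    ∀ k, 2 ≤ k → k ≤ K →
      |(∑ j ∈ Finset.Ioc 1 k, iso j) - ∑ j ∈ Finset.Ioc 1 k, φ j| ≤ M := by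
  set P : ℕ → ℝ := fun k => ∑ j ∈ Finset.Ioc 1 k, iso j with hP
  set G : ℕ → ℝ := fun k => ∑ j ∈ Finset.Ioc 1 k, g j with hG
  set Φ : ℕ → ℝ := fun k => ∑ j ∈ Finset.Ioc 1 k, φ j with hΦ
  -- variational inequality
  have key : ∀ k t, 2 ≤ k → k ≤ K →
      (∀ i l, 2 ≤ i → i ≤ k → k < l → l ≤ K → iso i + t ≤ iso l) →
      0 ≤ 2*t*(P k - G k) + t^2*((k:ℝ)-1) := by
    intro k t hk2 hkK hcross
    have hc : ∀ i l, 2 ≤ i → i ≤ l → l ≤ K →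
        (iso i + t * (if i ≤ k then 1 else 0)) ≤ (iso l + t * (if l ≤ k then 1 else 0)) := by
      intro i l h2 hil hlK
      by_cases hik : i ≤ k <;> by_cases hlk : l ≤ k <;> simp [hik, hlk]
      · exact hmono i l h2 hil hlK
      · exact hcross i l h2 hik (by omega) hlK
      · omega
      · exact hmono i l h2 hil hlK
    have := hmin (fun j => iso j + t * (if j ≤ k then 1 else 0)) hc
    rw [iso_expand K g iso k t hk2 hkK] at this
    linarith
  have hCk : ∀ k : ℕ, 2 ≤ k → (0:ℝ) ≤ (k:ℝ) - 1 := by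
    intro k hk
    have : (2:ℝ) ≤ (k:ℝ) := by exact_mod_cast hk
    linarith
  -- step1 : prefix sums of iso are below those of g
  have step1 : ∀ k, 2 ≤ k → k ≤ K → P k ≤ G k := by
    intro k hk2 hkK
    have := nonneg_of_perturb (G k - P k) ((k:ℝ)-1) 1 (hCk k hk2) one_pos (fun t ht0 ht1 => by
      have := key k (-t) hk2 hkK (fun i l h2 hik hkl hlK => by
        have := hmono i l h2 (by omega) hlK; linarith)
      nlinarith)
    linarith
  -- step2 : at jumps, equality
  have step2 : ∀ k, 2 ≤ k → k + 1 ≤ K → iso k < iso (k+1) → G k ≤ P k := by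
    intro k hk2 hkK hjump
    have h := nonneg_of_perturb (P k - G k) ((k:ℝ)-1) (iso (k+1) - iso k) (hCk k hk2)
      (by linarith) (fun t ht0 ht1 => key k t hk2 (by omega) (fun i l h2 hik hkl hlK => by
        have h1 := hmono i k h2 hik (by omega)
        have h2 := hmono (k+1) l (by omega) (by omega) hlK
        linarith))
    linarith
  -- step3 : equality at the top
  have step3 : G K ≤ P K := by
    have := nonneg_of_perturb (P K - G K) ((K:ℝ)-1) 1 (hCk K hK) one_pos (fun t ht0 ht1 =>
      key K t hK le_rfl (fun i l _ _ hkl hlK => absurd hkl (by omega)))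
    linarith
  -- lemA : touching point below
  have lemA : ∀ k, 2 ≤ k → k ≤ K →
      ∃ a, 1 ≤ a ∧ a < k ∧ P a = G a ∧ ∀ j, a < j → j ≤ k → iso j = iso k := by
    intro k hk2
    induction k, hk2 using Nat.le_induction with
    | base =>
      intro _
      exact ⟨1, le_rfl, by omega, by simp [hP, hG], fun j h1 h2 => by
        have : j = 2 := by omega
        rw [this]⟩
    | succ k hk2 ih =>
      intro hkK
      rcases lt_or_eq_of_le (hmono k (k+1) hk2 (by omega) hkK) with hlt | heq
      · refine ⟨k, by omega, by omega, le_antisymm (step1 k hk2 (by omega)) (step2 k hk2 hkK hlt),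
          fun j h1 h2 => ?_⟩
        have hj : j = k+1 := by omega
        rw [hj]
      · obtain ⟨a, h1, h2, h3, h4⟩ := ih (by omega)
        refine ⟨a, h1, by omega, h3, fun j hj1 hj2 => ?_⟩
        rcases Nat.lt_or_ge j (k+1) with h | h
        · rw [h4 j hj1 (by omega), heq]
        · have : j = k+1 := by omega
          rw [this]
  -- lemB : touching point above
  have lemB : ∀ d k, 2 ≤ k → k + d = K →
      ∃ b, k ≤ b ∧ b ≤ K ∧ P b = G b ∧ ∀ j, k ≤ j → j ≤ b → iso j = iso k := by
    intro d
    induction d with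
    | zero =>
      intro k hk2 hkK
      refine ⟨K, by omega, le_rfl, le_antisymm (step1 K hK le_rfl) step3, fun j h1 h2 => ?_⟩
      have : j = k := by omega
      rw [this]
    | succ d ihd =>
      intro k hk2 hkK
      rcases lt_or_eq_of_le (hmono k (k+1) hk2 (by omega) (by omega)) with hlt | heq
      · refine ⟨k, le_rfl, by omega,
          le_antisymm (step1 k hk2 (by omega)) (step2 k hk2 (by omega) hlt),
          fun j h1 h2 => ?_⟩
        have hj : j = k := by omega
        rw [hj]
      · obtain ⟨b, h1, h2, h3, h4⟩ := ihd (k+1) (by omega) (by omega)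
        refine ⟨b, by omega, h2, h3, fun j hj1 hj2 => ?_⟩
        rcases Nat.lt_or_ge j (k+1) with h | h
        · have : j = k := by omega
          rw [this]
        · rw [h4 j h hj2, ← heq]
  -- main argument
  intro k hk2 hkK
  obtain ⟨a, ha1, hak, haPG, haconst⟩ := lemA k hk2 hkK
  obtain ⟨b, hkb, hbK, hbPG, hbconst⟩ := lemB (K - k) k hk2 (by omega)
  have hPka : P k = P a + ((k:ℝ) - a) * iso k := by
    have hsplit : P k - P a = ∑ j ∈ Finset.Ioc a k, iso j := by
      rw [hP]
      simp only
      rw [← Finset.sum_Ioc_consecutive _ (by omega : 1 ≤ a) (by omega : a ≤ k)]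
      ring
    have hconst : ∑ j ∈ Finset.Ioc a k, iso j = ((k:ℝ) - a) * iso k := by
      rw [Finset.sum_congr rfl (fun j hj => by
        simp only [Finset.mem_Ioc] at hj
        exact haconst j hj.1 hj.2), Finset.sum_const, Nat.card_Ioc, nsmul_eq_mul,
        Nat.cast_sub (by omega)]
    linarith [hsplit, hconst]
  have hPbk : P b = P k + ((b:ℝ) - k) * iso k := by
    have hsplit : P b - P k = ∑ j ∈ Finset.Ioc k b, iso j := by
      rw [hP]; simp only
      rw [← Finset.sum_Ioc_consecutive _ (by omega : 1 ≤ k) hkb]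
      ring
    have hconst : ∑ j ∈ Finset.Ioc k b, iso j = ((b:ℝ) - k) * iso k := by
      rw [Finset.sum_congr rfl (fun j hj => by
        simp only [Finset.mem_Ioc] at hj
        exact hbconst j (by omega) hj.2), Finset.sum_const, Nat.card_Ioc, nsmul_eq_mul,
        Nat.cast_sub hkb]
    linarith [hsplit, hconst]
  have hGa : Φ a - M ≤ G a := by
    rcases Nat.lt_or_ge a 2 with h | h
    · have ha1' : a = 1 := by omega
      have e1 : G a = 0 := by rw [hG, ha1']; simp
      have e2 : Φ a = 0 := by rw [hΦ, ha1']; simp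
      rw [e1, e2]; linarith
    · have := abs_le.mp (hM a h (by omega))
      linarith
  have hGb : Φ b - M ≤ G b := by
    have := abs_le.mp (hM b (by omega) hbK)
    linarith
  have hconvex := discrete_convex φ K hφ a k b ha1 (by omega) hk2 hkb hbK
  have hka : (0:ℝ) ≤ (k:ℝ) - a := by
    have : (a:ℝ) ≤ (k:ℝ) := by exact_mod_cast (by omega : a ≤ k)
    linarith
  have hbk : (0:ℝ) ≤ (b:ℝ) - k := by
    have : (k:ℝ) ≤ (b:ℝ) := by exact_mod_cast hkb
    linarith
  have hba : (1:ℝ) ≤ (b:ℝ) - a := by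
    have : ((a:ℝ) + 1) ≤ (b:ℝ) := by exact_mod_cast (by omega : a + 1 ≤ b)
    linarith
  -- lower bound : (b-a) * P k = (b-k) * G a + (k-a) * G b
  have hcomb : ((b:ℝ) - a) * P k = ((b:ℝ) - k) * G a + ((k:ℝ) - a) * G b := by
    rw [← haPG, ← hbPG, hPka, hPbk, hPka]
    ring
  have hlower : Φ k - M ≤ P k := by
    have h1 : ((b:ℝ) - k) * (Φ a - M) ≤ ((b:ℝ) - k) * G a :=
      mul_le_mul_of_nonneg_left hGa hbk
    have h2 : ((k:ℝ) - a) * (Φ b - M) ≤ ((k:ℝ) - a) * G b :=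
      mul_le_mul_of_nonneg_left hGb hka
    have h3 : ((b:ℝ) - a) * (Φ k - M) ≤ ((b:ℝ) - a) * P k := by
      rw [hcomb]
      have := hconvex
      nlinarith
    have hba0 : (0:ℝ) < (b:ℝ) - a := by linarith
    exact le_of_mul_le_mul_left (by linarith [h3]) hba0
  have hupper : P k ≤ Φ k + M := by
    have h1 := step1 k hk2 hkK
    have h2 := abs_le.mp (hM k hk2 hkK)
    linarith
  rw [abs_le]
  constructor <;> [linarith [hlower]; linarith [hupper]]

end Iso

lemma tail_bot (F : StieltjesFunction ℝ) (hF0 : ∀ y, 0 ≤ F y)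
    (hFbot : Tendsto (fun x => F x) atBot (nhds 0))
    (hFtop : Tendsto (fun x => F x) atTop (nhds 1))
    (hFmom : Integrable (fun t : ℝ => |t|) F.measure)
    (x : ℕ → ℝ) (hx : Tendsto (fun n => F (x n)) atTop (nhds 0)) :
    Tendsto (fun n => |x n| * F (x n)) atTop (nhds 0) := by
  haveI : IsProbabilityMeasure F.measure := F.isProbabilityMeasure hFbot hFtop
  set μ := F.measure with hμ
  have hIic : ∀ y : ℝ, μ (Iic y) = ENNReal.ofReal (F y) := by
    intro y; rw [hμ, F.measure_Iic hFbot]; norm_num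
  obtain ⟨x₀, hx₀⟩ : ∃ x₀, 0 < F x₀ := by
    have := (hFtop.eventually (lt_mem_nhds (show (1/2:ℝ) < 1 by norm_num))).exists
    rcases this with ⟨x₀, h⟩; exact ⟨x₀, by linarith⟩
  have hev : ∀ᶠ n in atTop, x n ≤ x₀ := by
    filter_upwards [hx.eventually (gt_mem_nhds hx₀)] with n hn
    by_contra h
    exact absurd (F.mono (le_of_not_ge h)) (by linarith)
  have hμt : Tendsto (fun n => μ (Iic (x n))) atTop (nhds 0) := by
    simp only [hIic]
    have := ENNReal.tendsto_ofReal hx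
    simpa using this
  have hint : Tendsto (fun n => ∫ t in Iic (x n), |t| ∂μ) atTop (nhds 0) :=
    hFmom.tendsto_setIntegral_nhds_zero hμt
  have hbound : ∀ᶠ n in atTop,
      |x n| * F (x n) ≤ |x₀| * F (x n) + ∫ t in Iic (x n), |t| ∂μ := by
    filter_upwards [hev] with n hn
    have hint_nonneg : 0 ≤ ∫ t in Iic (x n), |t| ∂μ :=
      setIntegral_nonneg measurableSet_Iic (fun t _ => abs_nonneg t)
    rcases le_or_gt (|x n|) (|x₀|) with h | h
    · have := mul_le_mul_of_nonneg_right h (hF0 (x n))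
      linarith
    · have hxn_neg : x n < 0 := by
        rcases le_or_gt 0 (x n) with h' | h'
        · exfalso
          rw [abs_of_nonneg h'] at h
          have : x n ≤ |x₀| := le_trans hn (le_abs_self x₀)
          linarith
        · exact h'
      have habs : |x n| = -(x n) := abs_of_neg hxn_neg
      have hconst : ∫ t in Iic (x n), -(x n) ∂μ = -(x n) * F (x n) := by
        rw [setIntegral_const, smul_eq_mul, measureReal_def, hIic,
          ENNReal.toReal_ofReal (hF0 (x n))]
        ring
      have hmono : ∫ t in Iic (x n), -(x n) ∂μ ≤ ∫ t in Iic (x n), |t| ∂μ := by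
        refine setIntegral_mono_on (integrableOn_const (measure_lt_top μ _).ne)
          (hFmom.integrableOn) measurableSet_Iic (fun t ht => ?_)
        simp only [Set.mem_Iic] at ht
        rw [abs_of_nonpos (by linarith)]
        linarith
      rw [habs]
      have : -(x n) * F (x n) ≤ ∫ t in Iic (x n), |t| ∂μ := by rw [← hconst]; exact hmono
      nlinarith [hF0 (x n), abs_nonneg x₀, mul_nonneg (abs_nonneg x₀) (hF0 (x n))]
  have hupper : Tendsto (fun n => |x₀| * F (x n) + ∫ t in Iic (x n), |t| ∂μ) atTop (nhds 0) := by
    have h1 : Tendsto (fun n => |x₀| * F (x n)) atTop (nhds 0) := by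
      simpa using (tendsto_const_nhds (x := |x₀|)).mul hx
    simpa using h1.add hint
  have hlow : ∀ᶠ n in atTop, (0:ℝ) ≤ |x n| * F (x n) :=
    Eventually.of_forall fun n => mul_nonneg (abs_nonneg _) (hF0 (x n))
  exact tendsto_of_tendsto_of_tendsto_of_le_of_le' tendsto_const_nhds hupper hlow hbound

lemma tail_top (F : StieltjesFunction ℝ) (hF01 : ∀ y, F y ∈ Set.Icc (0:ℝ) 1)
    (hFbot : Tendsto (fun x => F x) atBot (nhds 0))
    (hFtop : Tendsto (fun x => F x) atTop (nhds 1))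
    (hFmom : Integrable (fun t : ℝ => |t|) F.measure)
    (x : ℕ → ℝ) (hx : Tendsto (fun n => F (x n)) atTop (nhds 1)) :
    Tendsto (fun n => |x n| * (1 - F (x n))) atTop (nhds 0) := by
  haveI : IsProbabilityMeasure F.measure := F.isProbabilityMeasure hFbot hFtop
  set μ := F.measure with hμ
  have hIoi : ∀ y : ℝ, μ (Ioi y) = ENNReal.ofReal (1 - F y) := by
    intro y
    have h1 : μ (Iic y) = ENNReal.ofReal (F y) := by
      rw [hμ, F.measure_Iic hFbot]; norm_num
    have h2 : Ioi y = (Iic y)ᶜ := by simp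
    rw [h2, measure_compl measurableSet_Iic (measure_ne_top μ _), h1]
    have h3 : μ Set.univ = 1 := measure_univ
    rw [h3, ENNReal.ofReal_sub 1 (hF01 y).1]
    norm_num
  obtain ⟨x₁, hx₁⟩ : ∃ x₁, F x₁ < 1 := by
    have := (hFbot.eventually (gt_mem_nhds (show (0:ℝ) < 1/2 by norm_num))).exists
    rcases this with ⟨x₁, h⟩; exact ⟨x₁, by linarith⟩
  have hev : ∀ᶠ n in atTop, x₁ ≤ x n := by
    filter_upwards [hx.eventually (lt_mem_nhds hx₁)] with n hn
    by_contra h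
    exact absurd (F.mono (le_of_not_ge h)) (by linarith)
  have hμt : Tendsto (fun n => μ (Ioi (x n))) atTop (nhds 0) := by
    simp only [hIoi]
    have h0 : Tendsto (fun n => 1 - F (x n)) atTop (nhds 0) := by
      have := hx.const_sub 1
      simpa using this
    have := ENNReal.tendsto_ofReal h0
    simpa using this
  have hint : Tendsto (fun n => ∫ t in Ioi (x n), |t| ∂μ) atTop (nhds 0) :=
    hFmom.tendsto_setIntegral_nhds_zero hμt
  have hbound : ∀ᶠ n in atTop,
      |x n| * (1 - F (x n)) ≤ |x₁| * (1 - F (x n)) + ∫ t in Ioi (x n), |t| ∂μ := by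
    filter_upwards [hev] with n hn
    have h1F : 0 ≤ 1 - F (x n) := by linarith [(hF01 (x n)).2]
    have hint_nonneg : 0 ≤ ∫ t in Ioi (x n), |t| ∂μ :=
      setIntegral_nonneg measurableSet_Ioi (fun t _ => abs_nonneg t)
    rcases le_or_gt (|x n|) (|x₁|) with h | h
    · have := mul_le_mul_of_nonneg_right h h1F
      linarith
    · have hxn_pos : 0 < x n := by
        rcases le_or_gt (x n) 0 with h' | h'
        · exfalso
          rw [abs_of_nonpos h'] at h
          have : -x₁ ≤ |x₁| := neg_le_abs x₁
          linarith
        · exact h'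
      have habs : |x n| = x n := abs_of_pos hxn_pos
      have hconst : ∫ t in Ioi (x n), x n ∂μ = x n * (1 - F (x n)) := by
        rw [setIntegral_const, smul_eq_mul, measureReal_def, hIoi, ENNReal.toReal_ofReal h1F]
        ring
      have hmono : ∫ t in Ioi (x n), x n ∂μ ≤ ∫ t in Ioi (x n), |t| ∂μ := by
        refine setIntegral_mono_on (integrableOn_const (measure_lt_top μ _).ne)
          (hFmom.integrableOn) measurableSet_Ioi (fun t ht => ?_)
        simp only [Set.mem_Ioi] at ht
        rw [abs_of_nonneg (by linarith)]
        linarith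
      rw [habs]
      have : x n * (1 - F (x n)) ≤ ∫ t in Ioi (x n), |t| ∂μ := by rw [← hconst]; exact hmono
      nlinarith [abs_nonneg x₁]
  have hupper : Tendsto (fun n => |x₁| * (1 - F (x n)) + ∫ t in Ioi (x n), |t| ∂μ)
      atTop (nhds 0) := by
    have h0 : Tendsto (fun n => 1 - F (x n)) atTop (nhds 0) := by
      have := hx.const_sub 1; simpa using this
    have h1 : Tendsto (fun n => |x₁| * (1 - F (x n))) atTop (nhds 0) := by
      simpa using (tendsto_const_nhds (x := |x₁|)).mul h0
    simpa using h1.add hint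
  have hlow : ∀ᶠ n in atTop, (0:ℝ) ≤ |x n| * (1 - F (x n)) :=
    Eventually.of_forall fun n => mul_nonneg (abs_nonneg _) (by linarith [(hF01 (x n)).2])
  exact tendsto_of_tendsto_of_tendsto_of_le_of_le' tendsto_const_nhds hupper hlow hbound

lemma telescope_sum (h : ℕ → ℝ) : ∀ N, 1 ≤ N →
    ∑ k ∈ Finset.Icc 2 N, (h k - h (k-1)) = h N - h 1 := by
  intro N
  induction N with
  | zero => omega
  | succ n ih =>
    intro _
    rcases Nat.lt_or_ge n 1 with hn | hn
    · interval_cases n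
      rw [show Finset.Icc 2 1 = ∅ from rfl]
      simp
    · rw [Finset.sum_Icc_succ_top (by omega : 2 ≤ n+1), ih hn, Nat.add_sub_cancel]
      ring

lemma riemann_close (F : StieltjesFunction ℝ) (hF0 : ∀ y, 0 ≤ F y)
    (hFmom : Integrable (fun t : ℝ => |t|) F.measure)
    (N : ℕ) (hN : 2 ≤ N) (s : ℕ → ℝ) (δ : ℝ) (hδ : 0 < δ)
    (hgrid : ∀ k, 1 ≤ k → k < N → s (k+1) = s k + δ) :
    |(∑ k ∈ Finset.Icc 2 N, |s k| * (F (s k) - F (s (k-1)))) -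
      ∫ t in Ioc (s 1) (s N), |t| ∂F.measure| ≤ δ * (F (s N) - F (s 1)) := by
  set μ := F.measure with hμ
  have hmono : ∀ k l, 1 ≤ k → k ≤ l → l ≤ N → s k ≤ s l := by
    intro k l hk1 hkl hlN
    induction l, hkl using Nat.le_induction with
    | base => exact le_refl _
    | succ l hkl ih =>
      have h1 : s l ≤ s (l+1) := by
        rw [hgrid l (by omega) (by omega)]
        linarith
      exact le_trans (ih (by omega)) h1
  set I : ℕ → ℝ := fun k => ∫ t in Ioc (s 1) (s k), |t| ∂μ with hI
  have hIdiff : ∀ k, 2 ≤ k → k ≤ N →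
      I k - I (k-1) = ∫ t in Ioc (s (k-1)) (s k), |t| ∂μ := by
    intro k hk2 hkN
    have h1 : s 1 ≤ s (k-1) := hmono 1 (k-1) le_rfl (by omega) (by omega)
    have h2 : s (k-1) ≤ s k := hmono (k-1) k (by omega) (by omega) hkN
    have hun : Ioc (s 1) (s (k-1)) ∪ Ioc (s (k-1)) (s k) = Ioc (s 1) (s k) :=
      Set.Ioc_union_Ioc_eq_Ioc h1 h2
    have hdisj : Disjoint (Ioc (s 1) (s (k-1))) (Ioc (s (k-1)) (s k)) :=
      Set.Ioc_disjoint_Ioc_of_le le_rfl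
    have := setIntegral_union hdisj measurableSet_Ioc
      (hFmom.integrableOn (s := Ioc (s 1) (s (k-1))))
      (hFmom.integrableOn (s := Ioc (s (k-1)) (s k)))
    rw [hun] at this
    rw [hI]
    simp only
    rw [this]
    ring
  have hμIoc : ∀ a b : ℝ, μ (Ioc a b) = ENNReal.ofReal (F b - F a) := fun a b =>
    F.measure_Ioc a b
  have hterm : ∀ k, 2 ≤ k → k ≤ N →
      |(|s k| * (F (s k) - F (s (k-1)))) - (I k - I (k-1))|
        ≤ δ * (F (s k) - F (s (k-1))) := by
    intro k hk2 hkN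
    have h2 : s (k-1) ≤ s k := hmono (k-1) k (by omega) (by omega) hkN
    have hFle : F (s (k-1)) ≤ F (s k) := F.mono h2
    have hμlt : μ (Ioc (s (k-1)) (s k)) < ⊤ := by
      rw [hμIoc]; exact ENNReal.ofReal_lt_top
    have hμtoReal : (μ (Ioc (s (k-1)) (s k))).toReal = F (s k) - F (s (k-1)) := by
      rw [hμIoc, ENNReal.toReal_ofReal (by linarith)]
    have hconst : ∫ t in Ioc (s (k-1)) (s k), |s k| ∂μ
        = |s k| * (F (s k) - F (s (k-1))) := by
      rw [setIntegral_const, smul_eq_mul, measureReal_def, hμtoReal]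
      ring
    rw [hIdiff k hk2 hkN, ← hconst]
    have hsub : ∫ t in Ioc (s (k-1)) (s k), |s k| ∂μ - ∫ t in Ioc (s (k-1)) (s k), |t| ∂μ
        = ∫ t in Ioc (s (k-1)) (s k), (|s k| - |t|) ∂μ := by
      rw [← integral_sub (integrableOn_const (C := |s k|) hμlt.ne) hFmom.integrableOn]
    rw [hsub]
    have hgap : s k - s (k-1) = δ := by
      have := hgrid (k-1) (by omega) (by omega)
      rw [show k - 1 + 1 = k by omega] at this
      linarith
    have := norm_setIntegral_le_of_norm_le_const (μ := μ) (C := δ) hμlt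
      (f := fun t => |s k| - |t|) (s := Ioc (s (k-1)) (s k))
      (fun t ht => by
        simp only [Set.mem_Ioc] at ht
        rw [Real.norm_eq_abs]
        calc |(|s k| - |t|)| ≤ |s k - t| := abs_abs_sub_abs_le_abs_sub _ _
        _ ≤ δ := by rw [abs_of_nonneg (by linarith)]; linarith)
    have this2 := this
    rw [Real.norm_eq_abs] at this2
    calc |∫ t in Ioc (s (k-1)) (s k), (|s k| - |t|) ∂μ| ≤ δ * (μ (Ioc (s (k-1)) (s k))).toReal :=
      this2
    _ = δ * (F (s k) - F (s (k-1))) := by rw [hμtoReal]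
  have htel : ∑ k ∈ Finset.Icc 2 N, (I k - I (k-1)) = I N := by
    rw [telescope_sum I N (by omega)]
    have hI1 : I 1 = 0 := by
      rw [hI]; simp
    rw [hI1, sub_zero]
  have hsplit : (∑ k ∈ Finset.Icc 2 N, |s k| * (F (s k) - F (s (k-1)))) - I N
      = ∑ k ∈ Finset.Icc 2 N, ((|s k| * (F (s k) - F (s (k-1)))) - (I k - I (k-1))) := by
    rw [Finset.sum_sub_distrib, htel]
  rw [show (∫ t in Ioc (s 1) (s N), |t| ∂F.measure) = I N from rfl, hsplit]
  calc |∑ k ∈ Finset.Icc 2 N, ((|s k| * (F (s k) - F (s (k-1)))) - (I k - I (k-1)))|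
      ≤ ∑ k ∈ Finset.Icc 2 N, |(|s k| * (F (s k) - F (s (k-1)))) - (I k - I (k-1))| :=
        Finset.abs_sum_le_sum_abs _ _
    _ ≤ ∑ k ∈ Finset.Icc 2 N, δ * (F (s k) - F (s (k-1))) := by
        refine Finset.sum_le_sum fun k hk => ?_
        simp only [Finset.mem_Icc] at hk
        exact hterm k hk.1 hk.2
    _ = δ * (F (s N) - F (s 1)) := by
        rw [← Finset.mul_sum, telescope_sum (fun k => F (s k)) N (by omega)]

section Main

/-- Deterministic content of Lemma 2: under the isotonization construction (grid with
spacing `δₙ → 0`, `F (Lₙ) → 0`, `F (Uₙ) → 1`, uniform convergence of `F̂ₙ` to the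
uniformly continuous CDF `F` with finite first absolute moment), if additionally
`δₙ · max_{2≤k≤mₙ−1} |∑_{j=2}^k F̂ₙᶜ⁰(sⱼ) − ∑_{j=2}^k F(sⱼ)| → 0`, then the first
absolute moment of the corrected step-function estimator `F̂ₙᶜ` (a finite sum over its
jumps) converges to `∫ |s| dF(s)`. -/
theorem isotonized_estimator_first_moment_convergence
    (F : StieltjesFunction ℝ)
    (hFuc : UniformContinuous fun x => F x)
    (hF01 : ∀ x, F x ∈ Set.Icc (0:ℝ) 1)
    (hFbot : Tendsto (fun x => F x) atBot (nhds 0))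
    (hFtop : Tendsto (fun x => F x) atTop (nhds 1))
    (hFmom : Integrable (fun t : ℝ => |t|) F.measure)
    (Fhat : ℕ → ℝ → ℝ)
    (hunif : ∀ ε > (0:ℝ), ∀ᶠ n in atTop, ∀ x, |Fhat n x - F x| < ε)
    (m : ℕ → ℕ) (hm : ∀ n, 3 ≤ m n)
    (s : ℕ → ℕ → ℝ) (δ : ℕ → ℝ) (hδpos : ∀ n, 0 < δ n)
    (hgrid : ∀ n k, 1 ≤ k → k < m n → s n (k + 1) = s n k + δ n)
    (hδ0 : Tendsto δ atTop (nhds 0))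
    (hL : Tendsto (fun n => F (s n 1)) atTop (nhds 0))
    (hU : Tendsto (fun n => F (s n (m n))) atTop (nhds 1))
    (iso : ℕ → ℕ → ℝ)
    (hisomono : ∀ n k l, 2 ≤ k → k ≤ l → l ≤ m n - 1 → iso n k ≤ iso n l)
    (hisomin : ∀ n (c : ℕ → ℝ), (∀ k l, 2 ≤ k → k ≤ l → l ≤ m n - 1 → c k ≤ c l) →
      (∑ k ∈ Finset.Icc 2 (m n - 1), (iso n k - min 1 (max 0 (Fhat n (s n k)))) ^ 2) ≤
        ∑ k ∈ Finset.Icc 2 (m n - 1), (c k - min 1 (max 0 (Fhat n (s n k)))) ^ 2)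
    (Fc : ℕ → ℝ → ℝ)
    (hFcleft : ∀ n x, x < s n 2 → Fc n x = 0)
    (hFcright : ∀ n x, s n (m n) ≤ x → Fc n x = 1)
    (hFcmid : ∀ n x k, 2 ≤ k → k < m n → s n k ≤ x → x < s n (k + 1) → Fc n x = iso n k)
    (hpartial : Tendsto (fun n => δ n *
        (Finset.Icc 2 (m n - 1)).sup'
          (Finset.nonempty_Icc.mpr (by have h := hm n; omega))
          (fun k => |(∑ j ∈ Finset.Icc 2 k, min 1 (max 0 (Fhat n (s n j)))) -
            ∑ j ∈ Finset.Icc 2 k, F (s n j)|)) atTop (nhds 0)) :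
    Tendsto (fun n => ∑ k ∈ Finset.Icc 2 (m n),
        |s n k| * (Fc n (s n k) - Fc n (s n (k - 1)))) atTop
      (nhds (∫ t, |t| ∂F.measure)) := by
  haveI : IsProbabilityMeasure F.measure := F.isProbabilityMeasure hFbot hFtop
  set μ := F.measure with hμdef
  have hF0 : ∀ y, 0 ≤ F y := fun y => (hF01 y).1
  have hF1 : ∀ y, F y ≤ 1 := fun y => (hF01 y).2
  -- grid monotone
  have hsmono : ∀ n k l, 1 ≤ k → k ≤ l → l ≤ m n → s n k ≤ s n l := by
    intro n k l hk1 hkl hlN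
    induction l, hkl using Nat.le_induction with
    | base => exact le_refl _
    | succ l hkl ih =>
      have h1 : s n l ≤ s n (l+1) := by
        rw [hgrid n l (by omega) (by omega)]
        linarith [hδpos n]
      exact le_trans (ih (by omega)) h1
  set Mval : ℕ → ℝ := fun n => (Finset.Icc 2 (m n - 1)).sup'
      (Finset.nonempty_Icc.mpr (by have h := hm n; omega))
      (fun k => |(∑ j ∈ Finset.Icc 2 k, min 1 (max 0 (Fhat n (s n j)))) -
        ∑ j ∈ Finset.Icc 2 k, F (s n j)|) with hMval
  have hδM : Tendsto (fun n => δ n * Mval n) atTop (nhds 0) := hpartial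
  set S : ℕ → ℝ := fun n => ∑ k ∈ Finset.Icc 2 (m n),
      |s n k| * (Fc n (s n k) - Fc n (s n (k - 1))) with hS
  set T : ℕ → ℝ := fun n => ∑ k ∈ Finset.Icc 2 (m n),
      |s n k| * (F (s n k) - F (s n (k - 1))) with hT
  set Dfun : ℕ → ℝ := fun n =>
      δ n * (F (s n (m n)) - F (s n 1))
      + (∫ t in Iic (s n 1), |t| ∂μ) + (∫ t in Ioi (s n (m n)), |t| ∂μ)
      + |s n (m n)| * (1 - F (s n (m n)))
      + (|s n 1| * F (s n 1) + δ n * F (s n 1))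
      + 3 * (δ n * Mval n) with hDfun
  -- the per-n bound
  have key : ∀ n, |S n - ∫ t, |t| ∂μ| ≤ Dfun n := by
    intro n
    have hN3 : 3 ≤ m n := hm n
    set N := m n with hN
    set f : ℕ → ℝ := fun k => |s n k| with hf
    set w : ℕ → ℝ := fun k => Fc n (s n k) with hw
    set Fv : ℕ → ℝ := fun k => F (s n k) with hFv
    set u : ℕ → ℝ := fun k => w k - Fv k with hu
    set b : ℕ → ℝ := fun k => f (k+1) - f k with hb
    set V : ℕ → ℝ := fun k => ∑ j ∈ Finset.Ioc 1 k, u j with hV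
    -- basic values
    have hw1 : w 1 = 0 := by
      rw [hw]
      refine hFcleft n (s n 1) ?_
      rw [hgrid n 1 le_rfl (by omega)]
      linarith [hδpos n]
    have hwN : w N = 1 := hFcright n (s n N) le_rfl
    have hwk : ∀ k, 2 ≤ k → k ≤ N - 1 → w k = iso n k := by
      intro k hk2 hkN
      refine hFcmid n (s n k) k hk2 (by omega) le_rfl ?_
      rw [hgrid n k (by omega) (by omega)]
      linarith [hδpos n]
    -- S - T via Abel summation
    have hST0 : S n - T n = ∑ k ∈ Finset.Icc 2 N, f k * (u k - u (k-1)) := by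
      rw [hS, hT, ← Finset.sum_sub_distrib]
      exact Finset.sum_congr rfl (fun k _ => by rw [hu, hf, hw, hFv]; ring)
    have habel1 := abel_sum f u (N-1) (by omega)
    rw [show N - 1 + 1 = N by omega] at habel1
    -- second abel
    have huV : ∀ k, 2 ≤ k → u k = V k - V (k-1) := by
      intro k hk2
      rw [hV]
      simp only
      rw [show k = (k-1) + 1 by omega, Finset.sum_Ioc_succ_top (by omega : 1 ≤ k - 1)]
      rw [show k - 1 + 1 - 1 = k - 1 by omega]
      ring
    have hR0 : ∑ k ∈ Finset.Icc 2 (N-1), b k * u k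
        = ∑ k ∈ Finset.Icc 2 (N-1), b k * (V k - V (k-1)) := by
      refine Finset.sum_congr rfl (fun k hk => ?_)
      simp only [Finset.mem_Icc] at hk
      rw [huV k hk.1]
    have habel2 := abel_sum b V (N-2) (by omega)
    rw [show N - 2 + 1 = N - 1 by omega] at habel2
    have hV1 : V 1 = 0 := by rw [hV]; simp
    -- bounds on V
    have hMnonneg : 0 ≤ Mval n := by
      have h2mem : 2 ∈ Finset.Icc 2 (m n - 1) := by
        simp only [Finset.mem_Icc]; omega
      calc (0:ℝ) ≤ |(∑ j ∈ Finset.Icc 2 2, min 1 (max 0 (Fhat n (s n j)))) -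
            ∑ j ∈ Finset.Icc 2 2, F (s n j)| := abs_nonneg _
      _ ≤ Mval n := Finset.le_sup'
            (fun k => |(∑ j ∈ Finset.Icc 2 k, min 1 (max 0 (Fhat n (s n j)))) -
              ∑ j ∈ Finset.Icc 2 k, F (s n j)|) h2mem
    have hVbound : ∀ k, 2 ≤ k → k ≤ N - 1 → |V k| ≤ Mval n := by
      intro k hk2 hkN
      have hVPhi : V k = (∑ j ∈ Finset.Ioc 1 k, iso n j) - ∑ j ∈ Finset.Ioc 1 k, F (s n j) := by
        rw [hV, ← Finset.sum_sub_distrib]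
        refine Finset.sum_congr rfl (fun j hj => ?_)
        simp only [Finset.mem_Ioc] at hj
        simp only [hu, hFv]
        rw [hwk j (by omega) (by omega)]
      rw [hVPhi]
      have hisob := isotonic_partial_sum_bound (N-1) (fun j => min 1 (max 0 (Fhat n (s n j))))
        (iso n) (by omega) (hisomono n) (hisomin n) (fun j => F (s n j))
        (fun i l hi2 hil hlK => F.mono (hsmono n i l (by omega) hil (by omega)))
        (Mval n) hMnonneg
        (fun j hj2 hjK => by
          have hjmem : j ∈ Finset.Icc 2 (m n - 1) := by
            simp only [Finset.mem_Icc]; omega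
          have := Finset.le_sup' (fun k => |(∑ j ∈ Finset.Icc 2 k, min 1 (max 0 (Fhat n (s n j)))) -
            ∑ j ∈ Finset.Icc 2 k, F (s n j)|) hjmem
          rw [show Finset.Icc 2 j = Finset.Ioc 1 j from Finset.Icc_add_one_left_eq_Ioc 1 j] at this
          exact le_trans (le_of_eq rfl) this)
      exact hisob k hk2 hkN
    -- bounds on b
    have hbval : ∀ k, 1 ≤ k → k < N → b k = |s n k + δ n| - |s n k| := by
      intro k hk1 hkN
      rw [hb, hf]
      simp only
      rw [hgrid n k hk1 hkN]
    have hbabs : ∀ k, 1 ≤ k → k < N → |b k| ≤ δ n := by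
      intro k hk1 hkN
      rw [hbval k hk1 hkN]
      calc |(|s n k + δ n| - |s n k|)| ≤ |s n k + δ n - s n k| := abs_abs_sub_abs_le_abs_sub _ _
      _ = δ n := by rw [show s n k + δ n - s n k = δ n by ring, abs_of_pos (hδpos n)]
    have hbmono : ∀ k, 1 ≤ k → k + 1 < N → b k ≤ b (k+1) := by
      intro k hk1 hkN
      rw [hbval k hk1 (by omega), hbval (k+1) (by omega) hkN]
      exact abs_shift_mono (δ n) (hδpos n).le
        (hsmono n k (k+1) hk1 (by omega) (by omega))
    -- telescoping second differences
    have htelb : ∑ k ∈ Finset.Icc 2 (N-2), (b (k+1) - b k) = b (N-1) - b 2 := by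
      have hcongr : ∑ k ∈ Finset.Icc 2 (N-2), (b (k+1) - b k)
          = ∑ k ∈ Finset.Icc 2 (N-2), ((fun j => b (j+1)) k - (fun j => b (j+1)) (k-1)) := by
        refine Finset.sum_congr rfl (fun k hk => ?_)
        simp only [Finset.mem_Icc] at hk
        show b (k+1) - b k = b (k+1) - b ((k-1)+1)
        rw [show (k-1)+1 = k from by omega]
      rw [hcongr, telescope_sum (fun j => b (j+1)) (N-2) (by omega)]
      show b (N-2+1) - b (1+1) = b (N-1) - b 2
      rw [show N-2+1 = N-1 from by omega]
    have hsum2 : |∑ k ∈ Finset.Icc 2 (N-2), (b (k+1) - b k) * V k|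
        ≤ 2 * (δ n * Mval n) := by
      calc |∑ k ∈ Finset.Icc 2 (N-2), (b (k+1) - b k) * V k|
          ≤ ∑ k ∈ Finset.Icc 2 (N-2), |(b (k+1) - b k) * V k| :=
            Finset.abs_sum_le_sum_abs _ _
        _ ≤ ∑ k ∈ Finset.Icc 2 (N-2), (b (k+1) - b k) * Mval n := by
            refine Finset.sum_le_sum (fun k hk => ?_)
            simp only [Finset.mem_Icc] at hk
            have hbm := hbmono k (by omega) (by omega)
            rw [abs_mul, abs_of_nonneg (by linarith : (0:ℝ) ≤ b (k+1) - b k)]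
            exact mul_le_mul_of_nonneg_left (hVbound k hk.1 (by omega)) (by linarith)
        _ = (b (N-1) - b 2) * Mval n := by rw [← Finset.sum_mul, htelb]
        _ ≤ 2 * (δ n * Mval n) := by
            have h1 := hbabs (N-1) (by omega) (by omega)
            have h2 := hbabs 2 (by omega) (by omega)
            have h1' := abs_le.mp h1
            have h2' := abs_le.mp h2
            nlinarith [hMnonneg]
    -- assemble S - T bound
    have hRbound : |∑ k ∈ Finset.Icc 2 (N-1), b k * u k| ≤ 3 * (δ n * Mval n) := by
      rw [hR0, habel2, hV1]
      have h1 : |b (N-1) * V (N-1)| ≤ δ n * Mval n := by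
        rw [abs_mul]
        have hb1 := hbabs (N-1) (by omega) (by omega)
        have hV1' := hVbound (N-1) (by omega) le_rfl
        exact mul_le_mul hb1 hV1' (abs_nonneg _) (hδpos n).le
      calc |b (N-1) * V (N-1) - b 2 * 0 - ∑ k ∈ Finset.Icc 2 (N-2), (b (k+1) - b k) * V k|
          ≤ |b (N-1) * V (N-1)| + |∑ k ∈ Finset.Icc 2 (N-2), (b (k+1) - b k) * V k| := by
            rw [mul_zero, sub_zero]
            exact abs_sub _ _
        _ ≤ δ n * Mval n + 2 * (δ n * Mval n) := add_le_add h1 hsum2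
        _ = 3 * (δ n * Mval n) := by ring
    have hSTbound : |S n - T n| ≤
        |s n N| * (1 - F (s n N)) + (|s n 1| * F (s n 1) + δ n * F (s n 1))
          + 3 * (δ n * Mval n) := by
      rw [hST0, habel1]
      have huN : u N = 1 - Fv N := by show w N - Fv N = 1 - Fv N; rw [hwN]
      have hu1 : u 1 = -Fv 1 := by show w 1 - Fv 1 = -Fv 1; rw [hw1]; ring
      have h1 : |f N * u N| = |s n N| * (1 - F (s n N)) := by
        rw [huN, abs_mul]
        simp only [hf, hFv]
        rw [abs_abs, abs_of_nonneg (show (0:ℝ) ≤ 1 - F (s n N) by linarith [hF1 (s n N)])]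
      have h2 : |f 2 * u 1| ≤ |s n 1| * F (s n 1) + δ n * F (s n 1) := by
        rw [hu1, abs_mul]
        simp only [hf, hFv]
        rw [abs_neg, abs_abs, abs_of_nonneg (hF0 (s n 1))]
        have hs2 : |s n 2| ≤ |s n 1| + δ n := by
          rw [show (2:ℕ) = 1 + 1 from rfl, hgrid n 1 le_rfl (by omega)]
          calc |s n 1 + δ n| ≤ |s n 1| + |δ n| := abs_add_le _ _
          _ = |s n 1| + δ n := by rw [abs_of_pos (hδpos n)]
        calc |s n 2| * F (s n 1) ≤ (|s n 1| + δ n) * F (s n 1) :=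
            mul_le_mul_of_nonneg_right hs2 (hF0 _)
        _ = |s n 1| * F (s n 1) + δ n * F (s n 1) := by ring
      calc |f N * u N - f 2 * u 1 - ∑ k ∈ Finset.Icc 2 (N-1), (f (k+1) - f k) * u k|
          ≤ |f N * u N| + |f 2 * u 1| + |∑ k ∈ Finset.Icc 2 (N-1), b k * u k| := by
            have := abs_sub (f N * u N - f 2 * u 1) (∑ k ∈ Finset.Icc 2 (N-1), b k * u k)
            have h3 := abs_sub (f N * u N) (f 2 * u 1)
            rw [hb] at *
            simp only at *
            linarith
        _ ≤ |s n N| * (1 - F (s n N)) + (|s n 1| * F (s n 1) + δ n * F (s n 1))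
            + 3 * (δ n * Mval n) := by
            rw [h1]
            exact add_le_add (add_le_add le_rfl h2) hRbound
    -- T close to the integral
    have hTclose : |T n - ∫ t in Ioc (s n 1) (s n N), |t| ∂μ|
        ≤ δ n * (F (s n N) - F (s n 1)) :=
      riemann_close F hF0 hFmom N (by omega) (s n) (δ n) (hδpos n)
        (fun k hk1 hkN => hgrid n k hk1 hkN)
    have hsplitint : ∫ t, |t| ∂μ = (∫ t in Iic (s n 1), |t| ∂μ)
        + (∫ t in Ioc (s n 1) (s n N), |t| ∂μ) + (∫ t in Ioi (s n N), |t| ∂μ) := by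
      have hs1N : s n 1 ≤ s n N := hsmono n 1 N le_rfl (by omega) le_rfl
      have h1 : (∫ t in Iic (s n 1), |t| ∂μ) + (∫ t in Ioi (s n 1), |t| ∂μ)
          = ∫ t, |t| ∂μ := intervalIntegral.integral_Iic_add_Ioi hFmom.integrableOn hFmom.integrableOn
      have hun : Ioc (s n 1) (s n N) ∪ Ioi (s n N) = Ioi (s n 1) :=
        Set.Ioc_union_Ioi_eq_Ioi hs1N
      have h2 : ∫ t in Ioi (s n 1), |t| ∂μ = (∫ t in Ioc (s n 1) (s n N), |t| ∂μ)
          + (∫ t in Ioi (s n N), |t| ∂μ) := by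
        rw [← hun, setIntegral_union Set.Ioc_disjoint_Ioi_same measurableSet_Ioi
          hFmom.integrableOn hFmom.integrableOn]
      linarith
    -- combine
    have := abs_sub (S n - T n) (-(T n - ∫ t, |t| ∂μ))
    have htri : |S n - ∫ t, |t| ∂μ| ≤ |S n - T n| + |T n - ∫ t, |t| ∂μ| := by
      calc |S n - ∫ t, |t| ∂μ| = |(S n - T n) + (T n - ∫ t, |t| ∂μ)| := by ring_nf
      _ ≤ |S n - T n| + |T n - ∫ t, |t| ∂μ| := abs_add_le _ _
    have htri2 : |T n - ∫ t, |t| ∂μ| ≤ δ n * (F (s n N) - F (s n 1))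
        + (∫ t in Iic (s n 1), |t| ∂μ) + (∫ t in Ioi (s n N), |t| ∂μ) := by
      have hIic_nonneg : 0 ≤ ∫ t in Iic (s n 1), |t| ∂μ :=
        setIntegral_nonneg measurableSet_Iic (fun t _ => abs_nonneg t)
      have hIoi_nonneg : 0 ≤ ∫ t in Ioi (s n N), |t| ∂μ :=
        setIntegral_nonneg measurableSet_Ioi (fun t _ => abs_nonneg t)
      calc |T n - ∫ t, |t| ∂μ|
          = |(T n - ∫ t in Ioc (s n 1) (s n N), |t| ∂μ)
            - ((∫ t in Iic (s n 1), |t| ∂μ) + (∫ t in Ioi (s n N), |t| ∂μ))| := by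
            rw [hsplitint]; ring_nf
        _ ≤ |T n - ∫ t in Ioc (s n 1) (s n N), |t| ∂μ|
            + |(∫ t in Iic (s n 1), |t| ∂μ) + (∫ t in Ioi (s n N), |t| ∂μ)| := abs_sub _ _
        _ ≤ δ n * (F (s n N) - F (s n 1))
            + (∫ t in Iic (s n 1), |t| ∂μ) + (∫ t in Ioi (s n N), |t| ∂μ) := by
            have habs2 : |(∫ t in Iic (s n 1), |t| ∂μ) + (∫ t in Ioi (s n N), |t| ∂μ)|
                = (∫ t in Iic (s n 1), |t| ∂μ) + (∫ t in Ioi (s n N), |t| ∂μ) :=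
              abs_of_nonneg (by linarith)
            rw [habs2]
            linarith [hTclose]
    rw [hDfun]
    simp only
    rw [← hN]
    linarith [htri, htri2, hSTbound]
  -- limits
  have hDlim : Tendsto Dfun atTop (nhds 0) := by
    have l1 : Tendsto (fun n => δ n * (F (s n (m n)) - F (s n 1))) atTop (nhds 0) := by
      have := hδ0.mul (hU.sub hL)
      simpa using this
    have l2 : Tendsto (fun n => ∫ t in Iic (s n 1), |t| ∂μ) atTop (nhds 0) := by
      refine hFmom.tendsto_setIntegral_nhds_zero ?_
      have : ∀ n, μ (Iic (s n 1)) = ENNReal.ofReal (F (s n 1)) := by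
        intro n
        rw [hμdef, F.measure_Iic hFbot]
        norm_num
      simp only [Function.comp_def, this]
      have := ENNReal.tendsto_ofReal hL
      simpa using this
    have l3 : Tendsto (fun n => ∫ t in Ioi (s n (m n)), |t| ∂μ) atTop (nhds 0) := by
      refine hFmom.tendsto_setIntegral_nhds_zero ?_
      have hIoi : ∀ n, μ (Ioi (s n (m n))) = ENNReal.ofReal (1 - F (s n (m n))) := by
        intro n
        have h2 : Ioi (s n (m n)) = (Iic (s n (m n)))ᶜ := by simp
        rw [h2, measure_compl measurableSet_Iic (measure_ne_top μ _), hμdef,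
          F.measure_Iic hFbot]
        have h3 : μ Set.univ = 1 := measure_univ
        rw [hμdef] at h3
        rw [h3, sub_zero, ENNReal.ofReal_sub 1 (hF0 _)]
        norm_num
      simp only [Function.comp_def, hIoi]
      have h0 : Tendsto (fun n => 1 - F (s n (m n))) atTop (nhds 0) := by
        have := hU.const_sub 1
        simpa using this
      have := ENNReal.tendsto_ofReal h0
      simpa using this
    have l4 : Tendsto (fun n => |s n (m n)| * (1 - F (s n (m n)))) atTop (nhds 0) :=
      tail_top F hF01 hFbot hFtop hFmom (fun n => s n (m n)) hU
    have l5 : Tendsto (fun n => |s n 1| * F (s n 1) + δ n * F (s n 1)) atTop (nhds 0) := by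
      have l5a := tail_bot F hF0 hFbot hFtop hFmom (fun n => s n 1) hL
      have l5b : Tendsto (fun n => δ n * F (s n 1)) atTop (nhds 0) := by
        have := hδ0.mul hL
        simpa using this
      simpa using l5a.add l5b
    have l6 : Tendsto (fun n => 3 * (δ n * Mval n)) atTop (nhds 0) := by
      have := hδM.const_mul 3
      simpa using this
    have := ((((l1.add l2).add l3).add l4).add l5).add l6
    simpa using this
  rw [← tendsto_sub_nhds_zero_iff]
  refine squeeze_zero_norm (fun n => ?_) hDlim
  rw [Real.norm_eq_abs]
  exact key n

end Main
end

section
/- Let p be a continuous log-concave density on ℝ with p(s) ≤ e^{−α|s|+β} for all s, where α > 0. Let (p_n) be a sequence of log-concave densities such that ∫_ℝ e^{ε|s|} |p_n(s) − p(s)| ds → 0 for some ε ∈ [0, α). Then sup_{s∈ℝ} e^{ε|s|} |p_n(s) − p(s)| → 0. -/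
open MeasureTheory Filter Set

private lemma rpow_interp_min {a b t : ℝ} (ha : 0 ≤ a) (hb : 0 ≤ b)
    (ht0 : 0 ≤ t) (ht1 : t ≤ 1) : min a b ≤ a ^ t * b ^ (1 - t) := by
  have hm : (0:ℝ) ≤ min a b := le_min ha hb
  calc min a b = min a b ^ (t + (1 - t)) := by norm_num
    _ = min a b ^ t * min a b ^ (1 - t) := Real.rpow_add' hm (by norm_num)
    _ ≤ a ^ t * b ^ (1 - t) :=
        mul_le_mul (Real.rpow_le_rpow hm (min_le_left a b) ht0)
          (Real.rpow_le_rpow hm (min_le_right a b) (by linarith))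
          (Real.rpow_nonneg hm _) (Real.rpow_nonneg ha t)

private lemma exists_interp (s w z : ℝ) (hne : s ≠ w)
    (hz : z ∈ Icc (min s w) (max s w)) :
    ∃ t ∈ Icc (0:ℝ) 1, t * s + (1 - t) * w = z ∧ (1 - t) * |s - w| = |z - s| := by
  have hsw : s - w ≠ 0 := sub_ne_zero.mpr hne
  refine ⟨(z - w) / (s - w), ?_, ?_, ?_⟩
  · rcases lt_or_gt_of_ne hne with h | h
    · rw [min_eq_left h.le, max_eq_right h.le] at hz
      constructor
      · rw [div_nonneg_iff]; right; constructor <;> [linarith [hz.2]; linarith]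
      · rw [div_le_one_iff]; exact Or.inr (Or.inr ⟨by linarith, by linarith [hz.1]⟩)
    · rw [min_eq_right h.le, max_eq_left h.le] at hz
      constructor
      · apply div_nonneg <;> linarith [hz.1]
      · rw [div_le_one (by linarith : (0:ℝ) < s - w)]; linarith [hz.1, hz.2]
  · field_simp
    ring
  · have h1 : (1 - (z - w) / (s - w)) = (s - z) / (s - w) := by field_simp; try ring
    rw [h1]
    rcases lt_or_gt_of_ne hne with h | h
    · rw [min_eq_left h.le, max_eq_right h.le] at hz
      rw [abs_of_nonpos (by linarith : s - w ≤ 0), abs_of_nonneg (by linarith [hz.1] : 0 ≤ z - s)]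
      field_simp
      try ring
    · rw [min_eq_right h.le, max_eq_left h.le] at hz
      rw [abs_of_nonneg (by linarith : 0 ≤ s - w), abs_of_nonpos (by linarith [hz.2] : z - s ≤ 0)]
      field_simp
      try ring

set_option maxHeartbeats 1000000 in
/-- Cule–Samworth upgrade: if `p` is a continuous log-concave density with
`p s ≤ exp(−α|s|+β)`, `α > 0`, and `(pₙ)` are log-concave densities with
exponentially-weighted `L¹` convergence `∫ e^{ε|s|} |pₙ − p| → 0` for some
`ε ∈ [0, α)`, then `sup_s e^{ε|s|} |pₙ(s) − p(s)| → 0`. -/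
theorem logConcave_weighted_L1_to_uniform
    (p : ℝ → ℝ) (hc : Continuous p) (hmeas : Measurable p) (hnn : ∀ s, 0 ≤ p s)
    (hint : (∫ s, p s) = 1)
    (hlc : ∀ x y t : ℝ, t ∈ Set.Icc (0:ℝ) 1 →
      p x ^ t * p y ^ (1 - t) ≤ p (t * x + (1 - t) * y))
    (α β ε : ℝ) (hα : 0 < α)
    (hbd : ∀ s, p s ≤ Real.exp (-α * |s| + β))
    (hε0 : 0 ≤ ε) (hεα : ε < α)
    (pn : ℕ → ℝ → ℝ) (hpnn : ∀ n s, 0 ≤ pn n s) (hpmeas : ∀ n, Measurable (pn n))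
    (hpint : ∀ n, (∫ s, pn n s) = 1)
    (hpnlc : ∀ n, ∀ x y t : ℝ, t ∈ Set.Icc (0:ℝ) 1 →
      pn n x ^ t * pn n y ^ (1 - t) ≤ pn n (t * x + (1 - t) * y))
    (hL1 : Tendsto (fun n => ∫⁻ s, ENNReal.ofReal (Real.exp (ε * |s|) * |pn n s - p s|))
      atTop (nhds 0)) :
    ∀ η > (0:ℝ), ∀ᶠ n in atTop, ∀ s, Real.exp (ε * |s|) * |pn n s - p s| < η := by
  intro η hη
  -- a point where p is positive
  obtain ⟨x0, hx0⟩ : ∃ x0, 0 < p x0 := by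
    by_contra h
    push_neg at h
    have hz : p = fun _ => (0:ℝ) := funext fun x => le_antisymm (h x) (hnn x)
    rw [hz] at hint
    simp at hint
  obtain ⟨q0, hq0def⟩ : ∃ q0 : ℝ, q0 = p x0 / 2 := ⟨_, rfl⟩
  have hq0 : 0 < q0 := by rw [hq0def]; positivity
  -- a neighborhood where p ≥ q0
  obtain ⟨ρ0, hρ0, hball⟩ := Metric.continuousAt_iff.mp (hc.continuousAt (x := x0)) q0 hq0
  obtain ⟨ρ, hρdef⟩ : ∃ ρ : ℝ, ρ = ρ0 / 2 := ⟨_, rfl⟩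
  have hρ : 0 < ρ := by rw [hρdef]; positivity
  have hplow : ∀ y, |y - x0| ≤ ρ → q0 ≤ p y := by
    intro y hy
    have h1 : dist y x0 < ρ0 := by rw [Real.dist_eq]; rw [hρdef] at hy; linarith
    have h2 := hball h1
    rw [Real.dist_eq] at h2
    have h3 := (abs_lt.mp h2).1
    rw [hq0def]; linarith
  -- constants
  obtain ⟨c0, hc0def⟩ : ∃ c0 : ℝ, c0 = q0 / 2 := ⟨_, rfl⟩
  have hc0 : 0 < c0 := by rw [hc0def]; positivity
  obtain ⟨d, hddef⟩ : ∃ d : ℝ, d = ρ / 3 := ⟨_, rfl⟩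
  have hd : 0 < d := by rw [hddef]; positivity
  obtain ⟨Hmax, hHmaxdef⟩ : ∃ h : ℝ, h = max c0 (4 / (d ^ 2 * c0)) := ⟨_, rfl⟩
  have hHmaxc0 : c0 ≤ Hmax := hHmaxdef ▸ le_max_left _ _
  have hHmax0 : 0 < Hmax := lt_of_lt_of_le hc0 hHmaxc0
  obtain ⟨K, hKdef⟩ : ∃ k : ℝ, k = Real.log Hmax - Real.log c0 := ⟨_, rfl⟩
  have hK0 : 0 ≤ K := hKdef ▸ sub_nonneg.mpr (Real.log_le_log hc0 hHmaxc0)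
  obtain ⟨γ, hγdef⟩ : ∃ g : ℝ, g = min c0 (η / 2 * Real.exp (-ε)) / 2 := ⟨_, rfl⟩
  have hγ : 0 < γ := by
    have h1 : 0 < min c0 (η / 2 * Real.exp (-ε)) := lt_min hc0 (by positivity)
    rw [hγdef]; linarith
  have hγc0 : 2 * γ ≤ c0 := by
    have := min_le_left c0 (η / 2 * Real.exp (-ε)); rw [hγdef]; linarith
  have hγη : 2 * γ ≤ η / 2 * Real.exp (-ε) := by
    have := min_le_right c0 (η / 2 * Real.exp (-ε)); rw [hγdef]; linarith
  have hexpε1 : Real.exp (-ε) ≤ 1 := by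
    rw [← Real.exp_zero]; exact Real.exp_le_exp.mpr (by linarith)
  have hγη4 : γ ≤ η / 4 := by
    have h1 : η / 2 * Real.exp (-ε) ≤ η / 2 * 1 :=
      mul_le_mul_of_nonneg_left hexpε1 (by linarith)
    linarith
  obtain ⟨M, hMdef⟩ : ∃ m : ℝ, m = 2 + max (|x0| + ρ) ((β - Real.log γ) / (α - ε)) := ⟨_, rfl⟩
  have hMx : |x0| + ρ + 2 ≤ M := by
    have := le_max_left (|x0| + ρ) ((β - Real.log γ) / (α - ε)); rw [hMdef]; linarith
  have hM2 : 2 ≤ M := by linarith [abs_nonneg x0, hρ]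
  have hαε : 0 < α - ε := by linarith
  have hMtail : ∀ z : ℝ, M - 1 ≤ |z| → p z ≤ γ * Real.exp (-(ε * |z|)) := by
    intro z hz
    have h1 : (β - Real.log γ) / (α - ε) ≤ |z| := by
      have := le_max_right (|x0| + ρ) ((β - Real.log γ) / (α - ε))
      rw [hMdef] at hz; linarith
    have h2 : β - Real.log γ ≤ |z| * (α - ε) := (div_le_iff₀ hαε).mp h1
    calc p z ≤ Real.exp (-α * |z| + β) := hbd z
      _ ≤ Real.exp (Real.log γ + -(ε * |z|)) := by
            apply Real.exp_le_exp.mpr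
            have h3 : |z| * (α - ε) = |z| * α - |z| * ε := by ring
            have h4 : -α * |z| + β ≤ Real.log γ + -(ε * |z|) := by
              have h5 : β - Real.log γ ≤ |z| * α - |z| * ε := by linarith [h2, h3.symm.le]
              linarith [h5, (by ring : |z| * α = α * |z|), (by ring : |z| * ε = ε * |z|)]
            exact h4
      _ = γ * Real.exp (-(ε * |z|)) := by rw [Real.exp_add, Real.exp_log hγ]
  obtain ⟨η', hη'def⟩ : ∃ e : ℝ, e = η * Real.exp (-(ε * M)) := ⟨_, rfl⟩
  have hη' : 0 < η' := by rw [hη'def]; positivity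
  -- uniform continuity on a compact interval
  obtain ⟨δ0, hδ0, hδ0p⟩ := Metric.uniformContinuousOn_iff.mp
    ((isCompact_Icc (a := -(M + 1)) (b := M + 1)).uniformContinuousOn_of_continuous
      hc.continuousOn) (η' / 4) (by positivity)
  obtain ⟨δ, hδdef⟩ : ∃ dl : ℝ, dl = min (δ0 / 2) 1 := ⟨_, rfl⟩
  have hδpos : 0 < δ := hδdef ▸ lt_min (by positivity) one_pos
  have hδ1 : δ ≤ 1 := hδdef ▸ min_le_right _ _
  have hpδ : ∀ z w : ℝ, |z| ≤ M + 1 → |w| ≤ M + 1 → |z - w| ≤ δ → |p z - p w| ≤ η' / 4 := by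
    intro z w h1 h2 h3
    have hz : z ∈ Icc (-(M + 1)) (M + 1) := by
      have := abs_le.mp h1; exact ⟨this.1, this.2⟩
    have hw : w ∈ Icc (-(M + 1)) (M + 1) := by
      have := abs_le.mp h2; exact ⟨this.1, this.2⟩
    have hδhalf : δ ≤ δ0 / 2 := hδdef ▸ min_le_left _ _
    have := hδ0p z hz w hw (by rw [Real.dist_eq]; linarith)
    rw [Real.dist_eq] at this; linarith
  obtain ⟨r0, hr0def⟩ : ∃ r : ℝ, r = min δ (min d (η' / 4 * d / (Hmax * K + 1))) := ⟨_, rfl⟩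
  have hBnn : 0 ≤ Hmax * K := mul_nonneg hHmax0.le hK0
  have hr0 : 0 < r0 := hr0def ▸ lt_min hδpos (lt_min hd (by positivity))
  have hr0δ : r0 ≤ δ := hr0def ▸ min_le_left _ _
  have hr0d : r0 ≤ d := hr0def ▸ le_trans (min_le_right _ _) (min_le_left _ _)
  have hr0K : r0 ≤ η' / 4 * d / (Hmax * K + 1) :=
    hr0def ▸ le_trans (min_le_right _ _) (min_le_right _ _)
  obtain ⟨θ, hθdef⟩ : ∃ t : ℝ,
      t = min (min γ (q0 * ρ / 6)) (min (3 * η' / 4 * δ) (η' / 2 * r0)) := ⟨_, rfl⟩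
  have hθ : 0 < θ := hθdef ▸
    lt_min (lt_min hγ (by positivity)) (lt_min (by positivity) (by positivity))
  have hθγ : θ ≤ γ := hθdef ▸ le_trans (min_le_left _ _) (min_le_left _ _)
  have hθq : θ ≤ q0 * ρ / 6 := hθdef ▸ le_trans (min_le_left _ _) (min_le_right _ _)
  have hθdip : θ ≤ 3 * η' / 4 * δ := hθdef ▸ le_trans (min_le_right _ _) (min_le_left _ _)
  have hθspike : θ ≤ η' / 2 * r0 := hθdef ▸ le_trans (min_le_right _ _) (min_le_right _ _)
  -- eventually, the weighted L¹ distance is small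
  have hev := ENNReal.tendsto_nhds_zero.mp hL1 (ENNReal.ofReal (θ / 2))
    (ENNReal.ofReal_pos.mpr (by positivity))
  filter_upwards [hev] with n hn
  intro s0
  by_contra hcon
  push_neg at hcon
  have hWn : (∫⁻ z, ENNReal.ofReal (Real.exp (ε * |z|) * |pn n z - p z|)) < ENNReal.ofReal θ :=
    lt_of_le_of_lt hn ((ENNReal.ofReal_lt_ofReal_iff hθ).mpr (by linarith))
  -- integrability
  have hip : Integrable p := by
    by_contra h; rw [integral_undef h] at hint; norm_num at hint
  have hipn : Integrable (pn n) := by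
    have h1 := hpint n
    by_contra h; rw [integral_undef h] at h1; norm_num at h1
  have habs : Integrable (fun z => |pn n z - p z|) := (hipn.sub hip).abs
  -- L¹ smallness on any measurable set
  have hsmall : ∀ I : Set ℝ, MeasurableSet I → (∫ z in I, |pn n z - p z|) < θ := by
    intro I hI
    have h1 : ENNReal.ofReal (∫ z in I, |pn n z - p z|)
        = ∫⁻ z in I, ENNReal.ofReal |pn n z - p z| :=
      ofReal_integral_eq_lintegral_ofReal habs.integrableOn
        (Filter.Eventually.of_forall fun z => abs_nonneg _)
    have h2 : (∫⁻ z in I, ENNReal.ofReal |pn n z - p z|)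
        ≤ ∫⁻ z in I, ENNReal.ofReal (Real.exp (ε * |z|) * |pn n z - p z|) :=
      lintegral_mono fun z => ENNReal.ofReal_le_ofReal
        (le_mul_of_one_le_left (abs_nonneg _)
          (Real.one_le_exp (mul_nonneg hε0 (abs_nonneg z))))
    have h3 := setLIntegral_le_lintegral (μ := volume) I
      (fun z => ENNReal.ofReal (Real.exp (ε * |z|) * |pn n z - p z|))
    have h4 : ENNReal.ofReal (∫ z in I, |pn n z - p z|) < ENNReal.ofReal θ := by
      rw [h1]; exact lt_of_le_of_lt (le_trans h2 h3) hWn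
    exact (ENNReal.ofReal_lt_ofReal_iff hθ).mp h4
  -- lower bound machine for the weighted L¹ distance
  have hWlb : ∀ a b c : ℝ, a ≤ b → 0 ≤ c →
      (∀ z ∈ Ioc a b, c ≤ Real.exp (ε * |z|) * |pn n z - p z|) →
      ENNReal.ofReal (c * (b - a)) ≤ ∫⁻ z, ENNReal.ofReal (Real.exp (ε * |z|) * |pn n z - p z|) := by
    intro a b c hab hcnn h
    have h1 : ENNReal.ofReal (c * (b - a)) = ENNReal.ofReal c * volume (Ioc a b) := by
      rw [Real.volume_Ioc, ENNReal.ofReal_mul hcnn]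
    rw [h1]
    calc ENNReal.ofReal c * volume (Ioc a b)
        = ∫⁻ _ in Ioc a b, ENNReal.ofReal c := (setLIntegral_const _ _).symm
      _ ≤ ∫⁻ z in Ioc a b, ENNReal.ofReal (Real.exp (ε * |z|) * |pn n z - p z|) :=
          setLIntegral_mono' measurableSet_Ioc fun z hz => ENNReal.ofReal_le_ofReal (h z hz)
      _ ≤ _ := setLIntegral_le_lintegral (μ := volume) _ _
  -- find points with mass
  have hfind : ∀ a : ℝ, Icc a (a + 2 * ρ / 3) ⊆ Icc (x0 - ρ) (x0 + ρ) →
      ∃ u ∈ Icc a (a + 2 * ρ / 3), c0 ≤ pn n u := by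
    intro a hsub
    by_contra hno
    push_neg at hno
    have hvol : volume (Icc a (a + 2 * ρ / 3)) = ENNReal.ofReal (2 * ρ / 3) := by
      rw [Real.volume_Icc]; ring_nf
    have hmp : q0 * (2 * ρ / 3) ≤ ∫ z in Icc a (a + 2 * ρ / 3), p z := by
      have h1 := setIntegral_ge_of_const_le_real (μ := volume) measurableSet_Icc
        (by rw [hvol]; exact ENNReal.ofReal_ne_top)
        (fun x hx => by
          have h2 := hsub hx
          exact hplow x (abs_le.mpr ⟨by linarith [h2.1], by linarith [h2.2]⟩))
        hip.integrableOn
      rwa [measureReal_def, hvol, ENNReal.toReal_ofReal (by positivity)] at h1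
    have hmn : (∫ z in Icc a (a + 2 * ρ / 3), pn n z) ≤ 2 * ρ / 3 * c0 := by
      have h1 : (∫ z in Icc a (a + 2 * ρ / 3), pn n z) ≤ ∫ _ in Icc a (a + 2 * ρ / 3), c0 :=
        setIntegral_mono_on hipn.integrableOn ((integrableOn_const_iff (C := c0)).mpr (Or.inr (by
          rw [hvol]; exact ENNReal.ofReal_lt_top))) measurableSet_Icc
          fun x hx => (hno x hx).le
      rwa [setIntegral_const, measureReal_def, hvol, ENNReal.toReal_ofReal (by positivity), smul_eq_mul] at h1
    have hsm := hsmall (Icc a (a + 2 * ρ / 3)) measurableSet_Icc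
    have hdiffI : |∫ z in Icc a (a + 2 * ρ / 3), (pn n z - p z)|
        ≤ ∫ z in Icc a (a + 2 * ρ / 3), |pn n z - p z| := by
      have := norm_integral_le_integral_norm (μ := volume.restrict (Icc a (a + 2 * ρ / 3)))
        (fun z => pn n z - p z)
      simpa [Real.norm_eq_abs] using this
    have hsplit : (∫ z in Icc a (a + 2 * ρ / 3), (pn n z - p z))
        = (∫ z in Icc a (a + 2 * ρ / 3), pn n z) - ∫ z in Icc a (a + 2 * ρ / 3), p z :=
      integral_sub hipn.integrableOn hip.integrableOn
    have hlo := neg_abs_le (∫ z in Icc a (a + 2 * ρ / 3), (pn n z - p z))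
    rw [hc0def] at hmn
    linarith [mul_pos hq0 hρ]
  -- pointwise consequence of hcon
  have hdiffs : η * Real.exp (-(ε * |s0|)) ≤ |pn n s0 - p s0| := by
    have h0 := mul_le_mul_of_nonneg_left hcon (Real.exp_pos (-(ε * |s0|))).le
    rw [← mul_assoc, ← Real.exp_add] at h0
    norm_num at h0
    calc η * Real.exp (-(ε * |s0|)) = Real.exp (-(ε * |s0|)) * η := mul_comm _ _
      _ ≤ |pn n s0 - p s0| := h0
  -- anchor points
  obtain ⟨u, hu_mem, hu⟩ := hfind (x0 - ρ) (by
    intro x hx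
    simp only [mem_Icc] at *
    constructor <;> linarith [hx.1, hx.2, hρ])
  obtain ⟨v, hv_mem, hv⟩ := hfind (x0 + ρ / 3) (by
    intro x hx
    simp only [mem_Icc] at *
    constructor <;> linarith [hx.1, hx.2, hρ])
  simp only [mem_Icc] at hu_mem hv_mem
  have huB : |u| ≤ |x0| + ρ := abs_le.mpr
    ⟨by linarith [neg_abs_le x0, hu_mem.1], by linarith [le_abs_self x0, hu_mem.2]⟩
  have hvB : |v| ≤ |x0| + ρ := abs_le.mpr
    ⟨by linarith [neg_abs_le x0, hv_mem.1], by linarith [le_abs_self x0, hv_mem.2]⟩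
  -- the two main regimes
  rcases le_or_gt M |s0| with hMs | hMs
  · -- tail regime
    have hps : p s0 ≤ η / 4 * Real.exp (-(ε * |s0|)) := by
      have h1 := hMtail s0 (by linarith)
      have h2 : γ * Real.exp (-(ε * |s0|)) ≤ η / 4 * Real.exp (-(ε * |s0|)) :=
        mul_le_mul_of_nonneg_right hγη4 (Real.exp_pos _).le
      linarith
    have habs_le : |pn n s0 - p s0| ≤ pn n s0 + p s0 := by
      calc |pn n s0 - p s0| = |pn n s0 + -(p s0)| := by ring_nf
        _ ≤ |pn n s0| + |(-(p s0))| := abs_add_le _ _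
        _ = pn n s0 + p s0 := by
            rw [abs_neg, abs_of_nonneg (hpnn n s0), abs_of_nonneg (hnn s0)]
    have hpns : η / 2 * Real.exp (-(ε * |s0|)) ≤ pn n s0 := by
      linarith [mul_pos hη (Real.exp_pos (-(ε * |s0|)))]
    -- pointwise weighted lower bound at suitable z
    have hkey : ∀ z : ℝ, M - 1 ≤ |z| → |s0| - 1 ≤ |z| → min (pn n s0) c0 ≤ pn n z →
        γ ≤ Real.exp (ε * |z|) * |pn n z - p z| := by
      intro z hz1 hz2 hzq
      have hpz : p z ≤ γ * Real.exp (-(ε * |z|)) := hMtail z hz1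
      have hwexp : Real.exp (ε * z * 0)  = 1 := by simp
      have h1exp : (1:ℝ) ≤ Real.exp (ε * |z|) := Real.one_le_exp (mul_nonneg hε0 (abs_nonneg z))
      have h2γ : 2 * γ ≤ Real.exp (ε * |z|) * pn n z := by
        rcases le_total c0 (η / 2 * Real.exp (-(ε * |s0|))) with hcc | hcc
        · have hzc : c0 ≤ pn n z := le_trans (le_min (by linarith) le_rfl) hzq
          calc 2 * γ ≤ c0 := hγc0
            _ = 1 * c0 := (one_mul c0).symm
            _ ≤ Real.exp (ε * |z|) * pn n z :=
                mul_le_mul h1exp hzc hc0.le (Real.exp_nonneg _)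
        · have hzc : η / 2 * Real.exp (-(ε * |s0|)) ≤ pn n z :=
            le_trans (le_min hpns hcc) hzq
          have hee : Real.exp (ε * (|s0| - 1)) ≤ Real.exp (ε * |z|) :=
            Real.exp_le_exp.mpr (mul_le_mul_of_nonneg_left hz2 hε0)
          have heq : Real.exp (ε * (|s0| - 1)) * (η / 2 * Real.exp (-(ε * |s0|)))
              = η / 2 * Real.exp (-ε) := by
            rw [mul_comm (η / 2) (Real.exp (-(ε * |s0|))), ← mul_assoc, ← Real.exp_add]
            ring_nf
          calc 2 * γ ≤ η / 2 * Real.exp (-ε) := hγη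
            _ = Real.exp (ε * (|s0| - 1)) * (η / 2 * Real.exp (-(ε * |s0|))) := heq.symm
            _ ≤ Real.exp (ε * |z|) * pn n z := by
                apply mul_le_mul hee hzc (by positivity) (Real.exp_nonneg _)
      have h3 : Real.exp (ε * |z|) * p z ≤ γ := by
        have hc2 : Real.exp (ε * |z|) * (γ * Real.exp (-(ε * |z|))) = γ := by
          rw [mul_comm γ, ← mul_assoc, ← Real.exp_add]
          simp
        calc Real.exp (ε * |z|) * p z ≤ Real.exp (ε * |z|) * (γ * Real.exp (-(ε * |z|))) :=
              mul_le_mul_of_nonneg_left hpz (Real.exp_nonneg _)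
          _ = γ := hc2
      have h4 : pn n z - p z ≤ |pn n z - p z| := le_abs_self _
      have h5 := mul_le_mul_of_nonneg_left h4 (Real.exp_nonneg (ε * |z|))
      rw [mul_sub] at h5
      linarith
    rcases le_or_gt 0 s0 with hs0 | hs0
    · -- s0 ≥ M
      have hsabs : |s0| = s0 := abs_of_nonneg hs0
      have hsM : M ≤ s0 := by rwa [hsabs] at hMs
      have huls : u < s0 := by
        have h1 : x0 ≤ |x0| := le_abs_self x0
        linarith [hu_mem.2]
      have key2 : ∀ z ∈ Ioc (s0 - 1) s0, γ ≤ Real.exp (ε * |z|) * |pn n z - p z| := by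
        intro z hz
        obtain ⟨hz1, hz2⟩ := hz
        have hz0 : 0 ≤ z := by linarith
        have hzabs : |z| = z := abs_of_nonneg hz0
        have hult : u < z := by
          have h1 : x0 ≤ |x0| := le_abs_self x0
          linarith [hu_mem.2]
        have hne : s0 ≠ u := by intro h; rw [h] at huls; exact lt_irrefl u huls
        have hzmem : z ∈ Icc (min s0 u) (max s0 u) := by
          rw [min_eq_right huls.le, max_eq_left huls.le]
          exact ⟨hult.le, hz2⟩
        obtain ⟨t, ht, hzt, -⟩ := exists_interp s0 u z hne hzmem
        have hq1 : min (pn n s0) (pn n u) ≤ pn n z := by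
          have h1 := hpnlc n s0 u t ht
          rw [hzt] at h1
          exact le_trans (rpow_interp_min (hpnn n s0) (hpnn n u) ht.1 ht.2) h1
        apply hkey z (by rw [hzabs]; linarith) (by rw [hzabs, hsabs]; linarith)
        exact le_trans (min_le_min le_rfl hu) hq1
      have hW := hWlb (s0 - 1) s0 γ (by linarith) hγ.le key2
      rw [show s0 - (s0 - 1) = 1 by ring, mul_one] at hW
      exact absurd hWn (not_lt.mpr (le_trans (ENNReal.ofReal_le_ofReal hθγ) hW))
    · -- s0 ≤ -M
      have hsabs : |s0| = -s0 := abs_of_neg hs0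
      have hsM : s0 ≤ -M := by rw [hsabs] at hMs; linarith
      have hvgs : s0 < v := by
        have h1 : -|x0| ≤ x0 := neg_abs_le x0
        linarith [hv_mem.1]
      have key2 : ∀ z ∈ Ioc s0 (s0 + 1), γ ≤ Real.exp (ε * |z|) * |pn n z - p z| := by
        intro z hz
        obtain ⟨hz1, hz2⟩ := hz
        have hz0 : z ≤ 0 := by linarith
        have hzabs : |z| = -z := abs_of_nonpos hz0
        have hvlt : z < v := by
          have h1 : -|x0| ≤ x0 := neg_abs_le x0
          linarith [hv_mem.1]
        have hne : s0 ≠ v := by intro h; rw [h] at hvgs; exact lt_irrefl v hvgs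
        have hzmem : z ∈ Icc (min s0 v) (max s0 v) := by
          rw [min_eq_left hvgs.le, max_eq_right hvgs.le]
          exact ⟨hz1.le, hvlt.le⟩
        obtain ⟨t, ht, hzt, -⟩ := exists_interp s0 v z hne hzmem
        have hq1 : min (pn n s0) (pn n v) ≤ pn n z := by
          have h1 := hpnlc n s0 v t ht
          rw [hzt] at h1
          exact le_trans (rpow_interp_min (hpnn n s0) (hpnn n v) ht.1 ht.2) h1
        apply hkey z (by rw [hzabs]; linarith) (by rw [hzabs, hsabs]; linarith)
        exact le_trans (min_le_min le_rfl hv) hq1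
      have hW := hWlb s0 (s0 + 1) γ (by linarith) hγ.le key2
      rw [show s0 + 1 - s0 = 1 by ring, mul_one] at hW
      exact absurd hWn (not_lt.mpr (le_trans (ENNReal.ofReal_le_ofReal hθγ) hW))
  · -- compact regime
    have hs0M : |s0| ≤ M := hMs.le
    have hη'le : η' ≤ |pn n s0 - p s0| := by
      have h1 : Real.exp (-(ε * M)) ≤ Real.exp (-(ε * |s0|)) := by
        apply Real.exp_le_exp.mpr
        have := mul_le_mul_of_nonneg_left hs0M hε0
        linarith
      calc η' = η * Real.exp (-(ε * M)) := hη'def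
        _ ≤ η * Real.exp (-(ε * |s0|)) := mul_le_mul_of_nonneg_left h1 hη.le
        _ ≤ |pn n s0 - p s0| := hdiffs
    rcases le_total (pn n s0) (p s0) with hcase | hcase
    · -- dip below the limit density
      have hdip : η' ≤ p s0 - pn n s0 := by
        rw [abs_of_nonpos (by linarith : pn n s0 - p s0 ≤ 0)] at hη'le; linarith
      have hside : (∀ x, x < s0 → pn n x ≤ pn n s0) ∨ (∀ y, s0 < y → pn n y ≤ pn n s0) := by
        by_contra hno
        push_neg at hno
        obtain ⟨⟨x, hx, hpx⟩, ⟨y, hy, hpy⟩⟩ := hno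
        have hne : x ≠ y := by intro h; rw [h] at hx; linarith
        have hmem : s0 ∈ Icc (min x y) (max x y) := by
          rw [min_eq_left (by linarith : x ≤ y), max_eq_right (by linarith : x ≤ y)]
          exact ⟨hx.le, hy.le⟩
        obtain ⟨t, ht, hst, -⟩ := exists_interp x y s0 hne hmem
        have h1 := hpnlc n x y t ht
        rw [hst] at h1
        have h2 := le_trans (rpow_interp_min (hpnn n x) (hpnn n y) ht.1 ht.2) h1
        have h3 : pn n s0 < min (pn n x) (pn n y) := lt_min hpx hpy
        linarith
      have hgen : ∀ a b : ℝ, a ≤ b → b - a = δ → (∀ x ∈ Ioc a b, pn n x ≤ pn n s0) →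
          (∀ x ∈ Ioc a b, |x - s0| ≤ δ) → False := by
        intro a b hab hba hlex habsx
        have key2 : ∀ x ∈ Ioc a b, 3 * η' / 4 ≤ Real.exp (ε * |x|) * |pn n x - p x| := by
          intro x hx
          have hxd := habsx x hx
          have hxM : |x| ≤ M + 1 := by
            have := abs_sub_abs_le_abs_sub x s0
            linarith [hs0M]
          have hpx := hpδ x s0 hxM (by linarith) hxd
          have h1 : p s0 - η' / 4 ≤ p x := by linarith [(abs_le.mp hpx).1]
          have h2 : pn n x ≤ p s0 - η' := by linarith [hlex x hx]
          have h3 : 3 * η' / 4 ≤ p x - pn n x := by linarith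
          have h4 : p x - pn n x ≤ |pn n x - p x| := (le_abs_self _).trans_eq (abs_sub_comm _ _)
          calc 3 * η' / 4 ≤ |pn n x - p x| := by linarith
            _ ≤ Real.exp (ε * |x|) * |pn n x - p x| :=
                le_mul_of_one_le_left (abs_nonneg _)
                  (Real.one_le_exp (mul_nonneg hε0 (abs_nonneg x)))
        have hW := hWlb a b (3 * η' / 4) hab (by positivity) key2
        rw [hba] at hW
        exact absurd hWn (not_lt.mpr (le_trans (ENNReal.ofReal_le_ofReal hθdip) hW))
      rcases hside with hL | hR
      · apply hgen (s0 - δ) s0 (by linarith) (by ring)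
        · intro x hx
          rcases eq_or_lt_of_le hx.2 with h | h
          · rw [h]
          · exact hL x h
        · intro x hx
          exact abs_le.mpr ⟨by linarith [hx.1], by linarith [hx.2, hδpos]⟩
      · apply hgen s0 (s0 + δ) (by linarith) (by ring)
        · intro y hy
          exact hR y hy.1
        · intro y hy
          exact abs_le.mpr ⟨by linarith [hy.1, hδpos], by linarith [hy.2]⟩
    · -- spike above the limit density
      have hspv : η' ≤ pn n s0 - p s0 := by
        rw [abs_of_nonneg (by linarith : 0 ≤ pn n s0 - p s0)] at hη'le; linarith
      have hw : ∃ w0, c0 ≤ pn n w0 ∧ d ≤ |s0 - w0| ∧ |w0| ≤ |x0| + ρ := by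
        rcases le_or_gt d |s0 - u| with h | h
        · exact ⟨u, hu, h, huB⟩
        · refine ⟨v, hv, ?_, hvB⟩
          have hd3 : d = ρ / 3 := hddef
          have h1 : 2 * d ≤ v - u := by linarith [hu_mem.2, hv_mem.1]
          have h2 := abs_lt.mp h
          have h3 : d ≤ v - s0 := by linarith
          calc d ≤ v - s0 := h3
            _ ≤ |v - s0| := le_abs_self _
            _ = |s0 - v| := abs_sub_comm _ _
      obtain ⟨w0, hw0c, hw0d, hw0M⟩ := hw
      have hne : s0 ≠ w0 := by
        intro h; rw [h] at hw0d; simp at hw0d; linarith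
      have hH0 : 0 < pn n s0 := by linarith [hnn s0]
      have hseg : ∀ r : ℝ, 0 < r → r ≤ d → ∃ aa : ℝ,
          ∀ z ∈ Ioc aa (aa + r), z ∈ Icc (min s0 w0) (max s0 w0) ∧ |z - s0| ≤ r := by
        intro r hr hrd
        rcases lt_or_gt_of_ne hne with h | h
        · refine ⟨s0, fun z hz => ?_⟩
          have hdw : d ≤ w0 - s0 := by
            rw [abs_sub_comm, abs_of_nonneg (by linarith : (0:ℝ) ≤ w0 - s0)] at hw0d
            exact hw0d
          constructor
          · rw [min_eq_left h.le, max_eq_right h.le]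
            exact ⟨hz.1.le, by linarith [hz.2]⟩
          · rw [abs_of_nonneg (by linarith [hz.1] : (0:ℝ) ≤ z - s0)]; linarith [hz.2]
        · refine ⟨s0 - r, fun z hz => ?_⟩
          have hdw : d ≤ s0 - w0 := by
            rw [abs_of_nonneg (by linarith : (0:ℝ) ≤ s0 - w0)] at hw0d
            exact hw0d
          have hz2 : z ≤ s0 := by have := hz.2; linarith
          constructor
          · rw [min_eq_right h.le, max_eq_left h.le]
            exact ⟨by linarith [hz.1], hz2⟩
          · rw [abs_of_nonpos (by linarith : z - s0 ≤ 0)]; linarith [hz.1]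
      have hHle : pn n s0 ≤ Hmax := by
        by_contra hbig
        push_neg at hbig
        rw [hHmaxdef] at hbig
        obtain ⟨hc0H, h4H⟩ := max_lt_iff.mp hbig
        obtain ⟨aa, haa⟩ := hseg (d / 2) (by positivity) (by linarith)
        have hsq : 2 / d < Real.sqrt (pn n s0 * c0) := by
          have h1 : Real.sqrt (4 / d ^ 2) = 2 / d := by
            rw [show (4:ℝ) / d ^ 2 = (2 / d) ^ 2 by rw [div_pow]; norm_num,
              Real.sqrt_sq (by positivity)]
          rw [← h1]
          apply Real.sqrt_lt_sqrt (by positivity)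
          rw [div_lt_iff₀ (by positivity)] at h4H
          rw [div_lt_iff₀ (by positivity : (0:ℝ) < d ^ 2)]
          calc (4:ℝ) < pn n s0 * (d ^ 2 * c0) := h4H
            _ = pn n s0 * c0 * d ^ 2 := by ring
        have hmass : ∀ z ∈ Ioc aa (aa + d / 2), Real.sqrt (pn n s0 * c0) ≤ pn n z := by
          intro z hz
          obtain ⟨hzm, hzr⟩ := haa z hz
          obtain ⟨t, ht, hzt, hts⟩ := exists_interp s0 w0 z hne hzm
          have h1t : 1 / 2 ≤ t := by
            have h2 : (1 - t) * d ≤ (1 - t) * |s0 - w0| :=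
              mul_le_mul_of_nonneg_left hw0d (by linarith [ht.2])
            rw [hts] at h2
            have h2' : (1 - t) * d ≤ (1 / 2) * d := by linarith [hzr]
            have := le_of_mul_le_mul_right h2' hd
            linarith
          have hq := hpnlc n s0 w0 t ht
          rw [hzt] at hq
          have hwq : c0 ^ (1 - t) ≤ pn n w0 ^ (1 - t) :=
            Real.rpow_le_rpow hc0.le hw0c (by linarith [ht.2])
          have hA : pn n s0 ^ t * c0 ^ (1 - t) ≤ pn n s0 ^ t * pn n w0 ^ (1 - t) :=
            mul_le_mul_of_nonneg_left hwq (Real.rpow_nonneg hH0.le t)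
          have hsqle : Real.sqrt (pn n s0 * c0) ≤ pn n s0 ^ t * c0 ^ (1 - t) := by
            rw [Real.sqrt_mul hH0.le, Real.sqrt_eq_rpow, Real.sqrt_eq_rpow]
            have e1 : pn n s0 ^ t = pn n s0 ^ (1/2 : ℝ) * pn n s0 ^ (t - 1/2) := by
              rw [← Real.rpow_add hH0]; ring_nf
            have e2 : c0 ^ (1 - t) = c0 ^ (1/2 : ℝ) * c0 ^ (1/2 - t) := by
              rw [← Real.rpow_add hc0]; ring_nf
            have e3 : (1:ℝ) ≤ pn n s0 ^ (t - 1/2) * c0 ^ (1/2 - t) := by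
              have e4 : c0 ^ (t - 1/2) ≤ pn n s0 ^ (t - 1/2) :=
                Real.rpow_le_rpow hc0.le hc0H.le (by linarith)
              have e5 : c0 ^ (t - 1/2) * c0 ^ (1/2 - t) = 1 := by
                rw [← Real.rpow_add hc0]; norm_num
              have e6 : 0 ≤ c0 ^ (1/2 - t) := Real.rpow_nonneg hc0.le _
              have e7 := mul_le_mul_of_nonneg_right e4 e6
              rw [e5] at e7
              exact e7
            have e7 : (pn n s0 ^ (1/2:ℝ) * c0 ^ (1/2:ℝ)) * 1
                ≤ (pn n s0 ^ (1/2:ℝ) * c0 ^ (1/2:ℝ))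
                  * (pn n s0 ^ (t - 1/2) * c0 ^ (1/2 - t)) :=
              mul_le_mul_of_nonneg_left e3
                (mul_nonneg (Real.rpow_nonneg hH0.le _) (Real.rpow_nonneg hc0.le _))
            calc pn n s0 ^ (1/2:ℝ) * c0 ^ (1/2:ℝ)
                = (pn n s0 ^ (1/2:ℝ) * c0 ^ (1/2:ℝ)) * 1 := (mul_one _).symm
              _ ≤ (pn n s0 ^ (1/2:ℝ) * c0 ^ (1/2:ℝ))
                  * (pn n s0 ^ (t - 1/2) * c0 ^ (1/2 - t)) := e7
              _ = pn n s0 ^ t * c0 ^ (1 - t) := by rw [e1, e2]; ring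
          exact le_trans hsqle (le_trans hA hq)
        have hvol2 : volume (Ioc aa (aa + d / 2)) = ENNReal.ofReal (d / 2) := by
          rw [Real.volume_Ioc]; ring_nf
        have hint1 : Real.sqrt (pn n s0 * c0) * (d / 2) ≤ ∫ z in Ioc aa (aa + d / 2), pn n z := by
          have h1 := setIntegral_ge_of_const_le_real (μ := volume) measurableSet_Ioc
            (by rw [hvol2]; exact ENNReal.ofReal_ne_top) hmass hipn.integrableOn
          rwa [measureReal_def, hvol2, ENNReal.toReal_ofReal (by positivity)] at h1
        have hint2 : (∫ z in Ioc aa (aa + d / 2), pn n z) ≤ 1 := by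
          calc (∫ z in Ioc aa (aa + d / 2), pn n z) ≤ ∫ z, pn n z :=
              setIntegral_le_integral hipn (Filter.Eventually.of_forall (hpnn n))
            _ = 1 := hpint n
        have hgt : (1:ℝ) < Real.sqrt (pn n s0 * c0) * (d / 2) := by
          have h1 : (2 / d) * (d / 2) = 1 := by field_simp
          have h2 := mul_lt_mul_of_pos_right hsq (by positivity : (0:ℝ) < d / 2)
          rw [h1] at h2
          exact h2
        linarith
      have hKlog : Real.log (pn n s0) - Real.log c0 ≤ K := by
        rw [hKdef]
        have := Real.log_le_log hH0 hHle
        linarith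
      obtain ⟨aa, haa⟩ := hseg r0 hr0 hr0d
      have key2 : ∀ z ∈ Ioc aa (aa + r0), η' / 2 ≤ Real.exp (ε * |z|) * |pn n z - p z| := by
        intro z hz
        obtain ⟨hzm, hzr⟩ := haa z hz
        obtain ⟨t, ht, hzt, hts⟩ := exists_interp s0 w0 z hne hzm
        have h1t : 1 - t ≤ r0 / d := by
          have h2 : (1 - t) * d ≤ (1 - t) * |s0 - w0| :=
            mul_le_mul_of_nonneg_left hw0d (by linarith [ht.2])
          rw [hts] at h2
          rw [le_div_iff₀ hd]
          linarith [hzr]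
        have hq := hpnlc n s0 w0 t ht
        rw [hzt] at hq
        have hwq : c0 ^ (1 - t) ≤ pn n w0 ^ (1 - t) :=
          Real.rpow_le_rpow hc0.le hw0c (by linarith [ht.2])
        have hA : pn n s0 ^ t * c0 ^ (1 - t) ≤ pn n s0 ^ t * pn n w0 ^ (1 - t) :=
          mul_le_mul_of_nonneg_left hwq (Real.rpow_nonneg hH0.le t)
        have heq : pn n s0 ^ t * c0 ^ (1 - t)
            = pn n s0 * Real.exp ((1 - t) * (Real.log c0 - Real.log (pn n s0))) := by
          have hfac : pn n s0 * Real.exp ((1 - t) * (Real.log c0 - Real.log (pn n s0)))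
              = Real.exp (Real.log (pn n s0) + (1 - t) * (Real.log c0 - Real.log (pn n s0))) := by
            rw [Real.exp_add, Real.exp_log hH0]
          rw [Real.rpow_def_of_pos hH0, Real.rpow_def_of_pos hc0, ← Real.exp_add, hfac]
          congr 1
          ring
        have hexp1 : 1 + (1 - t) * (Real.log c0 - Real.log (pn n s0))
            ≤ Real.exp ((1 - t) * (Real.log c0 - Real.log (pn n s0))) := by
          linarith [Real.add_one_le_exp ((1 - t) * (Real.log c0 - Real.log (pn n s0)))]
        have hprod : pn n s0 * ((1 - t) * (Real.log (pn n s0) - Real.log c0)) ≤ η' / 4 := by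
          rcases le_or_gt (Real.log (pn n s0) - Real.log c0) 0 with hneg | hpos
          · have h1 : pn n s0 * ((1 - t) * (Real.log (pn n s0) - Real.log c0)) ≤ 0 :=
              mul_nonpos_of_nonneg_of_nonpos hH0.le
                (mul_nonpos_of_nonneg_of_nonpos (by linarith [ht.2]) hneg)
            linarith
          · have h1 : pn n s0 * ((1 - t) * (Real.log (pn n s0) - Real.log c0))
                ≤ Hmax * (r0 / d * K) := by
              apply mul_le_mul hHle ?_ ?_ hHmax0.le
              · exact mul_le_mul h1t hKlog hpos.le (by positivity)
              · exact mul_nonneg (by linarith [ht.2]) hpos.le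
            have h3 : Hmax * K * r0 ≤ Hmax * K * (η' / 4 * d / (Hmax * K + 1)) :=
              mul_le_mul_of_nonneg_left hr0K hBnn
            have h4 : Hmax * K * (η' / 4 * d / (Hmax * K + 1)) ≤ η' / 4 * d := by
              have h5 : Hmax * K * (η' / 4 * d / (Hmax * K + 1))
                  = (η' / 4 * d) * (Hmax * K / (Hmax * K + 1)) := by ring
              have h6 : Hmax * K / (Hmax * K + 1) ≤ 1 := by
                rw [div_le_one (by positivity)]; linarith
              rw [h5]
              exact mul_le_of_le_one_right (by positivity) h6
            have h7 : Hmax * (r0 / d * K) = Hmax * K * r0 / d := by ring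
            have h8 : Hmax * K * r0 / d ≤ η' / 4 := by
              rw [div_le_iff₀ hd]; linarith
            rw [h7] at h1
            linarith
        have hp1 : pn n s0 - η' / 4 ≤ pn n z := by
          have hB2 : pn n s0 * (1 + (1 - t) * (Real.log c0 - Real.log (pn n s0)))
              ≤ pn n s0 * Real.exp ((1 - t) * (Real.log c0 - Real.log (pn n s0))) :=
            mul_le_mul_of_nonneg_left hexp1 hH0.le
          have hring : pn n s0 * (1 + (1 - t) * (Real.log c0 - Real.log (pn n s0)))
              = pn n s0 - pn n s0 * ((1 - t) * (Real.log (pn n s0) - Real.log c0)) := by ring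
          rw [hring, ← heq] at hB2
          linarith [hq, hA, hprod]
        have hzM : |z| ≤ M + 1 := by
          have := abs_sub_abs_le_abs_sub z s0
          linarith [hs0M, hzr, hr0δ, hδ1]
        have hpz2 : p z ≤ p s0 + η' / 4 := by
          have h1 := hpδ z s0 hzM (by linarith [hs0M]) (le_trans hzr hr0δ)
          linarith [(abs_le.mp h1).2]
        have hfin : η' / 2 ≤ pn n z - p z := by linarith
        calc η' / 2 ≤ pn n z - p z := hfin
          _ ≤ |pn n z - p z| := le_abs_self _
          _ ≤ Real.exp (ε * |z|) * |pn n z - p z| :=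
              le_mul_of_one_le_left (abs_nonneg _)
                (Real.one_le_exp (mul_nonneg hε0 (abs_nonneg z)))
      have hW := hWlb aa (aa + r0) (η' / 2) (by linarith) (by positivity) key2
      rw [show aa + r0 - aa = r0 by ring] at hW
      exact absurd hWn (not_lt.mpr (le_trans (ENNReal.ofReal_le_ofReal hθspike) hW))
end

section
/- Doubly robust identification of the counterfactual CDF: let (X, A, Y) be a random vector with A ∈ {0,1}, let π*(x) = P(A = a | X = x) and φ*(s|x) = P(Y ≤ s | X = x, A = a), and let π_∞, φ_∞ be measurable functions with 1/π_∞ bounded. Suppose there exist measurable sets S₁, S₂ with P(X ∈ S₁ ∪ S₂) = 1 such that π_∞ = π* on S₁ and φ_∞(·|x) = φ*(·|x) for all x ∈ S₂. Then for every s ∈ ℝ, E[ (1{A=a}/π_∞(X)) (1{Y ≤ s} − φ_∞(s|X)) + φ_∞(s|X) ] = E[ φ*(s|X) ]. -/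
open MeasureTheory Filter Set

lemma integrable_of_bdd {Ω : Type*} [MeasurableSpace Ω] {μ : Measure Ω}
    [IsFiniteMeasure μ] {f : Ω → ℝ} (hf : Measurable f) {C : ℝ}
    (hb : ∀ ω, |f ω| ≤ C) : Integrable f μ :=
  ⟨hf.aestronglyMeasurable,
    HasFiniteIntegral.of_bounded (C := C) (ae_of_all _ fun ω => by
      simpa [Real.norm_eq_abs] using hb ω)⟩

/-- Doubly robust identification of the counterfactual CDF: if the limiting nuisances
`pinf`, `phiinf` agree with the true nuisances `pstar` (the propensity score) and
`phistar` (the conditional CDF) on sets `S₁`, `S₂` respectively, with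
`P(X ∈ S₁ ∪ S₂) = 1` and `1/pinf` bounded, then the uncentered influence function has
expectation `E[phistar(s|X)]` for every `s`. The true nuisances are characterized by the
tower-property identities against bounded measurable test functions of `X`. -/
theorem doubly_robust_identification
    {Ω 𝒳 : Type*} [MeasurableSpace Ω] [MeasurableSpace 𝒳]
    (μ : Measure Ω) [IsProbabilityMeasure μ]
    (X : Ω → 𝒳) (A : Ω → ℕ) (Y : Ω → ℝ)
    (hX : Measurable X) (hA : Measurable A) (hY : Measurable Y)
    (a : ℕ)
    (pstar pinf : 𝒳 → ℝ) (phistar phiinf : ℝ → 𝒳 → ℝ)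
    (hpstar : Measurable pstar) (hpinf : Measurable pinf)
    (hphistar : ∀ s, Measurable (phistar s)) (hphiinf : ∀ s, Measurable (phiinf s))
    (hpstar01 : ∀ x, pstar x ∈ Set.Icc (0:ℝ) 1)
    (hphistar01 : ∀ s x, phistar s x ∈ Set.Icc (0:ℝ) 1)
    (hphiinf01 : ∀ s x, phiinf s x ∈ Set.Icc (0:ℝ) 1)
    (K : ℝ) (hpinfpos : ∀ x, 0 < pinf x) (hpinfK : ∀ x, 1 / pinf x ≤ K)
    (hpdef : ∀ g : 𝒳 → ℝ, Measurable g → (∃ C, ∀ x, |g x| ≤ C) →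
      (∫ ω, (if A ω = a then (1:ℝ) else 0) * g (X ω) ∂μ) =
        ∫ ω, pstar (X ω) * g (X ω) ∂μ)
    (hphidef : ∀ (s : ℝ) (g : 𝒳 → ℝ), Measurable g → (∃ C, ∀ x, |g x| ≤ C) →
      (∫ ω, (if A ω = a then (1:ℝ) else 0) * (if Y ω ≤ s then (1:ℝ) else 0) * g (X ω) ∂μ)
        = ∫ ω, pstar (X ω) * phistar s (X ω) * g (X ω) ∂μ)
    (S₁ S₂ : Set 𝒳) (hS₁m : MeasurableSet S₁) (hS₂m : MeasurableSet S₂)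
    (hcov : μ {ω | X ω ∈ S₁ ∪ S₂} = 1)
    (hS₁ : ∀ x ∈ S₁, pinf x = pstar x)
    (hS₂ : ∀ x ∈ S₂, ∀ s, phiinf s x = phistar s x) :
    ∀ s : ℝ,
      (∫ ω, ((if A ω = a then (1:ℝ) else 0) / pinf (X ω)) *
          ((if Y ω ≤ s then (1:ℝ) else 0) - phiinf s (X ω)) + phiinf s (X ω) ∂μ)
        = ∫ ω, phistar s (X ω) ∂μ := by
  intro s
  have hg₁m : Measurable (fun x => 1 / pinf x) := measurable_const.div hpinf
  have hg₂m : Measurable (fun x => phiinf s x / pinf x) := (hphiinf s).div hpinf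
  have hg₁b : ∀ x, |1 / pinf x| ≤ K := fun x => by
    have := hpinfpos x
    rw [abs_of_nonneg (by positivity)]; exact hpinfK x
  have hg₂b : ∀ x, |phiinf s x / pinf x| ≤ K := fun x => by
    have h1 := hphiinf01 s x
    have h2 := hpinfpos x
    rw [abs_of_nonneg (div_nonneg h1.1 h2.le)]
    calc phiinf s x / pinf x ≤ 1 / pinf x := by gcongr; exact h1.2
      _ ≤ K := hpinfK x
  have hKx : ∀ x : 𝒳, (0:ℝ) ≤ K := fun x => le_trans (abs_nonneg _) (hg₁b x)
  -- measurability of indicator pieces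
  have mA : Measurable (fun ω => if A ω = a then (1:ℝ) else 0) :=
    Measurable.ite (hA (measurableSet_singleton a)) measurable_const measurable_const
  have mY : Measurable (fun ω => if Y ω ≤ s then (1:ℝ) else 0) :=
    Measurable.ite (hY measurableSet_Iic) measurable_const measurable_const
  have bA : ∀ ω, |if A ω = a then (1:ℝ) else 0| ≤ 1 := fun ω => by
    split <;> simp
  have bY : ∀ ω, |if Y ω ≤ s then (1:ℝ) else 0| ≤ 1 := fun ω => by
    split <;> simp
  -- integrable pieces
  have i1 : Integrable (fun ω => (if A ω = a then (1:ℝ) else 0) *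
      (if Y ω ≤ s then (1:ℝ) else 0) * (1 / pinf (X ω))) μ := by
    refine integrable_of_bdd ((mA.mul mY).mul (hg₁m.comp hX)) (C := K) (fun ω => ?_)
    have h1 := bA ω; have h2 := bY ω; have h3 := hg₁b (X ω)
    have h4 := abs_nonneg ((1:ℝ) / pinf (X ω))
    rw [abs_mul, abs_mul]
    have hab : |if A ω = a then (1:ℝ) else 0| * |if Y ω ≤ s then (1:ℝ) else 0| ≤ 1 :=
      mul_le_one₀ h1 (abs_nonneg _) h2
    calc _ ≤ 1 * |1 / pinf (X ω)| := mul_le_mul_of_nonneg_right hab h4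
      _ = |1 / pinf (X ω)| := one_mul _
      _ ≤ K := h3
  have i2 : Integrable (fun ω => (if A ω = a then (1:ℝ) else 0) *
      (phiinf s (X ω) / pinf (X ω))) μ := by
    refine integrable_of_bdd (mA.mul (hg₂m.comp hX)) (C := K) (fun ω => ?_)
    have h1 := bA ω; have h3 := hg₂b (X ω)
    have h4 := abs_nonneg (phiinf s (X ω) / pinf (X ω))
    rw [abs_mul]
    calc _ ≤ 1 * |phiinf s (X ω) / pinf (X ω)| := mul_le_mul_of_nonneg_right h1 h4
      _ = |phiinf s (X ω) / pinf (X ω)| := one_mul _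
      _ ≤ K := h3
  have i3 : Integrable (fun ω => phiinf s (X ω)) μ := by
    refine integrable_of_bdd ((hphiinf s).comp hX) (C := 1) (fun ω => ?_)
    have h := hphiinf01 s (X ω)
    rw [abs_of_nonneg h.1]; exact h.2
  have i4 : Integrable (fun ω => pstar (X ω) * phistar s (X ω) * (1 / pinf (X ω))) μ := by
    refine integrable_of_bdd ((hpstar.comp hX |>.mul ((hphistar s).comp hX)).mul
      (hg₁m.comp hX)) (C := K) (fun ω => ?_)
    have h1 := hpstar01 (X ω); have h2 := hphistar01 s (X ω); have h3 := hg₁b (X ω)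
    have h4 := abs_nonneg ((1:ℝ) / pinf (X ω))
    rw [abs_mul, abs_mul, abs_of_nonneg h1.1, abs_of_nonneg h2.1]
    have hab : pstar (X ω) * phistar s (X ω) ≤ 1 := mul_le_one₀ h1.2 h2.1 h2.2
    calc _ ≤ 1 * |1 / pinf (X ω)| := mul_le_mul_of_nonneg_right hab h4
      _ = |1 / pinf (X ω)| := one_mul _
      _ ≤ K := h3
  have i5 : Integrable (fun ω => pstar (X ω) * (phiinf s (X ω) / pinf (X ω))) μ := by
    refine integrable_of_bdd ((hpstar.comp hX).mul (hg₂m.comp hX)) (C := K) (fun ω => ?_)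
    have h1 := hpstar01 (X ω); have h3 := hg₂b (X ω)
    have h4 := abs_nonneg (phiinf s (X ω) / pinf (X ω))
    rw [abs_mul, abs_of_nonneg h1.1]
    calc _ ≤ 1 * |phiinf s (X ω) / pinf (X ω)| := mul_le_mul_of_nonneg_right h1.2 h4
      _ = |phiinf s (X ω) / pinf (X ω)| := one_mul _
      _ ≤ K := h3
  -- rewrite the integrand
  have hsplit : (∫ ω, ((if A ω = a then (1:ℝ) else 0) / pinf (X ω)) *
          ((if Y ω ≤ s then (1:ℝ) else 0) - phiinf s (X ω)) + phiinf s (X ω) ∂μ)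
      = (∫ ω, (if A ω = a then (1:ℝ) else 0) * (if Y ω ≤ s then (1:ℝ) else 0) *
            (1 / pinf (X ω)) ∂μ)
        - (∫ ω, (if A ω = a then (1:ℝ) else 0) * (phiinf s (X ω) / pinf (X ω)) ∂μ)
        + ∫ ω, phiinf s (X ω) ∂μ := by
    have i12 : Integrable (fun ω => (if A ω = a then (1:ℝ) else 0) *
        (if Y ω ≤ s then (1:ℝ) else 0) * (1 / pinf (X ω))
        - (if A ω = a then (1:ℝ) else 0) * (phiinf s (X ω) / pinf (X ω))) μ := i1.sub i2
    rw [← integral_sub i1 i2, ← integral_add i12 i3]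
    apply integral_congr_ae
    filter_upwards with ω
    ring
  have e1 : (∫ ω, (if A ω = a then (1:ℝ) else 0) * (if Y ω ≤ s then (1:ℝ) else 0) *
        (1 / pinf (X ω)) ∂μ)
      = ∫ ω, pstar (X ω) * phistar s (X ω) * (1 / pinf (X ω)) ∂μ :=
    hphidef s _ hg₁m ⟨K, hg₁b⟩
  have e2 : (∫ ω, (if A ω = a then (1:ℝ) else 0) * (phiinf s (X ω) / pinf (X ω)) ∂μ)
      = ∫ ω, pstar (X ω) * (phiinf s (X ω) / pinf (X ω)) ∂μ :=
    hpdef _ hg₂m ⟨K, hg₂b⟩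
  have i45 : Integrable (fun ω => pstar (X ω) * phistar s (X ω) * (1 / pinf (X ω))
      - pstar (X ω) * (phiinf s (X ω) / pinf (X ω))) μ := i4.sub i5
  rw [hsplit, e1, e2, ← integral_sub i4 i5, ← integral_add i45 i3]
  apply integral_congr_ae
  have hae : ∀ᵐ ω ∂μ, X ω ∈ S₁ ∪ S₂ := by
    rw [ae_iff]
    have hm : MeasurableSet {ω | X ω ∈ S₁ ∪ S₂} := hX (hS₁m.union hS₂m)
    have := measure_compl hm (measure_ne_top μ _)
    simp only [Set.compl_setOf] at this ⊢
    rw [this, hcov, measure_univ, tsub_self]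
  filter_upwards [hae] with ω hω
  have hp := hpinfpos (X ω)
  rcases hω with h | h
  · have h1 : pinf (X ω) = pstar (X ω) := hS₁ _ h
    field_simp [← h1]
    rw [h1]; ring
  · have h2 : phiinf s (X ω) = phistar s (X ω) := hS₂ _ h s
    rw [h2]
    ring
end

section
/- Location-scale conditional CDF Wasserstein control: let H : ℝ → [0,1] be a CDF with mean 0, variance 1, and define L(s) := sup over K(s−K) < s₁ ≠ s₂ ≤ K(s+K) of |H(s₂) − H(s₁)|/|s₂ − s₁| for a constant K > 1, and assume ∫_ℝ (|s|+1) L(s) ds < ∞. Let μ̂, μ, σ̂, σ : 𝒳 → ℝ be measurable with |μ̂|, |μ|, |σ̂|, |σ| ≤ K and σ̂, σ ≥ 1/K. Then for every x, ∫_ℝ |H((s − μ̂(x))/σ̂(x)) − H((s − μ(x))/σ(x))| ds ≤ ∫_ℝ L(s)[ (K²|s| + K³) |σ̂(x) − σ(x)| + K |μ̂(x) − μ(x)| ] ds, so that the integrated conditional CDF discrepancy is bounded by C(K,H) (|σ̂(x) − σ(x)| + |μ̂(x) − μ(x)|) for a finite constant C(K,H). -/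
open MeasureTheory Filter Set

namespace LSWCaux

open ENNReal

lemma swapW (ν₁ ν₂ : Measure ℝ) [SFinite ν₁] [SFinite ν₂]
    (W : ℝ → ℝ≥0∞) (hW : Measurable W) (hWfin : ∀ s, W s ≠ ∞)
    (S : Set (ℝ × ℝ)) (hS : MeasurableSet S) :
    ∫⁻ s, W s * ν₂ (Prod.mk s ⁻¹' S) ∂ν₁ = ∫⁻ t, ∫⁻ s, W s * S.indicator 1 (s, t) ∂ν₁ ∂ν₂ := by
  have h1 : ∀ s, ν₂ (Prod.mk s ⁻¹' S) = ∫⁻ t, S.indicator 1 (s, t) ∂ν₂ := by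
    intro s
    rw [← lintegral_indicator_one (measurable_prodMk_left hS)]
    rfl
  have hmeas : Measurable fun p : ℝ × ℝ => W p.1 * S.indicator 1 p :=
    (hW.comp measurable_fst).mul (measurable_const.indicator hS)
  calc ∫⁻ s, W s * ν₂ (Prod.mk s ⁻¹' S) ∂ν₁
      = ∫⁻ s, ∫⁻ t, W s * S.indicator 1 (s, t) ∂ν₂ ∂ν₁ := by
        congr 1; ext s; rw [h1, lintegral_const_mul' _ _ (hWfin s)]
    _ = ∫⁻ t, ∫⁻ s, W s * S.indicator 1 (s, t) ∂ν₁ ∂ν₂ :=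
        lintegral_lintegral_swap hmeas.aemeasurable

lemma inner_eval (ν₁ : Measure ℝ) (S : Set (ℝ × ℝ)) (hS : MeasurableSet S)
    (W : ℝ≥0∞) (hWfin : W ≠ ∞) (t : ℝ) :
    ∫⁻ s, W * S.indicator 1 (s, t) ∂ν₁ = W * ν₁ {s | (s, t) ∈ S} := by
  rw [lintegral_const_mul' _ _ hWfin]
  congr 1
  rw [show {s : ℝ | (s, t) ∈ S} = (fun s => (s, t)) ⁻¹' S from rfl,
    ← lintegral_indicator_one (measurable_prodMk_right hS)]
  rfl

end LSWCaux

open ENNReal LSWCaux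


set_option maxHeartbeats 1000000


/-- Location-scale conditional CDF Wasserstein control: with `H` a CDF of mean `0` and
variance `1`, `L(s)` the local Lipschitz modulus of `H` on `(K(s−K), K(s+K)]` with
`∫ (|s|+1) L(s) ds < ∞`, and bounded location-scale nuisances, the integrated CDF
discrepancy is bounded by the stated integral, and hence by
`C(K,H)·(|σ̂(x) − σ(x)| + |μ̂(x) − μ(x)|)` for a finite constant `C(K,H)`. -/
theorem location_scale_wasserstein_control
    {𝒳 : Type*} (H : StieltjesFunction ℝ)
    (hH01 : ∀ t, H t ∈ Set.Icc (0:ℝ) 1)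
    (hHbot : Tendsto (fun t => H t) atBot (nhds 0))
    (hHtop : Tendsto (fun t => H t) atTop (nhds 1))
    (hmean : (∫ t, t ∂H.measure) = 0) (hvar : (∫ t, t ^ 2 ∂H.measure) = 1)
    (K : ℝ) (hK : 1 < K)
    (L : ℝ → ℝ)
    (hLbdd : ∀ s : ℝ, BddAbove {r : ℝ | ∃ s₁ s₂ : ℝ,
      K * (s - K) < s₁ ∧ s₁ ≤ K * (s + K) ∧ K * (s - K) < s₂ ∧ s₂ ≤ K * (s + K) ∧
      s₁ ≠ s₂ ∧ r = |H s₂ - H s₁| / |s₂ - s₁|})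
    (hLdef : ∀ s : ℝ, L s = sSup {r : ℝ | ∃ s₁ s₂ : ℝ,
      K * (s - K) < s₁ ∧ s₁ ≤ K * (s + K) ∧ K * (s - K) < s₂ ∧ s₂ ≤ K * (s + K) ∧
      s₁ ≠ s₂ ∧ r = |H s₂ - H s₁| / |s₂ - s₁|})
    (hLint : Integrable (fun s => (|s| + 1) * L s))
    (μh μ0 σh σ0 : 𝒳 → ℝ)
    (hμh : ∀ x, |μh x| ≤ K) (hμ0 : ∀ x, |μ0 x| ≤ K)
    (hσh : ∀ x, 1 / K ≤ σh x ∧ σh x ≤ K) (hσ0 : ∀ x, 1 / K ≤ σ0 x ∧ σ0 x ≤ K) :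
    (∀ x, (∫ s, |H ((s - μh x) / σh x) - H ((s - μ0 x) / σ0 x)|) ≤
      ∫ s, L s * ((K ^ 2 * |s| + K ^ 3) * |σh x - σ0 x| + K * |μh x - μ0 x|)) ∧
    ∃ C : ℝ, ∀ x, (∫ s, |H ((s - μh x) / σh x) - H ((s - μ0 x) / σ0 x)|) ≤
      C * (|σh x - σ0 x| + |μh x - μ0 x|) := by
  classical
  have hK0 : (0:ℝ) < K := lt_trans one_pos hK
  have hK2 : (0:ℝ) < 2 * K ^ 2 := by positivity
  haveI : IsProbabilityMeasure H.measure := H.isProbabilityMeasure hHbot hHtop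
  have hHmeas : Measurable (H : ℝ → ℝ) := H.mono.measurable
  -- L is nonnegative
  have hL0 : ∀ s, 0 ≤ L s := by
    intro s
    have hmem : |H (K*s + K^2) - H (K*s - K^2 + 1)| / |(K*s + K^2) - (K*s - K^2 + 1)| ∈
        {r : ℝ | ∃ s₁ s₂ : ℝ, K * (s - K) < s₁ ∧ s₁ ≤ K * (s + K) ∧ K * (s - K) < s₂ ∧
          s₂ ≤ K * (s + K) ∧ s₁ ≠ s₂ ∧ r = |H s₂ - H s₁| / |s₂ - s₁|} := by
      refine ⟨K*s - K^2 + 1, K*s + K^2, by nlinarith, by nlinarith, by nlinarith, by nlinarith,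
        by intro h; nlinarith [h], rfl⟩
    have := le_csSup (hLbdd s) hmem
    rw [hLdef s]
    exact le_trans (div_nonneg (abs_nonneg _) (abs_nonneg _)) this
  -- L is a.e. measurable
  have hLmeas : AEMeasurable L (volume : Measure ℝ) := by
    have heq : L = fun s => ((|s| + 1) * L s) / (|s| + 1) := by
      funext s
      have : |s| + 1 ≠ 0 := by positivity
      field_simp
    rw [heq]
    exact hLint.1.aemeasurable.div ((measurable_abs.add_const 1).aemeasurable)
  -- key lower bound for L
  have hLlb : ∀ s : ℝ, H (K*s + K^2) - H (K*s - K^2) ≤ 2 * K^2 * L s := by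
    intro s
    set c0 := K*s - K^2 with hc0
    set d0 := K*s + K^2 with hd0
    have htend : Tendsto (fun ε : ℝ => H d0 - H (c0 + ε)) (nhdsWithin 0 (Ioi 0))
        (nhds (H d0 - H c0)) := by
      have h1 : Tendsto (fun ε : ℝ => c0 + ε) (nhdsWithin 0 (Ioi 0))
          (nhdsWithin c0 (Ici c0)) := by
        rw [tendsto_nhdsWithin_iff]
        constructor
        · have h2 : Tendsto (fun ε : ℝ => c0 + ε) (nhds 0) (nhds (c0 + 0)) :=
            (continuous_const.add continuous_id).tendsto 0
          simpa using h2.mono_left nhdsWithin_le_nhds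
        · filter_upwards [self_mem_nhdsWithin] with ε (hε : ε ∈ Ioi 0)
          simp only [mem_Ici]
          linarith [mem_Ioi.mp hε]
      exact tendsto_const_nhds.sub ((H.right_continuous c0).tendsto.comp h1)
    refine le_of_tendsto htend ?_
    filter_upwards [Ioo_mem_nhdsGT hK2] with ε hε
    obtain ⟨hε0, hε2⟩ := hε
    have hne : c0 + ε ≠ d0 := by rw [hc0, hd0]; intro h; nlinarith
    have hmem : |H d0 - H (c0 + ε)| / |d0 - (c0 + ε)| ∈
        {r : ℝ | ∃ s₁ s₂ : ℝ, K * (s - K) < s₁ ∧ s₁ ≤ K * (s + K) ∧ K * (s - K) < s₂ ∧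
          s₂ ≤ K * (s + K) ∧ s₁ ≠ s₂ ∧ r = |H s₂ - H s₁| / |s₂ - s₁|} := by
      refine ⟨c0 + ε, d0, ?_, ?_, ?_, ?_, hne, rfl⟩
      · rw [hc0]; nlinarith
      · rw [hc0]; nlinarith
      · rw [hd0]; nlinarith
      · rw [hd0]; nlinarith
    have hr : |H d0 - H (c0 + ε)| / |d0 - (c0 + ε)| ≤ L s := by
      rw [hLdef s]; exact le_csSup (hLbdd s) hmem
    have hmono : H (c0 + ε) ≤ H d0 := H.mono (by rw [hc0, hd0]; nlinarith)
    have hden : d0 - (c0 + ε) = 2*K^2 - ε := by rw [hc0, hd0]; ring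
    have hdenpos : (0:ℝ) < d0 - (c0 + ε) := by rw [hden]; linarith
    have habs1 : |H d0 - H (c0 + ε)| = H d0 - H (c0 + ε) := abs_of_nonneg (by linarith)
    have habs2 : |d0 - (c0 + ε)| = d0 - (c0 + ε) := abs_of_pos hdenpos
    have heq : H d0 - H (c0 + ε) = (|H d0 - H (c0 + ε)| / |d0 - (c0 + ε)|) * (d0 - (c0 + ε)) := by
      rw [habs1, habs2, div_mul_cancel₀ _ (ne_of_gt hdenpos)]
    rw [heq]
    have hrnn : 0 ≤ |H d0 - H (c0 + ε)| / |d0 - (c0 + ε)| :=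
      div_nonneg (abs_nonneg _) (abs_nonneg _)
    calc (|H d0 - H (c0 + ε)| / |d0 - (c0 + ε)|) * (d0 - (c0 + ε))
        ≤ L s * (2*K^2) := by
          apply mul_le_mul hr (by rw [hden]; linarith) (le_of_lt hdenpos) (hL0 s)
      _ = 2 * K^2 * L s := by ring
  -- the strip
  set S : Set (ℝ × ℝ) := {p | K * p.1 - K^2 < p.2 ∧ p.2 ≤ K * p.1 + K^2} with hSdef
  have hSmeas : MeasurableSet S := by
    apply MeasurableSet.inter
    · exact measurableSet_lt ((measurable_fst.const_mul K).sub_const _) measurable_snd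
    · exact measurableSet_le measurable_snd ((measurable_fst.const_mul K).add_const _)
  have hslice_s : ∀ s : ℝ, Prod.mk s ⁻¹' S = Ioc (K*s - K^2) (K*s + K^2) := fun s => rfl
  have hslice_t : ∀ t : ℝ, {s : ℝ | (s, t) ∈ S} = Ico ((t - K^2)/K) ((t + K^2)/K) := by
    intro t
    ext s
    simp only [hSdef, mem_setOf_eq, mem_Ico]
    rw [div_le_iff₀ hK0, lt_div_iff₀ hK0]
    constructor
    · rintro ⟨h1, h2⟩
      constructor <;> nlinarith [mul_comm s K]
    · rintro ⟨h1, h2⟩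
      constructor <;> nlinarith [mul_comm s K]
  have hvolslice : ∀ t : ℝ, (volume : Measure ℝ) {s : ℝ | (s, t) ∈ S} = ENNReal.ofReal (2*K) := by
    intro t
    rw [hslice_t t, Real.volume_Ico]
    congr 1
    field_simp
    ring
  set E' := ∫⁻ t, ENNReal.ofReal |t| ∂H.measure with hE'def
  set A' := ∫⁻ s, ENNReal.ofReal (K^2 * (|s| + K) * L s) with hA'def
  set B' := ∫⁻ s, ENNReal.ofReal (K * L s) with hB'def
  -- finiteness
  have hIL : (∫⁻ s, ENNReal.ofReal ((|s| + 1) * L s)) ≠ ∞ := by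
    apply ne_of_lt
    apply lt_of_le_of_lt _ hLint.2
    exact lintegral_mono fun s => Real.ofReal_le_enorm _
  have hA'fin : A' ≠ ∞ := by
    apply ne_of_lt
    have hb : ∀ s : ℝ, ENNReal.ofReal (K^2 * (|s| + K) * L s) ≤
        ENNReal.ofReal (K^3) * ENNReal.ofReal ((|s| + 1) * L s) := by
      intro s
      rw [← ENNReal.ofReal_mul (by positivity)]
      apply ENNReal.ofReal_le_ofReal
      have h1 : |s| + K ≤ K * (|s| + 1) := by nlinarith [abs_nonneg s]
      nlinarith [mul_le_mul_of_nonneg_left (mul_le_mul_of_nonneg_right h1 (hL0 s)) (sq_nonneg K)]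
    calc A' ≤ ∫⁻ s, ENNReal.ofReal (K^3) * ENNReal.ofReal ((|s| + 1) * L s) :=
          lintegral_mono fun s => hb s
      _ = ENNReal.ofReal (K^3) * ∫⁻ s, ENNReal.ofReal ((|s| + 1) * L s) :=
          lintegral_const_mul' _ _ ENNReal.ofReal_ne_top
      _ < ∞ := ENNReal.mul_lt_top ENNReal.ofReal_lt_top (lt_top_iff_ne_top.mpr hIL)
  have hB'fin : B' ≠ ∞ := by
    apply ne_of_lt
    have hb : ∀ s : ℝ, ENNReal.ofReal (K * L s) ≤
        ENNReal.ofReal K * ENNReal.ofReal ((|s| + 1) * L s) := by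
      intro s
      rw [← ENNReal.ofReal_mul hK0.le]
      apply ENNReal.ofReal_le_ofReal
      nlinarith [mul_nonneg (mul_nonneg hK0.le (abs_nonneg s)) (hL0 s)]
    calc B' ≤ ∫⁻ s, ENNReal.ofReal K * ENNReal.ofReal ((|s| + 1) * L s) :=
          lintegral_mono fun s => hb s
      _ = ENNReal.ofReal K * ∫⁻ s, ENNReal.ofReal ((|s| + 1) * L s) :=
          lintegral_const_mul' _ _ ENNReal.ofReal_ne_top
      _ < ∞ := ENNReal.mul_lt_top ENNReal.ofReal_lt_top (lt_top_iff_ne_top.mpr hIL)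
  have hE'fin : E' ≠ ∞ := by
    have hI2 : Integrable (fun t : ℝ => t ^ 2) H.measure := by
      by_contra h0
      rw [integral_undef h0] at hvar
      norm_num at hvar
    apply ne_of_lt
    have hb : ∀ t : ℝ, ENNReal.ofReal |t| ≤ ENNReal.ofReal (t^2) + 1 := by
      intro t
      calc ENNReal.ofReal |t| ≤ ENNReal.ofReal (t^2 + 1) :=
            ENNReal.ofReal_le_ofReal (by nlinarith [sq_abs t, abs_nonneg t])
        _ = ENNReal.ofReal (t^2) + 1 := by
            rw [ENNReal.ofReal_add (sq_nonneg t) zero_le_one, ENNReal.ofReal_one]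
    calc E' ≤ ∫⁻ t, (ENNReal.ofReal (t^2) + 1) ∂H.measure := lintegral_mono hb
      _ = (∫⁻ t, ENNReal.ofReal (t^2) ∂H.measure) + 1 * H.measure univ := by
          rw [lintegral_add_right _ measurable_const, lintegral_const]
      _ < ∞ := by
          apply ENNReal.add_lt_top.mpr
          constructor
          · apply lt_of_le_of_lt _ hI2.2
            exact lintegral_mono fun t => Real.ofReal_le_enorm _
          · simp [measure_univ]
  -- Target 1 : 1 ≤ B'
  have hT1 : (1 : ℝ≥0∞) ≤ B' := by
    have club := swapW volume H.measure (fun _ => ENNReal.ofReal K) measurable_const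
        (fun _ => ENNReal.ofReal_ne_top) S hSmeas
    have hrhs : ∫⁻ t, ∫⁻ s, ENNReal.ofReal K * S.indicator 1 (s, t) ∂volume ∂H.measure
        = ENNReal.ofReal (2 * K^2) := by
      have hin : ∀ t : ℝ, ∫⁻ s, ENNReal.ofReal K * S.indicator 1 (s, t) ∂volume
          = ENNReal.ofReal (2 * K^2) := by
        intro t
        rw [inner_eval volume S hSmeas _ ENNReal.ofReal_ne_top t, hvolslice t,
          ← ENNReal.ofReal_mul hK0.le]
        congr 1; ring
      simp_rw [hin]
      rw [lintegral_const, measure_univ, mul_one]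
    have hlhs : ∫⁻ s, ENNReal.ofReal K * H.measure (Prod.mk s ⁻¹' S) ∂volume
        ≤ ENNReal.ofReal (2*K^2) * B' := by
      calc ∫⁻ s, ENNReal.ofReal K * H.measure (Prod.mk s ⁻¹' S) ∂volume
          ≤ ∫⁻ s, ENNReal.ofReal (2*K^2) * ENNReal.ofReal (K * L s) ∂volume := by
            apply lintegral_mono
            intro s
            dsimp only
            rw [hslice_s s, H.measure_Ioc]
            calc ENNReal.ofReal K * ENNReal.ofReal (H (K*s+K^2) - H (K*s-K^2))
                ≤ ENNReal.ofReal K * ENNReal.ofReal (2*K^2 * L s) :=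
                  mul_le_mul_right (ENNReal.ofReal_le_ofReal (hLlb s)) _
              _ = ENNReal.ofReal (2*K^2) * ENNReal.ofReal (K * L s) := by
                  rw [← ENNReal.ofReal_mul hK0.le, ← ENNReal.ofReal_mul hK2.le]
                  congr 1; ring
        _ = ENNReal.ofReal (2*K^2) * B' := lintegral_const_mul' _ _ ENNReal.ofReal_ne_top
    have hfinal : ENNReal.ofReal (2*K^2) * 1 ≤ ENNReal.ofReal (2*K^2) * B' := by
      rw [mul_one]
      calc ENNReal.ofReal (2*K^2)
          = ∫⁻ t, ∫⁻ s, ENNReal.ofReal K * S.indicator 1 (s, t) ∂volume ∂H.measure := hrhs.symm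
        _ = ∫⁻ s, ENNReal.ofReal K * H.measure (Prod.mk s ⁻¹' S) ∂volume := club.symm
        _ ≤ _ := hlhs
    exact (ENNReal.mul_le_mul_iff_right ((ENNReal.ofReal_pos.mpr hK2).ne')
      ENNReal.ofReal_ne_top).mp hfinal
  -- Target 2 : E' ≤ A'
  have hT2 : E' ≤ A' := by
    have hW : Measurable fun s : ℝ => ENNReal.ofReal (K * (|s| + K)) :=
      ENNReal.measurable_ofReal.comp ((measurable_abs.add_const K).const_mul K)
    have club := swapW volume H.measure (fun s => ENNReal.ofReal (K * (|s| + K))) hW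
        (fun _ => ENNReal.ofReal_ne_top) S hSmeas
    have hrhs : ENNReal.ofReal (2*K) * E'
        ≤ ∫⁻ t, ∫⁻ s, ENNReal.ofReal (K * (|s| + K)) * S.indicator 1 (s, t) ∂volume
          ∂H.measure := by
      have hinner : ∀ t : ℝ, ENNReal.ofReal (2*K) * ENNReal.ofReal |t|
          ≤ ∫⁻ s, ENNReal.ofReal (K * (|s| + K)) * S.indicator 1 (s, t) ∂volume := by
        intro t
        have h1 : ENNReal.ofReal |t| * ENNReal.ofReal (2*K)
            = ∫⁻ s, ENNReal.ofReal |t| * S.indicator 1 (s, t) ∂volume := by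
          rw [inner_eval volume S hSmeas _ ENNReal.ofReal_ne_top t, hvolslice t]
        rw [mul_comm, h1]
        apply lintegral_mono
        intro s
        by_cases hm : (s, t) ∈ S
        · simp only [Set.indicator_of_mem hm, Pi.one_apply, mul_one]
          apply ENNReal.ofReal_le_ofReal
          obtain ⟨hm1, hm2⟩ := hm
          have hs1 : K * s ≤ K * |s| := mul_le_mul_of_nonneg_left (le_abs_self s) hK0.le
          have hs2 : K * (-|s|) ≤ K * s := mul_le_mul_of_nonneg_left (neg_abs_le s) hK0.le
          rw [abs_le]
          constructor <;> nlinarith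
        · simp [Set.indicator_of_notMem hm]
      calc ENNReal.ofReal (2*K) * E'
          = ∫⁻ t, ENNReal.ofReal (2*K) * ENNReal.ofReal |t| ∂H.measure :=
            (lintegral_const_mul' _ _ ENNReal.ofReal_ne_top).symm
        _ ≤ _ := lintegral_mono hinner
    have hlhs : ∫⁻ s, ENNReal.ofReal (K * (|s| + K)) * H.measure (Prod.mk s ⁻¹' S) ∂volume
        ≤ ENNReal.ofReal (2*K) * A' := by
      calc ∫⁻ s, ENNReal.ofReal (K * (|s| + K)) * H.measure (Prod.mk s ⁻¹' S) ∂volume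
          ≤ ∫⁻ s, ENNReal.ofReal (2*K) * ENNReal.ofReal (K^2 * (|s| + K) * L s) ∂volume := by
            apply lintegral_mono
            intro s
            dsimp only
            rw [hslice_s s, H.measure_Ioc]
            calc ENNReal.ofReal (K * (|s| + K)) * ENNReal.ofReal (H (K*s+K^2) - H (K*s-K^2))
                ≤ ENNReal.ofReal (K * (|s| + K)) * ENNReal.ofReal (2*K^2 * L s) :=
                  mul_le_mul_right (ENNReal.ofReal_le_ofReal (hLlb s)) _
              _ = ENNReal.ofReal (2*K) * ENNReal.ofReal (K^2 * (|s| + K) * L s) := by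
                  rw [← ENNReal.ofReal_mul (by positivity : (0:ℝ) ≤ K * (|s| + K)),
                    ← ENNReal.ofReal_mul (by positivity : (0:ℝ) ≤ 2*K)]
                  congr 1; ring
        _ = ENNReal.ofReal (2*K) * A' := lintegral_const_mul' _ _ ENNReal.ofReal_ne_top
    have hfinal : ENNReal.ofReal (2*K) * E' ≤ ENNReal.ofReal (2*K) * A' :=
      le_trans hrhs (le_trans (le_of_eq club.symm) hlhs)
    exact (ENNReal.mul_le_mul_iff_right ((ENNReal.ofReal_pos.mpr (by positivity)).ne')
      ENNReal.ofReal_ne_top).mp hfinal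
  -- main per-x estimate
  have main : ∀ x : 𝒳,
      (∫ s, |H ((s - μh x) / σh x) - H ((s - μ0 x) / σ0 x)|) ≤
        (ENNReal.ofReal |σh x - σ0 x| * A' + ENNReal.ofReal |μh x - μ0 x| * B').toReal ∧
      (∫ s, L s * ((K ^ 2 * |s| + K ^ 3) * |σh x - σ0 x| + K * |μh x - μ0 x|)) =
        (ENNReal.ofReal |σh x - σ0 x| * A' + ENNReal.ofReal |μh x - μ0 x| * B').toReal := by
    intro x
    set a := μh x with ha
    set b := σh x with hbdef
    set c := μ0 x with hc
    set d := σ0 x with hddef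
    have hb : 0 < b := lt_of_lt_of_le (div_pos one_pos hK0) (hσh x).1
    have hd : 0 < d := lt_of_lt_of_le (div_pos one_pos hK0) (hσ0 x).1
    set T : Set (ℝ × ℝ) := {p | min ((p.1 - a)/b) ((p.1 - c)/d) < p.2 ∧
      p.2 ≤ max ((p.1 - a)/b) ((p.1 - c)/d)} with hTdef
    have hu : Measurable fun p : ℝ × ℝ => (p.1 - a)/b :=
      (measurable_fst.sub_const a).div_const b
    have hv : Measurable fun p : ℝ × ℝ => (p.1 - c)/d :=
      (measurable_fst.sub_const c).div_const d
    have hTmeas : MeasurableSet T := by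
      apply MeasurableSet.inter
      · exact measurableSet_lt (hu.min hv) measurable_snd
      · exact measurableSet_le measurable_snd (hu.max hv)
    have step1 : ∀ s : ℝ, ENNReal.ofReal |H ((s - a)/b) - H ((s - c)/d)|
        = H.measure (Prod.mk s ⁻¹' T) := by
      intro s
      have hpre : Prod.mk s ⁻¹' T
          = Ioc (min ((s - a)/b) ((s - c)/d)) (max ((s - a)/b) ((s - c)/d)) := rfl
      rw [hpre, H.measure_Ioc]
      congr 1
      rcases le_total ((s - a)/b) ((s - c)/d) with h | h
      · rw [max_eq_right h, min_eq_left h, abs_sub_comm,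
          abs_of_nonneg (sub_nonneg.mpr (H.mono h))]
      · rw [max_eq_left h, min_eq_right h, abs_of_nonneg (sub_nonneg.mpr (H.mono h))]
    have step2 : ∀ t : ℝ, (volume : Measure ℝ) {s : ℝ | (s, t) ∈ T}
        = ENNReal.ofReal |(b - d)*t + (a - c)| := by
      intro t
      have hset : {s : ℝ | (s, t) ∈ T}
          = Ico (min (b*t + a) (d*t + c)) (max (b*t + a) (d*t + c)) := by
        ext s
        simp only [hTdef, mem_setOf_eq, mem_Ico, min_lt_iff, le_max_iff, min_le_iff, lt_max_iff]
        rw [div_lt_iff₀ hb, div_lt_iff₀ hd, le_div_iff₀ hb, le_div_iff₀ hd]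
        constructor
        · rintro ⟨h1, h2⟩
          exact ⟨h2.imp (fun h => by linarith) (fun h => by linarith),
                 h1.imp (fun h => by linarith) (fun h => by linarith)⟩
        · rintro ⟨h1, h2⟩
          exact ⟨h2.imp (fun h => by linarith) (fun h => by linarith),
                 h1.imp (fun h => by linarith) (fun h => by linarith)⟩
      rw [hset, Real.volume_Ico, max_sub_min_eq_abs,
        show (d*t + c) - (b*t + a) = -((b - d)*t + (a - c)) from by ring, abs_neg]
    have hC : ∫⁻ s, ENNReal.ofReal |H ((s - a)/b) - H ((s - c)/d)| ∂volume
        ≤ ENNReal.ofReal |b - d| * A' + ENNReal.ofReal |a - c| * B' := by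
      calc ∫⁻ s, ENNReal.ofReal |H ((s - a)/b) - H ((s - c)/d)| ∂volume
          = ∫⁻ s, (1:ℝ≥0∞) * H.measure (Prod.mk s ⁻¹' T) ∂volume := by
            simp_rw [step1, one_mul]
        _ = ∫⁻ t, ∫⁻ s, (1:ℝ≥0∞) * T.indicator 1 (s, t) ∂volume ∂H.measure :=
            swapW volume H.measure (fun _ => 1) measurable_const (fun _ => one_ne_top) T hTmeas
        _ = ∫⁻ t, ENNReal.ofReal |(b - d)*t + (a - c)| ∂H.measure := by
            congr 1
            ext t
            rw [inner_eval volume T hTmeas 1 one_ne_top t, one_mul, step2 t]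
        _ ≤ ∫⁻ t, (ENNReal.ofReal |b - d| * ENNReal.ofReal |t| + ENNReal.ofReal |a - c|)
              ∂H.measure := by
            apply lintegral_mono
            intro t
            calc ENNReal.ofReal |(b - d)*t + (a - c)|
                ≤ ENNReal.ofReal (|b - d| * |t| + |a - c|) := by
                  apply ENNReal.ofReal_le_ofReal
                  calc |(b - d)*t + (a - c)| ≤ |(b - d)*t| + |a - c| := abs_add_le _ _
                    _ = |b - d| * |t| + |a - c| := by rw [abs_mul]
              _ = ENNReal.ofReal (|b - d| * |t|) + ENNReal.ofReal |a - c| :=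
                  ENNReal.ofReal_add (by positivity) (abs_nonneg _)
              _ = ENNReal.ofReal |b - d| * ENNReal.ofReal |t| + ENNReal.ofReal |a - c| := by
                  rw [ENNReal.ofReal_mul (abs_nonneg _)]
        _ = ENNReal.ofReal |b - d| * E' + ENNReal.ofReal |a - c| := by
            rw [lintegral_add_right _ measurable_const, lintegral_const, measure_univ, mul_one,
              lintegral_const_mul' _ _ ENNReal.ofReal_ne_top]
        _ ≤ ENNReal.ofReal |b - d| * A' + ENNReal.ofReal |a - c| * B' := by
            apply add_le_add (mul_le_mul_right hT2 _)
            calc ENNReal.ofReal |a - c| = ENNReal.ofReal |a - c| * 1 := (mul_one _).symm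
              _ ≤ ENNReal.ofReal |a - c| * B' := mul_le_mul_right hT1 _
    have hRHSfin : ENNReal.ofReal |b - d| * A' + ENNReal.ofReal |a - c| * B' ≠ ∞ := by
      apply ENNReal.add_ne_top.mpr
      exact ⟨ENNReal.mul_ne_top ENNReal.ofReal_ne_top hA'fin,
        ENNReal.mul_ne_top ENNReal.ofReal_ne_top hB'fin⟩
    constructor
    · -- part 1
      have hmeasf : AEStronglyMeasurable (fun s : ℝ => |H ((s - a)/b) - H ((s - c)/d)|)
          volume :=
        (((hHmeas.comp ((measurable_id.sub_const a).div_const b)).sub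
          (hHmeas.comp ((measurable_id.sub_const c).div_const d))).abs).aestronglyMeasurable
      rw [integral_eq_lintegral_of_nonneg_ae (Eventually.of_forall fun s => abs_nonneg _) hmeasf]
      exact ENNReal.toReal_mono hRHSfin hC
    · -- part 2
      have hptB : ∀ s : ℝ, ENNReal.ofReal (L s * ((K^2*|s| + K^3)*|b - d| + K*|a - c|)) =
          ENNReal.ofReal |b - d| * ENNReal.ofReal (K^2*(|s| + K) * L s)
            + ENNReal.ofReal |a - c| * ENNReal.ofReal (K * L s) := by
        intro s
        rw [← ENNReal.ofReal_mul (abs_nonneg (b - d)), ← ENNReal.ofReal_mul (abs_nonneg (a - c)),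
          ← ENNReal.ofReal_add
            (mul_nonneg (abs_nonneg _) (mul_nonneg (by positivity) (hL0 s)))
            (mul_nonneg (abs_nonneg _) (mul_nonneg hK0.le (hL0 s)))]
        congr 1
        ring
      have hmA : AEMeasurable (fun s : ℝ => ENNReal.ofReal (K^2*(|s| + K) * L s)) volume :=
        ENNReal.measurable_ofReal.comp_aemeasurable
          ((((measurable_abs.add_const K).const_mul (K^2)).aemeasurable).mul hLmeas)
      have hlintB : ∫⁻ s, ENNReal.ofReal (L s * ((K^2*|s| + K^3)*|b - d| + K*|a - c|)) ∂volume
          = ENNReal.ofReal |b - d| * A' + ENNReal.ofReal |a - c| * B' := by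
        simp_rw [hptB]
        rw [lintegral_add_left' (hmA.const_mul _),
          lintegral_const_mul' _ _ ENNReal.ofReal_ne_top,
          lintegral_const_mul' _ _ ENNReal.ofReal_ne_top]
      have hnnB : ∀ s : ℝ, 0 ≤ L s * ((K^2*|s| + K^3)*|b - d| + K*|a - c|) := by
        intro s
        apply mul_nonneg (hL0 s)
        positivity
      have hmeasB : AEStronglyMeasurable
          (fun s : ℝ => L s * ((K^2*|s| + K^3)*|b - d| + K*|a - c|)) volume := by
        apply AEMeasurable.aestronglyMeasurable
        exact hLmeas.mul
          ((((measurable_abs.const_mul (K^2)).add_const (K^3)).mul_const (|b - d|)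
            |>.add_const (K*|a - c|)).aemeasurable)
      rw [integral_eq_lintegral_of_nonneg_ae (Eventually.of_forall hnnB) hmeasB, hlintB]
  constructor
  · intro x
    calc ∫ s, |H ((s - μh x) / σh x) - H ((s - μ0 x) / σ0 x)|
        ≤ (ENNReal.ofReal |σh x - σ0 x| * A' + ENNReal.ofReal |μh x - μ0 x| * B').toReal :=
          (main x).1
      _ = ∫ s, L s * ((K ^ 2 * |s| + K ^ 3) * |σh x - σ0 x| + K * |μh x - μ0 x|) :=
          (main x).2.symm
  · refine ⟨A'.toReal + B'.toReal, fun x => ?_⟩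
    have h1 := (main x).1
    have h2 : (ENNReal.ofReal |σh x - σ0 x| * A' + ENNReal.ofReal |μh x - μ0 x| * B').toReal
        = |σh x - σ0 x| * A'.toReal + |μh x - μ0 x| * B'.toReal := by
      rw [ENNReal.toReal_add (ENNReal.mul_ne_top ENNReal.ofReal_ne_top hA'fin)
        (ENNReal.mul_ne_top ENNReal.ofReal_ne_top hB'fin),
        ENNReal.toReal_mul, ENNReal.toReal_mul, ENNReal.toReal_ofReal (abs_nonneg _),
        ENNReal.toReal_ofReal (abs_nonneg _)]
    rw [h2] at h1
    have hA0 : 0 ≤ A'.toReal := ENNReal.toReal_nonneg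
    have hB0 : 0 ≤ B'.toReal := ENNReal.toReal_nonneg
    nlinarith [h1, abs_nonneg (σh x - σ0 x), abs_nonneg (μh x - μ0 x),
      mul_nonneg hA0 (abs_nonneg (μh x - μ0 x)), mul_nonneg hB0 (abs_nonneg (σh x - σ0 x))]
end
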